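/- arXiv:1806.00729 — 9 statements merged into one kernel-verified Lean document; each statement's English description precedes it below -/
import Mathlib

section
/- Let k > 1. If a standard transitive σ_n-orientation of a σ_n-k-partition of K_n is consistent with a bitonic ordering τ of the vertices, then the last element τ(n) (the unique local maximum) and the first element τ(1) (the unique local minimum) differ by n/2, i.e. τ(n) ≡ τ(1) + n/2 (mod n). -/
/-- A σ_n-k-partition of K_n: a symmetric labeling of the edges of the complete
graph on `ZMod n` with labels in `ZMod k` such that shifting both endpoints by 1
increases the label by 1 (mod k). -/
def IsSigmaPartition (n k : ℕ) (ℓ : ZMod n → ZMod n → ZMod k) : Prop :=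
  (∀ a b : ZMod n, ℓ a b = ℓ b a) ∧
  (∀ a b : ZMod n, a ≠ b → ℓ (a + 1) (b + 1) = ℓ a b + 1)

/-- `a` precedes `b` in the ordering `τ` of the vertices. -/
def Precedes {n : ℕ} (τ : Fin n ≃ ZMod n) (a b : ZMod n) : Prop :=
  τ.symm a < τ.symm b

/-- σ_n reverses the orientation of the edge {a,b} in the transitive orientation
consistent with `τ`: `a` precedes `b`, but `b+1` precedes `a+1`. -/
def Reverses {n : ℕ} (τ : Fin n ≃ ZMod n) (a b : ZMod n) : Prop :=
  Precedes τ a b ∧ Precedes τ (b + 1) (a + 1)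

/-- The transitive orientation consistent with `τ` is a transitive σ_n-orientation
of the σ_n-k-partition `ℓ`: every edge whose orientation σ_n reverses has
label k-1 (i.e. -1 in `ZMod k`). -/
def IsTransSigmaOrientation (n k : ℕ) (ℓ : ZMod n → ZMod n → ZMod k)
    (τ : Fin n ≃ ZMod n) : Prop :=
  ∀ a b : ZMod n, a ≠ b → Reverses τ a b → ℓ a b = -1

/-- `j` is a local minimum of the ordering `τ`: it precedes both its cyclic
neighbours. -/
def CycLocalMin {n : ℕ} (τ : Fin n ≃ ZMod n) (j : ZMod n) : Prop :=
  Precedes τ j (j - 1) ∧ Precedes τ j (j + 1)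

/-- `j` is a local maximum of the ordering `τ`: both its cyclic neighbours
precede it. -/
def CycLocalMax {n : ℕ} (τ : Fin n ≃ ZMod n) (j : ZMod n) : Prop :=
  Precedes τ (j - 1) j ∧ Precedes τ (j + 1) j

/-- An ordering is bitonic if it has a unique local minimum and a unique local
maximum. -/
def Bitonic {n : ℕ} (τ : Fin n ≃ ZMod n) : Prop :=
  (∃! j, CycLocalMin τ j) ∧ (∃! j, CycLocalMax τ j)

/-- The defining sequence halts at index `i`: `a_{i+1} = a_i`. -/
def Halts (n k : ℕ) (ℓ : ZMod n → ZMod n → ZMod k) (i : ℕ) : Prop :=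
  ℓ 0 ((i + 1 : ℕ) : ZMod n) = ℓ 0 ((i : ℕ) : ZMod n)

/-- The defining sequence steps at index `i`: `a_{i+1} ≡ a_i + 1 (mod k)`. -/
def Steps (n k : ℕ) (ℓ : ZMod n → ZMod n → ZMod k) (i : ℕ) : Prop :=
  ℓ 0 ((i + 1 : ℕ) : ZMod n) = ℓ 0 ((i : ℕ) : ZMod n) + 1

/-- The defining sequence jumps at index `i`: it neither halts nor steps there. -/
def Jumps (n k : ℕ) (ℓ : ZMod n → ZMod n → ZMod k) (i : ℕ) : Prop :=
  ¬ Halts n k ℓ i ∧ ¬ Steps n k ℓ i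

def InvP (n : ℕ) (τ : Fin n ≃ ZMod n) (m : ZMod n) (i x : ℕ) : Prop :=
  x ≤ i ∧ ∀ v : ZMod n, ((τ.symm v : ℕ) ≤ i ↔ ∃ t : ℕ, t ≤ i ∧ v = m - (x : ZMod n) + (t : ZMod n))

lemma castinj {n : ℕ} (hn : 0 < n) {a b : ℕ} (ha : a < n) (hb : b < n)
    (h : (a : ZMod n) = (b : ZMod n)) : a = b := by
  haveI : NeZero n := ⟨by omega⟩
  have := congrArg ZMod.val h
  rwa [ZMod.val_cast_of_lt ha, ZMod.val_cast_of_lt hb] at this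

lemma step_lemma {n : ℕ} (hn2 : 2 ≤ n) (τ : Fin n ≃ ZMod n)
    (hB1 : ∃! j, CycLocalMin τ j) (m : ZMod n) (hm : (τ.symm m : ℕ) = 0)
    (i x : ℕ) (hi : i + 1 < n) (h : InvP n τ m i x) :
    InvP n τ m (i+1) x ∨ InvP n τ m (i+1) (x+1) := by
  haveI : NeZero n := ⟨by omega⟩
  haveI : Fact (1 < n) := ⟨hn2⟩
  obtain ⟨hx, hS⟩ := h
  set v : ZMod n := τ ⟨i+1, hi⟩ with hv
  have hsv : (τ.symm v : ℕ) = i + 1 := by rw [hv, Equiv.symm_apply_apply]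
  have hvnot : ¬ ∃ t : ℕ, t ≤ i ∧ v = m - (x : ZMod n) + (t : ZMod n) :=
    fun hex => by have := (hS v).mpr hex; omega
  have key : ∀ w : ZMod n, (τ.symm w : ℕ) = i + 1 → w = v := by
    intro w hw
    have : τ.symm w = τ.symm v := Fin.ext (by rw [hsv, hw])
    exact τ.symm.injective this
  by_cases hA : v = m - (x : ZMod n) - 1
  · right
    refine ⟨by omega, fun w => ⟨?_, ?_⟩⟩
    · intro hw
      by_cases hwi : (τ.symm w : ℕ) ≤ i
      · obtain ⟨t, ht, hwt⟩ := (hS w).mp hwi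
        exact ⟨t+1, by omega, by rw [hwt]; push_cast; ring⟩
      · have hwv : w = v := key w (by omega)
        exact ⟨0, by omega, by rw [hwv, hA]; push_cast; ring⟩
    · rintro ⟨t, ht, rfl⟩
      cases t with
      | zero =>
        have e : m - ((x+1 : ℕ) : ZMod n) + ((0:ℕ) : ZMod n) = v := by
          rw [hA]; push_cast; ring
        rw [e]; omega
      | succ s =>
        have e : m - ((x+1 : ℕ) : ZMod n) + ((s+1 : ℕ) : ZMod n)
            = m - (x : ZMod n) + (s : ZMod n) := by push_cast; ring
        rw [e]
        have := (hS _).mpr ⟨s, by omega, rfl⟩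
        omega
  · by_cases hBc : v = m - (x : ZMod n) + ((i+1 : ℕ) : ZMod n)
    · left
      refine ⟨by omega, fun w => ⟨?_, ?_⟩⟩
      · intro hw
        by_cases hwi : (τ.symm w : ℕ) ≤ i
        · obtain ⟨t, ht, hwt⟩ := (hS w).mp hwi
          exact ⟨t, by omega, hwt⟩
        · exact ⟨i+1, le_refl _, by rw [key w (by omega), hBc]⟩
      · rintro ⟨t, ht, rfl⟩
        by_cases hti : t ≤ i
        · have := (hS _).mpr ⟨t, hti, rfl⟩; omega
        · have hti' : t = i + 1 := by omega
          subst hti'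
          rw [← hBc]; omega
    · exfalso
      have hone : (1 : ZMod n) ≠ 0 := one_ne_zero
      have hm1 : ¬ (τ.symm (v - 1) : ℕ) ≤ i := by
        intro hle
        obtain ⟨t, ht, htv⟩ := (hS _).mp hle
        have hv' : v = m - (x : ZMod n) + ((t+1 : ℕ) : ZMod n) := by
          have e : v - 1 + 1 = v := by ring
          rw [← e, htv]; push_cast; ring
        rcases Nat.lt_or_ge t i with hlt | hge
        · exact hvnot ⟨t+1, by omega, hv'⟩
        · have : t = i := by omega
          subst this; exact hBc hv'
      have hp1 : ¬ (τ.symm (v + 1) : ℕ) ≤ i := by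
        intro hle
        obtain ⟨t, ht, htv⟩ := (hS _).mp hle
        cases t with
        | zero =>
          apply hA
          have e : v + 1 - 1 = v := by ring
          rw [← e, htv]; push_cast; ring
        | succ s =>
          apply hvnot
          refine ⟨s, by omega, ?_⟩
          have e : v + 1 - 1 = v := by ring
          rw [← e, htv]; push_cast; ring
      have hvm1 : v - 1 ≠ v := fun hcon => hone (sub_eq_self.mp hcon)
      have hvp1 : v + 1 ≠ v := fun hcon => hone (by
        have h' := congrArg (· - v) hcon
        simpa using h')
      have hminv : CycLocalMin τ v := by
        constructor
        · show τ.symm v < τ.symm (v - 1)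
          have hne : (τ.symm (v-1) : ℕ) ≠ i+1 := fun hcon => hvm1 (key _ hcon)
          exact Fin.lt_def.mpr (by omega)
        · show τ.symm v < τ.symm (v + 1)
          have hne : (τ.symm (v+1) : ℕ) ≠ i+1 := fun hcon => hvp1 (key _ hcon)
          exact Fin.lt_def.mpr (by omega)
      have hminm : CycLocalMin τ m := by
        constructor
        · show τ.symm m < τ.symm (m - 1)
          have hne : (τ.symm (m-1) : ℕ) ≠ 0 := by
            intro hcon
            have : τ.symm (m-1) = τ.symm m := Fin.ext (by rw [hm, hcon])
            exact hone (sub_eq_self.mp (τ.symm.injective this))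
          exact Fin.lt_def.mpr (by omega)
        · show τ.symm m < τ.symm (m + 1)
          have hne : (τ.symm (m+1) : ℕ) ≠ 0 := by
            intro hcon
            have : τ.symm (m+1) = τ.symm m := Fin.ext (by rw [hm, hcon])
            have h' := congrArg (· - m) (τ.symm.injective this)
            exact hone (by simpa using h')
          exact Fin.lt_def.mpr (by omega)
      obtain ⟨j, _, hjun⟩ := hB1
      have hvm : v = m := (hjun v hminv).trans (hjun m hminm).symm
      rw [hvm] at hsv
      omega

open Classical in
noncomputable def seqF (n : ℕ) (τ : Fin n ≃ ZMod n) (m : ZMod n) : ℕ → ℕ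
  | 0 => 0
  | j+1 => if InvP n τ m (j+1) (seqF n τ m j) then seqF n τ m j else seqF n τ m j + 1

lemma seqF_step (n : ℕ) (τ : Fin n ≃ ZMod n) (m : ZMod n) (j : ℕ) :
    seqF n τ m (j+1) = seqF n τ m j ∨ seqF n τ m (j+1) = seqF n τ m j + 1 := by
  by_cases hc : InvP n τ m (j+1) (seqF n τ m j)
  · left; simp [seqF, hc]
  · right; simp [seqF, hc]


/-- For a standard transitive σ_n-orientation of a σ_n-k-partition,
consistent with the bitonic ordering τ, the last element of τ (the unique local
maximum) and the first element (the unique local minimum) differ by n/2. -/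
theorem stmt_6 (n k : ℕ) (hk : 1 < k) (hn : 0 < n)
    (ℓ : ZMod n → ZMod n → ZMod k) (hP : IsSigmaPartition n k ℓ)
    (τ : Fin n ≃ ZMod n)
    (hT : IsTransSigmaOrientation n k ℓ τ) (hB : Bitonic τ) :
    τ ⟨n - 1, Nat.sub_lt hn one_pos⟩ = τ ⟨0, hn⟩ + ((n / 2 : ℕ) : ZMod n) := by
  classical
  rcases Nat.lt_or_ge n 2 with hn1 | hn2
  · have he : n = 1 := by omega
    subst he
    exact Subsingleton.elim _ _
  haveI : NeZero n := ⟨by omega⟩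
  haveI : Fact (1 < n) := ⟨hn2⟩
  haveI : Fact (1 < k) := ⟨hk⟩
  obtain ⟨m, hmdef⟩ : ∃ m, τ ⟨0, hn⟩ = m := ⟨_, rfl⟩
  rw [hmdef]
  have hm : (τ.symm m : ℕ) = 0 := by rw [← hmdef, Equiv.symm_apply_apply]
  -- shift lemma
  have hshift : ∀ (a b : ZMod n) (t : ℕ), a ≠ b → ℓ (a + t) (b + t) = ℓ a b + t := by
    intro a b t hab
    induction t with
    | zero => simp
    | succ s ih =>
      have hne : a + (s : ZMod n) ≠ b + s := fun h => hab (by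
        have := congrArg (· - (s : ZMod n)) h
        simpa using this)
      have e1 : ((s+1 : ℕ) : ZMod n) = (s : ZMod n) + 1 := by push_cast; ring
      rw [e1, show a + ((s : ZMod n) + 1) = (a + s) + 1 by ring,
        show b + ((s : ZMod n) + 1) = (b + s) + 1 by ring, hP.2 _ _ hne, ih]
      push_cast; ring
  -- k divides n
  have h01 : (0 : ZMod n) ≠ 1 := fun h => one_ne_zero (α := ZMod n) h.symm
  have hn0k : ((n : ℕ) : ZMod k) = 0 := by
    have h2 := hshift 0 1 n h01
    rw [ZMod.natCast_self] at h2
    simp only [add_zero, zero_add] at h2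
    exact (left_eq_add.mp h2)
  -- the sequence of left-move counts
  set f : ℕ → ℕ := seqF n τ m with hfdef
  have hf0 : f 0 = 0 := rfl
  have hfInv : ∀ i, i ≤ n - 2 → InvP n τ m i (f i) := by
    intro i
    induction i with
    | zero =>
      intro _
      refine ⟨le_refl 0, fun v => ⟨?_, ?_⟩⟩
      · intro hv
        have hv0 : τ.symm v = τ.symm m := Fin.ext (by omega)
        have : v = m := τ.symm.injective hv0
        exact ⟨0, le_refl 0, by rw [this, hf0]; push_cast; ring⟩
      · rintro ⟨t, ht, rfl⟩
        have ht0 : t = 0 := by omega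
        subst ht0
        have e : m - ((f 0 : ℕ) : ZMod n) + ((0:ℕ) : ZMod n) = m := by
          rw [hf0]; push_cast; ring
        rw [e]; omega
    | succ j ih =>
      intro hj
      have hIj := ih (by omega)
      have hd := step_lemma hn2 τ hB.1 m hm j (f j) (by omega) hIj
      rcases hd with h1 | h2
      · have : f (j+1) = f j := by simp [hfdef, seqF, h1]; exact h1
        rw [this]; exact h1
      · by_cases hc : InvP n τ m (j+1) (f j)
        · have : f (j+1) = f j := by simp [hfdef, seqF, hc]; exact hc
          rw [this]; exact hc
        · have : f (j+1) = f j + 1 := by simp [hfdef, seqF, hc]; exact hc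
          rw [this]; exact h2
  -- the reversed edges
  have hrev : ∀ i, i ≤ n - 2 →
      ℓ (m - ((f i : ℕ) : ZMod n) + (i : ZMod n)) (m - ((f i : ℕ) : ZMod n) - 1) = -1 := by
    intro i hi
    obtain ⟨hx, hS⟩ := hfInv i hi
    have hab : (m - ((f i : ℕ) : ZMod n) + (i : ZMod n)) ≠ (m - ((f i : ℕ) : ZMod n) - 1) := by
      intro hcon
      have h' : ((i+1 : ℕ) : ZMod n) = ((0:ℕ) : ZMod n) := by
        push_cast; linear_combination hcon
      have := castinj (by omega) (show i+1 < n by omega) (show 0 < n by omega) h'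
      omega
    have hpa : (τ.symm (m - ((f i : ℕ) : ZMod n) + (i : ZMod n)) : ℕ) ≤ i :=
      (hS _).mpr ⟨i, le_refl i, rfl⟩
    have hpb : ¬ (τ.symm (m - ((f i : ℕ) : ZMod n) - 1) : ℕ) ≤ i := by
      intro hcon
      obtain ⟨t, ht, htb⟩ := (hS _).mp hcon
      have h' : ((t+1 : ℕ) : ZMod n) = ((0:ℕ) : ZMod n) := by
        push_cast; linear_combination -htb
      have := castinj (by omega) (show t+1 < n by omega) (show 0 < n by omega) h'
      omega
    have ha1 : (τ.symm ((m - ((f i : ℕ) : ZMod n) - 1) + 1) : ℕ) ≤ i :=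
      (hS _).mpr ⟨0, by omega, by push_cast; ring⟩
    have hb1 : ¬ (τ.symm ((m - ((f i : ℕ) : ZMod n) + (i : ZMod n)) + 1) : ℕ) ≤ i := by
      intro hcon
      obtain ⟨t, ht, hta⟩ := (hS _).mp hcon
      have h' : ((i+1 : ℕ) : ZMod n) = ((t : ℕ) : ZMod n) := by
        push_cast; linear_combination hta
      have := castinj (by omega) (show i+1 < n by omega) (show t < n by omega) h'
      omega
    exact hT _ _ hab ⟨Fin.lt_def.mpr (by omega), Fin.lt_def.mpr (by omega)⟩
  have hrev' : ∀ i, i ≤ n - 2 →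
      ℓ (m - ((f i : ℕ) : ZMod n) - 1) (m - ((f i : ℕ) : ZMod n) + (i : ZMod n)) = -1 :=
    fun i hi => (hP.1 _ _).trans (hrev i hi)
  -- the key congruence
  have hstar : ∀ i, i ≤ n - 2 →
      ((f i : ℕ) : ZMod k) = ((f (n-2-i) : ℕ) : ZMod k) + ((i+1 : ℕ) : ZMod k) := by
    intro i hi
    have hi' : n - 2 - i ≤ n - 2 := by omega
    have hfli : f i ≤ i := (hfInv i hi).1
    have hfli' : f (n-2-i) ≤ n - 2 - i := (hfInv _ hi').1
    have hle : f i ≤ f (n-2-i) + i + 1 + n := by omega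
    have h1 : ((f (n-2-i) + i + 1 + n - f i : ℕ) : ZMod n)
        = ((f (n-2-i) : ℕ) : ZMod n) + (i : ZMod n) + 1 + ((n : ℕ) : ZMod n) - ((f i : ℕ) : ZMod n) := by
      rw [Nat.cast_sub hle]; push_cast; ring
    have h2 : ((n-2-i : ℕ) : ZMod n) = -2 - (i : ZMod n) := by
      have hh : ((n-2-i : ℕ) : ZMod n) + ((i + 2 : ℕ) : ZMod n) = ((n : ℕ) : ZMod n) := by
        rw [← Nat.cast_add]; congr 1; omega
      rw [ZMod.natCast_self] at hh
      push_cast at hh ⊢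
      linear_combination hh
    have hnn : ((n : ℕ) : ZMod n) = 0 := ZMod.natCast_self n
    have hab' : (m - ((f (n-2-i) : ℕ) : ZMod n) + ((n-2-i : ℕ) : ZMod n))
        ≠ (m - ((f (n-2-i) : ℕ) : ZMod n) - 1) := by
      intro hcon
      have h' : ((n-2-i+1 : ℕ) : ZMod n) = ((0:ℕ) : ZMod n) := by
        push_cast; linear_combination hcon
      have := castinj (by omega) (show n-2-i+1 < n by omega) (show 0 < n by omega) h'
      omega
    have hsh := hshift _ _ (f (n-2-i) + i + 1 + n - f i) hab'
    have e1 : (m - ((f (n-2-i) : ℕ) : ZMod n) + ((n-2-i : ℕ) : ZMod n))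
        + ((f (n-2-i) + i + 1 + n - f i : ℕ) : ZMod n)
        = m - ((f i : ℕ) : ZMod n) - 1 := by
      linear_combination h1 + h2 + hnn
    have e2 : (m - ((f (n-2-i) : ℕ) : ZMod n) - 1)
        + ((f (n-2-i) + i + 1 + n - f i : ℕ) : ZMod n)
        = m - ((f i : ℕ) : ZMod n) + (i : ZMod n) := by
      linear_combination h1 + hnn
    rw [e1, e2, hrev' i hi, hrev (n-2-i) hi'] at hsh
    have ht0 : ((f (n-2-i) + i + 1 + n - f i : ℕ) : ZMod k) = 0 := (left_eq_add.mp hsh)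
    rw [Nat.cast_sub hle] at ht0
    push_cast at ht0 ⊢
    linear_combination - ht0 + hn0k
  -- the local balance equation
  have hE : ∀ i, 1 ≤ i → i ≤ n - 2 → f i + f (n-1-i) = f (i-1) + f (n-2-i) + 1 := by
    intro i h1 h2
    have hs1 := hstar i h2
    have hs2 := hstar (i-1) (by omega)
    rw [show n - 2 - (i-1) = n - 1 - i by omega, show i - 1 + 1 = i by omega] at hs2
    have hd1 := seqF_step n τ m (i-1)
    rw [show i - 1 + 1 = i by omega, ← hfdef] at hd1
    have hd2 := seqF_step n τ m (n-2-i)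
    rw [show n - 2 - i + 1 = n - 1 - i by omega, ← hfdef] at hd2
    rcases hd1 with hA | hA <;> rcases hd2 with hBB | hBB
    · exfalso
      rw [hA] at hs1
      rw [hBB] at hs2
      have : (1 : ZMod k) = 0 := by
        push_cast at hs1 hs2
        linear_combination hs2 - hs1
      exact one_ne_zero this
    · omega
    · omega
    · exfalso
      rw [hA] at hs1
      rw [hBB] at hs2
      have : (1 : ZMod k) = 0 := by
        push_cast at hs1 hs2
        linear_combination hs1 - hs2
      exact one_ne_zero this
  -- telescoping
  have hsum : ∀ j, j ≤ n - 2 → f j + f (n-2) = f (n-2-j) + j := by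
    intro j
    induction j with
    | zero => intro _; rw [hf0, Nat.sub_zero]; omega
    | succ p ih =>
      intro hp
      have h1 := ih (by omega)
      have h2 := hE (p+1) (by omega) hp
      rw [show n - 1 - (p+1) = n - 2 - p by omega, show p + 1 - 1 = p from rfl] at h2
      omega
  have h2x : 2 * f (n-2) = n - 2 := by
    have := hsum (n-2) le_rfl
    rw [Nat.sub_self, hf0] at this
    omega
  -- conclusion
  obtain ⟨_, hS⟩ := hfInv (n-2) le_rfl
  have hMn : (τ.symm (m - ((f (n-2) : ℕ) : ZMod n) - 1) : ℕ) = n - 1 := by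
    have hnot : ¬ (τ.symm (m - ((f (n-2) : ℕ) : ZMod n) - 1) : ℕ) ≤ n - 2 := by
      intro hcon
      obtain ⟨t, ht, hteq⟩ := (hS _).mp hcon
      have h' : ((t+1 : ℕ) : ZMod n) = ((0:ℕ) : ZMod n) := by
        push_cast; linear_combination -hteq
      have := castinj (by omega) (show t+1 < n by omega) (show 0 < n by omega) h'
      omega
    have hlt := (τ.symm (m - ((f (n-2) : ℕ) : ZMod n) - 1)).isLt
    omega
  have hMeq : τ ⟨n-1, Nat.sub_lt hn one_pos⟩ = m - ((f (n-2) : ℕ) : ZMod n) - 1 := by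
    have h' : τ.symm (m - ((f (n-2) : ℕ) : ZMod n) - 1) = ⟨n-1, Nat.sub_lt hn one_pos⟩ :=
      Fin.ext (by rw [hMn])
    have := congrArg τ h'
    rw [Equiv.apply_symm_apply] at this
    exact this.symm
  rw [hMeq]
  have hhalf : n / 2 = f (n-2) + 1 := by omega
  rw [hhalf]
  have hkey : (((f (n-2) + 1) + (f (n-2) + 1) : ℕ) : ZMod n) = ((n : ℕ) : ZMod n) := by
    congr 1; omega
  rw [ZMod.natCast_self] at hkey
  push_cast at hkey ⊢
  linear_combination - hkey
end

section
/- Let k > 1 and n = 2k. Then every transitive σ_n-orientation of a σ_n-k-partition of K_{2k} is standard, i.e., it is consistent with a bitonic ordering of the vertices. -/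
/-- For n = 2k, every transitive σ_n-orientation of a
σ_n-k-partition of K_{2k} is standard, i.e. its ordering is bitonic. -/
theorem stmt_8 (k : ℕ) (hk : 1 < k)
    (ℓ : ZMod (2 * k) → ZMod (2 * k) → ZMod k)
    (hP : IsSigmaPartition (2 * k) k ℓ)
    (τ : Fin (2 * k) ≃ ZMod (2 * k))
    (hT : IsTransSigmaOrientation (2 * k) k ℓ τ) :
    Bitonic τ := by
  haveI : Fact (1 < 2 * k) := ⟨by omega⟩
  haveI : NeZero k := ⟨by omega⟩
  have hone : (1 : ZMod (2 * k)) ≠ 0 := one_ne_zero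
  have hsub : ∀ v : ZMod (2 * k), v - 1 ≠ v := by
    intro v h; exact hone (sub_eq_self.mp h)
  have hadd : ∀ v : ZMod (2 * k), v + 1 ≠ v := by
    intro v h; exact hone (by simpa using h)
  set F : ZMod (2 * k) → ZMod k := fun v => ℓ (v - 1) v with hF
  have hstep : ∀ v, F (v + 1) = F v + 1 := by
    intro v
    have h := hP.2 (v - 1) v (hsub v)
    simpa [hF, sub_add_cancel] using h
  have hiter : ∀ (v : ZMod (2 * k)) (m : ℕ), F (v + m) = F v + m := by
    intro v m
    induction m with
    | zero => simp
    | succ m ih =>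
      have : (((m + 1 : ℕ)) : ZMod (2 * k)) = (m : ZMod (2 * k)) + 1 := by push_cast; ring
      rw [this, ← add_assoc, hstep, ih]
      push_cast; ring
  have hmin : ∀ u, CycLocalMin τ u → F u = -1 := by
    intro u hu
    have h := hT u (u - 1) (Ne.symm (hsub u)) ⟨hu.1, by simpa [sub_add_cancel] using hu.2⟩
    rw [show F u = ℓ (u - 1) u from rfl, hP.1]; exact h
  have hmax : ∀ u, CycLocalMax τ u → F u = -1 := by
    intro u hu
    exact hT (u - 1) u (hsub u) ⟨hu.1, by simpa [sub_add_cancel] using hu.2⟩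
  have htwo : ∀ u w : ZMod (2 * k), F u = -1 → F w = -1 →
      w = u ∨ w = u + (k : ZMod (2 * k)) := by
    intro u w hu hw
    have hval : w = u + (((w - u).val : ℕ) : ZMod (2 * k)) := by
      rw [ZMod.natCast_val, ZMod.cast_id]; ring
    have h1 := hiter u (w - u).val
    rw [← hval, hu, hw] at h1
    have h2 : (((w - u).val : ℕ) : ZMod k) = 0 := by linear_combination -h1
    have h3 : k ∣ (w - u).val := (ZMod.natCast_eq_zero_iff _ _).mp h2
    have h4 : (w - u).val < 2 * k := ZMod.val_lt _
    obtain ⟨c, hc⟩ := h3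
    have hcb : c < 2 := by nlinarith
    interval_cases c
    · left; rw [hval, hc]; simp
    · right; rw [hval, hc]; simp
  set i0 : Fin (2 * k) := ⟨0, by omega⟩ with hi0
  set i1 : Fin (2 * k) := ⟨2 * k - 1, by omega⟩ with hi1
  have hmin0 : ∀ b, b ≠ τ i0 → Precedes τ (τ i0) b := by
    intro b hb
    have h : τ.symm b ≠ i0 := fun h => hb (by rw [← h, Equiv.apply_symm_apply])
    have h2 : (τ.symm b).val ≠ 0 := fun hv => h (Fin.ext (by simp [hi0, hv]))
    show τ.symm (τ i0) < τ.symm b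
    rw [Equiv.symm_apply_apply, Fin.lt_def]
    simp only [hi0]
    omega
  have hmax0 : ∀ b, b ≠ τ i1 → Precedes τ b (τ i1) := by
    intro b hb
    have h : τ.symm b ≠ i1 := fun h => hb (by rw [← h, Equiv.apply_symm_apply])
    have h2 : (τ.symm b).val ≠ 2 * k - 1 := fun hv => h (Fin.ext (by simp [hi1, hv]))
    have h3 : (τ.symm b).val < 2 * k := (τ.symm b).isLt
    show τ.symm b < τ.symm (τ i1)
    rw [Equiv.symm_apply_apply, Fin.lt_def]
    simp only [hi1]
    omega
  have hminA : CycLocalMin τ (τ i0) := ⟨hmin0 _ (hsub _), hmin0 _ (hadd _)⟩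
  have hmaxA : CycLocalMax τ (τ i1) := ⟨hmax0 _ (hsub _), hmax0 _ (hadd _)⟩
  have hnotboth : ∀ u, CycLocalMin τ u → CycLocalMax τ u → False := by
    intro u h1 h2
    exact absurd h2.1 (lt_asymm h1.1)
  have hne01 : τ i1 ≠ τ i0 := by
    intro h
    have := τ.injective h
    rw [hi0, hi1] at this
    have := Fin.mk.inj_iff.mp this
    omega
  have hkey : τ i1 = τ i0 + (k : ZMod (2 * k)) := by
    rcases htwo (τ i0) (τ i1) (hmin _ hminA) (hmax _ hmaxA) with h | h
    · exact absurd h hne01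
    · exact h
  have hkey2 : τ i0 = τ i1 + (k : ZMod (2 * k)) := by
    rw [hkey, add_assoc]
    have : (k : ZMod (2 * k)) + (k : ZMod (2 * k)) = 0 := by
      have : ((2 * k : ℕ) : ZMod (2 * k)) = 0 := ZMod.natCast_self _
      push_cast at this
      linear_combination this
    rw [this, add_zero]
  constructor
  · refine ⟨τ i0, hminA, ?_⟩
    intro u hu
    rcases htwo (τ i0) u (hmin _ hminA) (hmin _ hu) with h | h
    · exact h
    · exact absurd (hnotboth u hu (h ▸ hkey ▸ hmaxA)) (fun x => x)
  · refine ⟨τ i1, hmaxA, ?_⟩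
    intro u hu
    rcases htwo (τ i1) u (hmax _ hmaxA) (hmax _ hu) with h | h
    · exact h
    · exact absurd (hnotboth u (h ▸ hkey2 ▸ hminA) hu) (fun x => x)
end

section
/- Let n ≥ 4 be even and let F_0 be the Hamiltonian path of K_n with vertex sequence 0, 1, n−1, 2, n−2, …, i, n−i, i+1, …, n/2+1, n/2. Then the graphs F_d := σ_n^d(F_0) for d = 0, 1, …, n/2 − 1 partition the edge set of K_n, and there exists a transitive orientation of K_n such that every vertex is a source or a sink of each oriented path F_d (each path is alternatingly oriented) and such that σ_n maps the oriented path F_d onto the oriented path F_{d+1} for every 0 ≤ d ≤ n/2 − 2. -/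
/-- The vertex sequence 0, 1, n-1, 2, n-2, ... of the Hamiltonian path F_0:
the j-th vertex is (j+1)/2 if j is odd and -(j/2) = n - j/2 if j is even. -/
def pSeq (n : ℕ) (j : ℕ) : ZMod n :=
  if j % 2 = 1 then (((j + 1) / 2 : ℕ) : ZMod n) else -(((j / 2 : ℕ) : ZMod n))

lemma pSeq_even (n m : ℕ) : pSeq n (2*m) = -((m:ℕ):ZMod n) := by
  unfold pSeq
  rw [if_neg (by omega)]
  have : 2*m/2 = m := by omega
  rw [this]

lemma pSeq_odd (n m : ℕ) : pSeq n (2*m+1) = (((m+1 :ℕ)):ZMod n) := by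
  unfold pSeq
  rw [if_pos (by omega)]
  have : (2*m+1+1)/2 = m+1 := by omega
  rw [this]

lemma mod_cases {n x r : ℕ} (hx : x < 2*n) (h : x % n = r) : x = r ∨ x = n + r := by
  rcases Nat.lt_or_ge x n with h1 | h1
  · left; rwa [Nat.mod_eq_of_lt h1] at h
  · right
    have h2 : x - n < n := by omega
    rw [Nat.mod_eq_sub_mod h1, Nat.mod_eq_of_lt h2] at h
    omega

lemma cast_eq_neg {n : ℕ} (x y : ℕ) (h : x + y = n ∨ x + y = 0) :
    (x : ZMod n) = -(y : ZMod n) := by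
  have h0 : ((x + y : ℕ) : ZMod n) = 0 := by
    rcases h with h | h <;> rw [h] <;> simp
  push_cast at h0
  linear_combination h0

def rk (n : ℕ) [NeZero n] (v : ZMod n) : ℕ :=
  if v.val < n/2 then 2 * v.val else 2*(n - v.val) - 1

lemma rk_lt {n : ℕ} [NeZero n] (k : ℕ) (hn : n = 2*k) (hk : 2 ≤ k) (v : ZMod n) :
    rk n v < n := by
  have := ZMod.val_lt v
  unfold rk; split <;> omega

lemma rk_inj {n : ℕ} [NeZero n] (k : ℕ) (hn : n = 2*k) :
    Function.Injective (rk n) := by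
  intro u v huv
  have h1 := ZMod.val_lt u
  have h2 := ZMod.val_lt v
  have : u.val = v.val := by
    unfold rk at huv; split at huv <;> split at huv <;> omega
  exact ZMod.val_injective n this

lemma rk_edge {n : ℕ} [NeZero n] (k : ℕ) (hn : n = 2*k) (hk : 2 ≤ k)
    (d q c : ℕ) (hd : d < k) (hq : q < k) (hc1 : 1 ≤ c) (hc : c ≤ k)
    (hqc : q = c - 1 ∨ (q = c ∧ c < k)) :
    rk n (((d:ℕ):ZMod n) - ((q:ℕ):ZMod n)) < rk n (((d + c : ℕ)):ZMod n) := by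
  have hval1 : (((d + c : ℕ)) : ZMod n).val = d + c :=
    ZMod.val_natCast_of_lt (by omega)
  have hval2 : (((d:ℕ):ZMod n) - ((q:ℕ):ZMod n)).val
      = if q ≤ d then d - q else n + d - q := by
    split
    · next hqd =>
      rw [← Nat.cast_sub hqd, ZMod.val_natCast_of_lt (by omega)]
    · next hqd =>
      have he : ((d:ℕ):ZMod n) - ((q:ℕ):ZMod n) = ((n + d - q : ℕ) : ZMod n) := by
        rw [Nat.cast_sub (by omega), Nat.cast_add, ZMod.natCast_self]
        ring
      rw [he, ZMod.val_natCast_of_lt (by omega)]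
  unfold rk
  rw [hval1, hval2]
  split <;> split <;> split <;> omega


/-- For even n ≥ 4 the shifts F_d = σ_n^d(F_0) (d < n/2) of the
Hamiltonian path F_0 : 0, 1, n-1, 2, n-2, ... partition the edge set of K_n,
and there is a transitive orientation of K_n under which each path F_d is
alternatingly oriented (every vertex a source or sink of each path) and σ_n
maps the oriented path F_d onto the oriented path F_{d+1} for d ≤ n/2 - 2. -/
theorem stmt_9 (n : ℕ) (hn : 4 ≤ n) (hev : Even n) :
    (∀ a b : ZMod n, a ≠ b →
      ∃! d : ℕ, d < n / 2 ∧ ∃ j : ℕ, j < n - 1 ∧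
        ((a = pSeq n j + (d : ZMod n) ∧ b = pSeq n (j + 1) + (d : ZMod n)) ∨
         (b = pSeq n j + (d : ZMod n) ∧ a = pSeq n (j + 1) + (d : ZMod n)))) ∧
    ∃ τ : Fin n ≃ ZMod n,
      (∀ d : ℕ, d < n / 2 → ∀ j : ℕ, 1 ≤ j → j ≤ n - 2 →
        (Precedes τ (pSeq n (j - 1) + (d : ZMod n)) (pSeq n j + (d : ZMod n)) ↔
         Precedes τ (pSeq n (j + 1) + (d : ZMod n)) (pSeq n j + (d : ZMod n)))) ∧
      (∀ d : ℕ, d + 2 ≤ n / 2 → ∀ j : ℕ, j < n - 1 →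
        (Precedes τ (pSeq n j + (d : ZMod n)) (pSeq n (j + 1) + (d : ZMod n)) ↔
         Precedes τ (pSeq n j + (d : ZMod n) + 1)
           (pSeq n (j + 1) + (d : ZMod n) + 1))) := by
  obtain ⟨k, hk⟩ := hev
  have hnk : n = 2*k := by omega
  have hk2 : 2 ≤ k := by omega
  haveI : NeZero n := ⟨by omega⟩
  have hn2 : n / 2 = k := by omega
  have hcastval : ∀ s : ZMod n, ((s.val : ℕ) : ZMod n) = s := by
    intro s; simp [ZMod.natCast_val, ZMod.cast_id]
  refine ⟨?_, ?_⟩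
  ·
    intro a b hab
    have hsv : (a+b).val < n := ZMod.val_lt (a+b)
    obtain ⟨d, hd⟩ : ∃ d, d = (a+b).val / 2 := ⟨_, rfl⟩
    obtain ⟨cu, hcu⟩ : ∃ c, (a - ((d:ℕ):ZMod n)).val = c := ⟨_, rfl⟩
    obtain ⟨cv, hcv⟩ : ∃ c, (b - ((d:ℕ):ZMod n)).val = c := ⟨_, rfl⟩
    have hculn : cu < n := hcu ▸ ZMod.val_lt _
    have hcvln : cv < n := hcv ▸ ZMod.val_lt _
    have ha : a = ((cu : ℕ) : ZMod n) + ((d:ℕ):ZMod n) := by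
      rw [← hcu, hcastval]; ring
    have hb : b = ((cv : ℕ) : ZMod n) + ((d:ℕ):ZMod n) := by
      rw [← hcv, hcastval]; ring
    have hmod : (cu + cv) % n = (a+b).val % 2 := by
      have h1 : (a - ((d:ℕ):ZMod n)) + (b - ((d:ℕ):ZMod n))
          = (((a+b).val % 2 : ℕ) : ZMod n) := by
        have h2 : ((( (a+b).val : ℕ)) : ZMod n)
            = ((2*d + (a+b).val % 2 : ℕ) : ZMod n) := by congr 1; omega
        rw [hcastval] at h2
        push_cast at h2
        linear_combination h2
      have h3 := congrArg ZMod.val h1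
      rw [ZMod.val_add, hcu, hcv, ZMod.val_natCast_of_lt (by omega)] at h3
      exact h3
    refine ⟨d, ⟨⟨by omega, ?_⟩, ?_⟩⟩
    · -- existence of j
      rcases Nat.mod_two_eq_zero_or_one (a+b).val with he | he
      · -- sum of cu, cv ≡ 0 : odd path index
        rw [he] at hmod
        have hsum : cu + cv = 0 ∨ cu + cv = n := by
          rcases mod_cases (by omega) hmod with h | h
          · left; omega
          · right; omega
        have hne : cu ≠ cv := by
          intro h
          exact hab (by rw [ha, hb, h])
        have hsum0 : cu + cv = n := by
          rcases hsum with h | h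
          · exfalso; apply hne; omega
          · exact h
        have hcvk : cv ≠ k := by
          intro h; apply hne; omega
        by_cases hvk : cv < k
        · have hcv1 : 1 ≤ cv := by omega
          refine ⟨2*(cv - 1)+1, by omega, Or.inr ⟨?_, ?_⟩⟩
          · rw [pSeq_odd, hb]
            have : cv - 1 + 1 = cv := by omega
            rw [this]
          · rw [show 2*(cv-1)+1+1 = 2*(cv-1+1) by omega, pSeq_even, ha]
            have : (cu : ZMod n) = -(((cv-1+1 : ℕ)) : ZMod n) :=
              cast_eq_neg _ _ (by omega)
            rw [this]
        · have hcu1 : 1 ≤ cu ∧ cu < k := by omega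
          refine ⟨2*(cu - 1)+1, by omega, Or.inl ⟨?_, ?_⟩⟩
          · rw [pSeq_odd, ha]
            have : cu - 1 + 1 = cu := by omega
            rw [this]
          · rw [show 2*(cu-1)+1+1 = 2*(cu-1+1) by omega, pSeq_even, hb]
            have : (cv : ZMod n) = -(((cu-1+1 : ℕ)) : ZMod n) :=
              cast_eq_neg _ _ (by omega)
            rw [this]
      · -- sum of cu, cv ≡ 1 : even path index
        rw [he] at hmod
        have hsum : cu + cv = 1 ∨ cu + cv = n + 1 :=
          mod_cases (by omega) hmod
        by_cases hvk : 1 ≤ cv ∧ cv ≤ k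
        · refine ⟨2*(cv - 1), by omega, Or.inl ⟨?_, ?_⟩⟩
          · rw [pSeq_even, ha]
            have : (cu : ZMod n) = -(((cv-1 : ℕ)) : ZMod n) :=
              cast_eq_neg _ _ (by omega)
            rw [this]
          · rw [pSeq_odd, hb]
            have : cv - 1 + 1 = cv := by omega
            rw [this]
        · have huk : 1 ≤ cu ∧ cu ≤ k := by omega
          refine ⟨2*(cu - 1), by omega, Or.inr ⟨?_, ?_⟩⟩
          · rw [pSeq_even, hb]
            have : (cv : ZMod n) = -(((cu-1 : ℕ)) : ZMod n) :=
              cast_eq_neg _ _ (by omega)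
            rw [this]
          · rw [pSeq_odd, ha]
            have : cu - 1 + 1 = cu := by omega
            rw [this]
    · -- uniqueness
      rintro d' ⟨hd', j, hj, hcase⟩
      rw [hn2] at hd'
      have hsum : a + b = pSeq n j + pSeq n (j+1) + ((2*d' : ℕ) : ZMod n) := by
        rcases hcase with ⟨ha', hb'⟩ | ⟨hb', ha'⟩ <;>
          (rw [ha', hb']; push_cast; ring)
      rcases Nat.mod_two_eq_zero_or_one j with hje | hjo
      · obtain ⟨m, rfl⟩ : ∃ m, j = 2*m := ⟨j/2, by omega⟩
        rw [pSeq_even, pSeq_odd] at hsum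
        have h1 : a + b = ((2*d' + 1 : ℕ) : ZMod n) := by
          rw [hsum]; push_cast; ring
        have hval : (a+b).val = 2*d' + 1 := by
          rw [h1, ZMod.val_natCast_of_lt (by omega)]
        omega
      · obtain ⟨m, rfl⟩ : ∃ m, j = 2*m+1 := ⟨j/2, by omega⟩
        rw [pSeq_odd, show 2*m+1+1 = 2*(m+1) by omega, pSeq_even] at hsum
        have h1 : a + b = ((2*d' : ℕ) : ZMod n) := by
          rw [hsum]; push_cast; ring
        have hval : (a+b).val = 2*d' := by
          rw [h1, ZMod.val_natCast_of_lt (by omega)]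
        omega
  ·
    set g : ZMod n → Fin n := fun v => ⟨rk n v, rk_lt k hnk hk2 v⟩ with hg
    have hginj : Function.Injective g := by
      intro u v huv
      exact rk_inj k hnk (congrArg Fin.val huv)
    have hgbij : Function.Bijective g :=
      (Fintype.bijective_iff_injective_and_card g).mpr
        ⟨hginj, by simp [ZMod.card]⟩
    set τ := (Equiv.ofBijective g hgbij).symm with hτ
    have hPre : ∀ a b : ZMod n, Precedes τ a b ↔ rk n a < rk n b := by
      intro a b
      simp only [hτ, Precedes, Equiv.symm_symm, Equiv.ofBijective_apply, hg]
      exact Fin.mk_lt_mk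
    have hM : ∀ d : ℕ, d < k → ∀ j : ℕ, j < n - 1 →
        (j % 2 = 0 → Precedes τ (pSeq n j + (d : ZMod n)) (pSeq n (j+1) + (d : ZMod n))) ∧
        (j % 2 = 1 → Precedes τ (pSeq n (j+1) + (d : ZMod n)) (pSeq n j + (d : ZMod n))) := by
      intro d hd j hj
      constructor
      · intro hj2
        obtain ⟨m, rfl⟩ : ∃ m, j = 2*m := ⟨j/2, by omega⟩
        rw [pSeq_even, pSeq_odd, hPre]
        have e1 : -((m:ℕ):ZMod n) + (d:ZMod n) = ((d:ℕ):ZMod n) - ((m:ℕ):ZMod n) := by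
          ring
        have e2 : (((m+1:ℕ)):ZMod n) + (d:ZMod n) = ((d + (m+1) : ℕ) : ZMod n) := by
          push_cast; ring
        rw [e1, e2]
        exact rk_edge k hnk hk2 d m (m+1) hd (by omega) (by omega) (by omega) (by omega)
      · intro hj2
        obtain ⟨m, rfl⟩ : ∃ m, j = 2*m+1 := ⟨j/2, by omega⟩
        have e0 : 2*m+1+1 = 2*(m+1) := by omega
        rw [e0, pSeq_even, pSeq_odd, hPre]
        have e1 : -(((m+1:ℕ)):ZMod n) + (d:ZMod n)
            = ((d:ℕ):ZMod n) - (((m+1:ℕ)):ZMod n) := by ring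
        have e2 : (((m+1:ℕ)):ZMod n) + (d:ZMod n) = ((d + (m+1) : ℕ) : ZMod n) := by
          push_cast; ring
        rw [e1, e2]
        exact rk_edge k hnk hk2 d (m+1) (m+1) hd (by omega) (by omega) (by omega)
          (Or.inr ⟨rfl, by omega⟩)
    refine ⟨τ, ?_, ?_⟩
    · intro d hd j hj1 hj2
      rw [hn2] at hd
      have hL := hM d hd (j-1) (by omega)
      have hR := hM d hd j (by omega)
      have e : j - 1 + 1 = j := by omega
      rw [e] at hL
      rcases Nat.mod_two_eq_zero_or_one j with hje | hjo
      · have h1 := hL.2 (by omega)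
        have h2 := hR.1 (by omega)
        rw [hPre] at h1 h2 ⊢
        rw [hPre]
        omega
      · have h1 := hL.1 (by omega)
        have h2 := hR.2 (by omega)
        rw [hPre] at h1 h2 ⊢
        rw [hPre]
        omega
    · intro d hd j hj
      rw [hn2] at hd
      have e : ∀ x : ZMod n, x + (d:ZMod n) + 1 = x + (((d+1:ℕ)):ZMod n) := by
        intro x; push_cast; ring
      rw [e, e]
      have h1 := hM d (by omega) j hj
      have h2 := hM (d+1) (by omega) j hj
      rcases Nat.mod_two_eq_zero_or_one j with hje | hjo
      · have a1 := h1.1 hje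
        have a2 := h2.1 hje
        rw [hPre] at a1 a2 ⊢
        rw [hPre]
        omega
      · have a1 := h1.2 hjo
        have a2 := h2.2 hjo
        rw [hPre] at a1 a2 ⊢
        rw [hPre]
        omega
end

section
/- For every odd n ≥ 3, the transitive tournament T_n decomposes into (n−1)/2 isomorphically oriented Hamiltonian cycles: there exist a transitive orientation T of the complete graph on n vertices, an oriented Hamiltonian cycle C whose arcs all belong to T, and a permutation π of the vertex set such that the oriented cycles C, π(C), π^2(C), …, π^{(n−3)/2}(C) partition the arc set of T. -/
namespace Stmt10

instance (m : ℕ) : NeZero (2*m+1) := ⟨by omega⟩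

def Fn (m k : ℕ) : ℕ := if k < m then 2*k else if k < 2*m then 4*m - 2*k - 1 else 2*m

def Cn (m j : ℕ) : ℕ :=
  if j = 0 then 2*m else if j % 2 = 0 then j/2 else if j = 1 then 0 else 2*m - (j-1)/2

lemma Fn_lt_n {m k : ℕ} (_hk : k < 2*m+1) : Fn m k < 2*m+1 := by
  unfold Fn; split_ifs <;> first | contradiction | omega
lemma Fn_inj {m k l : ℕ} (hk : k < 2*m+1) (hl : l < 2*m+1) (h : Fn m k = Fn m l) : k = l := by
  unfold Fn at h; split_ifs at h <;> first | contradiction | omega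
lemma Cn_lt_n {m j : ℕ} (hj : j < 2*m+1) : Cn m j < 2*m+1 := by
  unfold Cn; split_ifs <;> first | contradiction | omega
lemma Cn_inj {m j l : ℕ} (hj : j < 2*m+1) (hl : l < 2*m+1) (h : Cn m j = Cn m l) : j = l := by
  unfold Cn at h; split_ifs at h <;> first | contradiction | omega

lemma Cn_zero (m : ℕ) : Cn m 0 = 2*m := by unfold Cn; simp
lemma Cn_one (m : ℕ) : Cn m 1 = 0 := by unfold Cn; norm_num
lemma Cn_even {m k : ℕ} (hk1 : 1 ≤ k) (hk : k ≤ m) : Cn m (2*k) = k := by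
  unfold Cn; split_ifs <;> first | contradiction | omega
lemma Cn_odd {m k : ℕ} (hk1 : 1 ≤ k) (hk : k < m) : Cn m (2*k+1) = 2*m - k := by
  unfold Cn; split_ifs <;> first | contradiction | omega

lemma lemC {m k t : ℕ} (hk1 : 1 ≤ k) (hk : k < m) (ht : t < m) :
    Fn m ((2*m - k + t) % (2*m)) < Fn m (k+t) := by
  rcases Nat.lt_or_ge t k with h | h
  · rw [Nat.mod_eq_of_lt (by omega)]
    unfold Fn; split_ifs <;> first | contradiction | omega
  · have h2 : 2*m - k + t = 2*m + (t - k) := by omega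
    rw [h2, Nat.add_mod_left, Nat.mod_eq_of_lt (by omega)]
    unfold Fn; split_ifs <;> first | contradiction | omega

lemma lemD {m k t : ℕ} (hk : k < m) (ht : t < m) :
    Fn m ((2*m - k + t) % (2*m)) < Fn m (k+1+t) := by
  rcases Nat.lt_or_ge t k with h | h
  · rw [Nat.mod_eq_of_lt (by omega)]
    unfold Fn; split_ifs <;> first | contradiction | omega
  · have h2 : 2*m - k + t = 2*m + (t - k) := by omega
    rw [h2, Nat.add_mod_left, Nat.mod_eq_of_lt (by omega)]
    unfold Fn; split_ifs <;> first | contradiction | omega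

lemma mod2m {m x : ℕ} (hm : 1 ≤ m) (hx : x < 4*m) : x % (2*m) = if x < 2*m then x else x - 2*m := by
  split_ifs with h
  · exact Nat.mod_eq_of_lt h
  · have h2 : x = 2*m + (x - 2*m) := by omega
    rw [h2, Nat.add_mod_left, Nat.mod_eq_of_lt (by omega)]
    omega

lemma lemC' {m k t : ℕ} (hm : 1 ≤ m) (hk1 : 1 ≤ k) (hk : k < m) (ht : t < m) :
    Fn m (if 2*m - k + t < 2*m then 2*m - k + t else 2*m - k + t - 2*m) < Fn m (k+t) := by
  have := lemC hk1 hk ht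
  rwa [mod2m hm (by omega)] at this

lemma lemD' {m k t : ℕ} (hm : 1 ≤ m) (hk : k < m) (ht : t < m) :
    Fn m (if 2*m - k + t < 2*m then 2*m - k + t else 2*m - k + t - 2*m) < Fn m (k+1+t) := by
  have := lemD hk ht
  rwa [mod2m hm (by omega)] at this

def ff (m : ℕ) (x : Fin (2*m+1)) : Fin (2*m+1) := ⟨Fn m x.val, Fn_lt_n x.2⟩

noncomputable def Ff (m : ℕ) : Equiv.Perm (Fin (2*m+1)) :=
  Equiv.ofBijective (ff m)
    (Finite.injective_iff_bijective.mp fun x y h => Fin.ext (Fn_inj x.2 y.2 (congrArg Fin.val h)))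

lemma Ff_val (m : ℕ) (x : Fin (2*m+1)) : (Ff m x).val = Fn m x.val := by
  simp [Ff, Equiv.ofBijective_apply, ff]

def pf (m : ℕ) (x : Fin (2*m+1)) : Fin (2*m+1) :=
  if h : x.val + 1 < 2*m then ⟨x.val+1, by omega⟩
  else if h2 : x.val = 2*m then x else ⟨0, by omega⟩

lemma pf_val (m : ℕ) (x : Fin (2*m+1)) :
    (pf m x).val = if x.val = 2*m then 2*m else if x.val + 1 < 2*m then x.val + 1 else 0 := by
  have hx := x.2
  unfold pf
  split_ifs <;> simp_all <;> omega

noncomputable def Pf (m : ℕ) : Equiv.Perm (Fin (2*m+1)) :=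
  Equiv.ofBijective (pf m)
    (Finite.injective_iff_bijective.mp (by
      intro x y h
      have hx := x.2; have hy := y.2
      have h' := congrArg Fin.val h
      rw [pf_val, pf_val] at h'
      apply Fin.ext
      split_ifs at h' <;> omega))

lemma Pf_val (m : ℕ) (x : Fin (2*m+1)) :
    (Pf m x).val = if x.val = 2*m then 2*m else if x.val + 1 < 2*m then x.val + 1 else 0 := by
  rw [Pf, Equiv.ofBijective_apply, pf_val]

lemma Pf_pow_val (m : ℕ) (hm : 1 ≤ m) : ∀ t, t ≤ 2*m → ∀ x : Fin (2*m+1),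
    ((Pf m ^ t) x).val =
      if x.val = 2*m then 2*m else if x.val + t < 2*m then x.val + t else x.val + t - 2*m := by
  intro t
  induction t with
  | zero => intro _ x; have hx := x.2; simp only [pow_zero, Equiv.Perm.coe_one, id_eq]
            split_ifs <;> first | contradiction | omega
  | succ t ih =>
      intro ht x
      have hx := x.2
      rw [pow_succ, Equiv.Perm.mul_apply, ih (by omega) (Pf m x), Pf_val]
      split_ifs <;> first | contradiction | omega

def cf (m : ℕ) (z : ZMod (2*m+1)) : Fin (2*m+1) := ⟨Cn m z.val, Cn_lt_n z.val_lt⟩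

noncomputable def Cf (m : ℕ) : ZMod (2*m+1) ≃ Fin (2*m+1) :=
  Equiv.ofBijective (cf m)
    ((Fintype.bijective_iff_injective_and_card _).mpr
      ⟨fun x y h => ZMod.val_injective _ (Cn_inj x.val_lt y.val_lt (congrArg Fin.val h)),
       by simp⟩)

lemma Cf_val (m : ℕ) (z : ZMod (2*m+1)) : (Cf m z).val = Cn m z.val := by
  simp [Cf, Equiv.ofBijective_apply, cf]

lemma val_add_one (m : ℕ) (hm : 1 ≤ m) (z : ZMod (2*m+1)) :
    (z + 1).val = if z.val = 2*m then 0 else z.val + 1 := by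
  haveI : Fact (1 < 2*m+1) := ⟨by omega⟩
  rw [ZMod.val_add, ZMod.val_one]
  have hz := z.val_lt
  split_ifs with h
  · rw [h]; simp [Nat.mod_self]
  · exact Nat.mod_eq_of_lt (by omega)

noncomputable def Ef (m : ℕ) (i : ZMod (2*m+1)) : Bool :=
  decide (Ff m (Cf m i) < Ff m (Cf m (i+1)))

lemma Ef_eq (m : ℕ) (i : ZMod (2*m+1)) :
    Ef m i = decide (Fn m (Cn m i.val) < Fn m (Cn m (i+1).val)) := by
  apply decide_eq_decide.mpr
  rw [Fin.lt_def, Ff_val, Ff_val, Cf_val, Cf_val]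

def Pred (m : ℕ) (t : ℕ) (a b : Fin (2*m+1)) : Prop :=
  ∃ i : ZMod (2*m+1),
    (Ef m i = true ∧ (Pf m ^ t) (Cf m i) = a ∧ (Pf m ^ t) (Cf m (i+1)) = b) ∨
    (Ef m i = false ∧ (Pf m ^ t) (Cf m (i+1)) = a ∧ (Pf m ^ t) (Cf m i) = b)

/-- master classification of the edges of the base cycle -/
lemma edge_master (m : ℕ) (hm : 1 ≤ m) (i : ZMod (2*m+1)) :
    (i.val = 0 ∧ (Cf m i).val = 2*m ∧ (Cf m (i+1)).val = 0 ∧ Ef m i = false) ∨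
    (i.val = 2*m ∧ (Cf m i).val = m ∧ (Cf m (i+1)).val = 2*m ∧ Ef m i = true) ∨
    (∃ k, 1 ≤ k ∧ k < m ∧ i.val = 2*k ∧ (Cf m i).val = k ∧ (Cf m (i+1)).val = 2*m - k ∧
        Ef m i = false) ∨
    (∃ k, k < m ∧ i.val = 2*k+1 ∧ (Cf m i).val = (if k = 0 then 0 else 2*m - k) ∧
        (Cf m (i+1)).val = k+1 ∧ Ef m i = true) := by
  have hjlt : i.val < 2*m+1 := i.val_lt
  have hiv : (i+1).val = if i.val = 2*m then 0 else i.val + 1 := val_add_one m hm i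
  rcases Nat.even_or_odd i.val with ⟨k, hk⟩ | ⟨k, hk⟩
  · -- i.val = k + k
    rcases Nat.eq_zero_or_pos k with rfl | hk1
    · -- i.val = 0
      refine Or.inl ⟨by omega, ?_, ?_, ?_⟩
      · rw [Cf_val]; rw [show i.val = 0 by omega, Cn_zero]
      · rw [Cf_val, hiv, if_neg (by omega), show i.val + 1 = 1 by omega, Cn_one]
      · rw [Ef_eq]
        apply decide_eq_false
        rw [hiv, if_neg (by omega), show i.val = 0 by omega]
        norm_num [Cn_zero, Cn_one]
        unfold Fn; split_ifs <;> omega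
    · rcases Nat.lt_or_ge k m with hkm | hkm
      · -- middle even edge
        refine Or.inr (Or.inr (Or.inl ⟨k, hk1, hkm, by omega, ?_, ?_, ?_⟩))
        · rw [Cf_val, show i.val = 2*k by omega, Cn_even hk1 (by omega)]
        · rw [Cf_val, hiv, if_neg (by omega), show i.val + 1 = 2*k+1 by omega,
            Cn_odd hk1 hkm]
        · rw [Ef_eq]
          apply decide_eq_false
          rw [hiv, if_neg (by omega), show i.val = 2*k by omega,
            Cn_even hk1 (by omega), Cn_odd hk1 hkm]
          unfold Fn; split_ifs <;> omega
      · -- i.val = 2*m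
        have hk2m : k = m := by omega
        refine Or.inr (Or.inl ⟨by omega, ?_, ?_, ?_⟩)
        · rw [Cf_val, show i.val = 2*m by omega, Cn_even (by omega) (by omega)]
        · rw [Cf_val, hiv, if_pos (by omega), Cn_zero]
        · rw [Ef_eq]
          apply decide_eq_true
          rw [show i.val = 2*m by omega, hiv, if_pos (by omega), Cn_zero,
            Cn_even (le_refl 1 |>.trans hm) (le_refl m)]
          unfold Fn; split_ifs <;> omega
  · -- i.val = 2*k+1, k < m
    have hkm : k < m := by omega
    refine Or.inr (Or.inr (Or.inr ⟨k, hkm, by omega, ?_, ?_, ?_⟩))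
    · rw [Cf_val, hk]
      rcases Nat.eq_zero_or_pos k with rfl | hk1
      · rw [if_pos rfl, show 2*0+1 = 1 by omega, Cn_one]
      · rw [if_neg (by omega), Cn_odd hk1 hkm]
    · rw [Cf_val, hiv, if_neg (by omega), show i.val + 1 = 2*(k+1) by omega,
        Cn_even (by omega) (by omega)]
    · rw [Ef_eq]
      apply decide_eq_true
      rw [hiv, if_neg (by omega), hk, show (2*k+1:ℕ)+1 = 2*(k+1) by omega,
        Cn_even (by omega) (by omega)]
      rcases Nat.eq_zero_or_pos k with rfl | hk1
      · rw [show 2*0+1 = 1 by omega, Cn_one]; unfold Fn; split_ifs <;> omega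
      · rw [Cn_odd hk1 hkm]; unfold Fn; split_ifs <;> omega

lemma pow_apply_val (m : ℕ) (hm : 1 ≤ m) (t : ℕ) (ht : t ≤ 2*m) {x a : Fin (2*m+1)}
    (h : (Pf m ^ t) x = a) :
    a.val = if x.val = 2*m then 2*m else if x.val + t < 2*m then x.val + t
            else x.val + t - 2*m := by
  rw [← h, Pf_pow_val m hm t ht]

lemma char (m : ℕ) (hm : 1 ≤ m) (t : ℕ) (ht : t < m) (a b : Fin (2*m+1))
    (h : Pred m t a b) :
    (b.val = 2*m ∧ (a.val = t ∨ a.val = m+t)) ∨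
    (a.val < 2*m ∧ b.val < 2*m ∧ (a.val+b.val = 2*t ∨ a.val+b.val = 2*m+2*t ∨
      a.val+b.val = 2*t+1 ∨ a.val+b.val = 2*m+2*t+1)) := by
  obtain ⟨i, h⟩ := h
  rcases edge_master m hm i with ⟨_, hu, hv, he⟩ | ⟨_, hu, hv, he⟩ |
      ⟨k, hk1, hkm, _, hu, hv, he⟩ | ⟨k, hkm, _, hu, hv, he⟩
  · -- j = 0 : edge (2m,0), ε = false : a = π^t(v), b = π^t(u)
    rcases h with ⟨he', _, _⟩ | ⟨_, hA, hB⟩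
    · rw [he] at he'; cases he'
    · have ha := pow_apply_val m hm t (by omega) hA
      have hb := pow_apply_val m hm t (by omega) hB
      rw [hv] at ha; rw [hu] at hb
      split_ifs at ha hb <;> omega
  · -- j = 2m : edge (m, 2m), ε = true : a = π^t(u), b = π^t(v)
    rcases h with ⟨_, hA, hB⟩ | ⟨he', _, _⟩
    · have ha := pow_apply_val m hm t (by omega) hA
      have hb := pow_apply_val m hm t (by omega) hB
      rw [hu] at ha; rw [hv] at hb
      split_ifs at ha hb <;> omega
    · rw [he] at he'; cases he'
  · -- even edge (k, 2m-k), ε = false : a = π^t(v), b = π^t(u)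
    rcases h with ⟨he', _, _⟩ | ⟨_, hA, hB⟩
    · rw [he] at he'; cases he'
    · have ha := pow_apply_val m hm t (by omega) hA
      have hb := pow_apply_val m hm t (by omega) hB
      rw [hv] at ha; rw [hu] at hb
      split_ifs at ha hb <;> omega
  · -- odd edge, ε = true : a = π^t(u), b = π^t(v)
    rcases h with ⟨_, hA, hB⟩ | ⟨he', _, _⟩
    · have ha := pow_apply_val m hm t (by omega) hA
      have hb := pow_apply_val m hm t (by omega) hB
      rw [hu] at ha; rw [hv] at hb
      split_ifs at ha hb <;> omega
    · rw [he] at he'; cases he'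

lemma exist_inf0 (m : ℕ) (hm : 1 ≤ m) (t : ℕ) (ht : t < m) (a b : Fin (2*m+1))
    (ha : a.val = t) (hb : b.val = 2*m) : Pred m t a b := by
  have hjv : (0 : ZMod (2*m+1)).val = 0 := ZMod.val_zero
  rcases edge_master m hm 0 with ⟨_, hu, hv, he⟩ | ⟨h0,_,_,_⟩ | ⟨k,hk1,_,h0,_⟩ | ⟨k,_,h0,_⟩
  · refine ⟨0, Or.inr ⟨he, Fin.ext ?_, Fin.ext ?_⟩⟩
    · rw [Pf_pow_val m hm t (by omega), hv]; split_ifs <;> omega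
    · rw [Pf_pow_val m hm t (by omega), hu]; split_ifs <;> omega
  · omega
  · omega
  · omega

lemma exist_infm (m : ℕ) (hm : 1 ≤ m) (t : ℕ) (ht : t < m) (a b : Fin (2*m+1))
    (ha : a.val = m + t) (hb : b.val = 2*m) : Pred m t a b := by
  have hjv : ((2*m : ℕ) : ZMod (2*m+1)).val = 2*m := ZMod.val_cast_of_lt (by omega)
  rcases edge_master m hm ((2*m : ℕ) : ZMod (2*m+1)) with
    ⟨h0,_,_,_⟩ | ⟨_, hu, hv, he⟩ | ⟨k,hk1,hkm,h0,_⟩ | ⟨k,hkm,h0,_⟩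
  · omega
  · refine ⟨((2*m : ℕ) : ZMod (2*m+1)), Or.inl ⟨he, Fin.ext ?_, Fin.ext ?_⟩⟩
    · rw [Pf_pow_val m hm t (by omega), hu]; split_ifs <;> omega
    · rw [Pf_pow_val m hm t (by omega), hv]; split_ifs <;> omega
  · omega
  · omega

lemma exist_even (m : ℕ) (hm : 1 ≤ m) (k t : ℕ) (hk1 : 1 ≤ k) (hkm : k < m) (ht : t < m)
    (a b : Fin (2*m+1)) (hb : b.val = k + t)
    (ha : a.val + k = t ∨ a.val + k = 2*m + t) (ha2 : a.val < 2*m) : Pred m t a b := by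
  have hjv : ((2*k : ℕ) : ZMod (2*m+1)).val = 2*k := ZMod.val_cast_of_lt (by omega)
  rcases edge_master m hm ((2*k : ℕ) : ZMod (2*m+1)) with
    ⟨h0,_,_,_⟩ | ⟨h0,_,_,_⟩ | ⟨k',hk1',hkm',h0,hu,hv,he⟩ | ⟨k',hkm',h0,_⟩
  · omega
  · omega
  · have hkk : k' = k := by omega
    subst hkk
    refine ⟨((2*k' : ℕ) : ZMod (2*m+1)), Or.inr ⟨he, Fin.ext ?_, Fin.ext ?_⟩⟩
    · rw [Pf_pow_val m hm t (by omega), hv]; split_ifs <;> omega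
    · rw [Pf_pow_val m hm t (by omega), hu]; split_ifs <;> omega
  · omega

lemma exist_odd (m : ℕ) (hm : 1 ≤ m) (k t : ℕ) (hkm : k < m) (ht : t < m)
    (a b : Fin (2*m+1)) (hb : b.val = k + 1 + t)
    (ha : a.val + k = t ∨ a.val + k = 2*m + t) (ha2 : a.val < 2*m) : Pred m t a b := by
  have hjv : ((2*k+1 : ℕ) : ZMod (2*m+1)).val = 2*k+1 := ZMod.val_cast_of_lt (by omega)
  rcases edge_master m hm ((2*k+1 : ℕ) : ZMod (2*m+1)) with
    ⟨h0,_,_,_⟩ | ⟨h0,_,_,_⟩ | ⟨k',hk1',hkm',h0,_⟩ | ⟨k',hkm',h0,hu,hv,he⟩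
  · omega
  · omega
  · omega
  · have hkk : k' = k := by omega
    subst hkk
    refine ⟨((2*k'+1 : ℕ) : ZMod (2*m+1)), Or.inl ⟨he, Fin.ext ?_, Fin.ext ?_⟩⟩
    · rw [Pf_pow_val m hm t (by omega), hu]; split_ifs <;> omega
    · rw [Pf_pow_val m hm t (by omega), hv]; split_ifs <;> omega

lemma arcs (m : ℕ) (hm : 1 ≤ m) (t : ℕ) (ht : t < m) (a b : Fin (2*m+1))
    (h : ∃ i : ZMod (2*m+1), (Ef m i = true ∧ a = Cf m i ∧ b = Cf m (i+1)) ∨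
         (Ef m i = false ∧ a = Cf m (i+1) ∧ b = Cf m i)) :
    Ff m ((Pf m ^ t) a) < Ff m ((Pf m ^ t) b) := by
  obtain ⟨i, hi⟩ := h
  rcases edge_master m hm i with ⟨_, hu, hv, he⟩ | ⟨_, hu, hv, he⟩ |
      ⟨k, hk1, hkm, _, hu, hv, he⟩ | ⟨k, hkm, _, hu, hv, he⟩
  · rcases hi with ⟨he',_,_⟩ | ⟨_, rfl, rfl⟩
    · rw [he] at he'; cases he'
    · rw [Fin.lt_def, Ff_val, Ff_val]
      have hA : ((Pf m ^ t) (Cf m (i+1))).val = t := by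
        rw [Pf_pow_val m hm t (by omega), hv]; split_ifs <;> omega
      have hB : ((Pf m ^ t) (Cf m i)).val = 2*m := by
        rw [Pf_pow_val m hm t (by omega), hu]; split_ifs <;> omega
      rw [hA, hB]; unfold Fn; split_ifs <;> first | contradiction | omega
  · rcases hi with ⟨_, rfl, rfl⟩ | ⟨he',_,_⟩
    · rw [Fin.lt_def, Ff_val, Ff_val]
      have hA : ((Pf m ^ t) (Cf m i)).val = m + t := by
        rw [Pf_pow_val m hm t (by omega), hu]; split_ifs <;> omega
      have hB : ((Pf m ^ t) (Cf m (i+1))).val = 2*m := by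
        rw [Pf_pow_val m hm t (by omega), hv]; split_ifs <;> omega
      rw [hA, hB]; unfold Fn; split_ifs <;> first | contradiction | omega
    · rw [he] at he'; cases he'
  · rcases hi with ⟨he',_,_⟩ | ⟨_, rfl, rfl⟩
    · rw [he] at he'; cases he'
    · rw [Fin.lt_def, Ff_val, Ff_val]
      have hA : ((Pf m ^ t) (Cf m (i+1))).val =
          if 2*m - k + t < 2*m then 2*m - k + t else 2*m - k + t - 2*m := by
        rw [Pf_pow_val m hm t (by omega), hv]; split_ifs <;> omega
      have hB : ((Pf m ^ t) (Cf m i)).val = k + t := by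
        rw [Pf_pow_val m hm t (by omega), hu]; split_ifs <;> omega
      rw [hA, hB]; exact lemC' hm hk1 hkm ht
  · rcases hi with ⟨_, rfl, rfl⟩ | ⟨he',_,_⟩
    · rw [Fin.lt_def, Ff_val, Ff_val]
      have hA : ((Pf m ^ t) (Cf m i)).val =
          if 2*m - k + t < 2*m then 2*m - k + t else 2*m - k + t - 2*m := by
        rw [Pf_pow_val m hm t (by omega), hu]; split_ifs <;> omega
      have hB : ((Pf m ^ t) (Cf m (i+1))).val = k + 1 + t := by
        rw [Pf_pow_val m hm t (by omega), hv]; split_ifs <;> omega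
      rw [hA, hB]; exact lemD' hm hkm ht
    · rw [he] at he'; cases he'

lemma main (m : ℕ) (hm : 1 ≤ m) :
    ∃ (τ : Equiv.Perm (Fin (2*m+1))) (c : ZMod (2*m+1) ≃ Fin (2*m+1))
      (ε : ZMod (2*m+1) → Bool) (π : Equiv.Perm (Fin (2*m+1))),
      (∀ a b : Fin (2*m+1),
        (∃ i : ZMod (2*m+1), (ε i = true ∧ a = c i ∧ b = c (i + 1)) ∨
                       (ε i = false ∧ a = c (i + 1) ∧ b = c i)) →
        τ.symm a < τ.symm b) ∧
      (∀ t : ℕ, t < (2*m+1 - 1) / 2 → ∀ a b : Fin (2*m+1),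
        (∃ i : ZMod (2*m+1), (ε i = true ∧ a = c i ∧ b = c (i + 1)) ∨
                       (ε i = false ∧ a = c (i + 1) ∧ b = c i)) →
        τ.symm ((π ^ t) a) < τ.symm ((π ^ t) b)) ∧
      (∀ a b : Fin (2*m+1), τ.symm a < τ.symm b →
        ∃! t : ℕ, t < (2*m+1 - 1) / 2 ∧
          ∃ i : ZMod (2*m+1),
            (ε i = true ∧ (π ^ t) (c i) = a ∧ (π ^ t) (c (i + 1)) = b) ∨
            (ε i = false ∧ (π ^ t) (c (i + 1)) = a ∧ (π ^ t) (c i) = b)) := by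
  refine ⟨(Ff m).symm, Cf m, Ef m, Pf m, ?_, ?_, ?_⟩
  · intro a b h
    simp only [Equiv.symm_symm]
    simpa using arcs m hm 0 hm a b h
  · intro t ht a b h
    simp only [Equiv.symm_symm]
    have ht' : t < m := by omega
    exact arcs m hm t ht' a b h
  · intro a b hab
    simp only [Equiv.symm_symm] at hab
    simp only [show (2*m+1-1)/2 = m from by omega]
    have hab' : Fn m a.val < Fn m b.val := by
      rw [Fin.lt_def, Ff_val, Ff_val] at hab; exact hab
    have hav := a.2
    have hbv := b.2
    show ∃! t : ℕ, t < m ∧ Pred m t a b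
    suffices H : ∃ t : ℕ, t < m ∧ Pred m t a b by
      obtain ⟨t, ht, hp⟩ := H
      refine ⟨t, ⟨ht, hp⟩, fun t' ht' => ?_⟩
      have c1 := char m hm t' ht'.1 a b ht'.2
      have c2 := char m hm t ht a b hp
      omega
    have hFa : Fn m a.val < 2*m+1 := Fn_lt_n hav
    have hFb : Fn m b.val < 2*m+1 := Fn_lt_n hbv
    have ha3 : a.val < 2*m := by
      by_contra h
      have h2 : a.val = 2*m := by omega
      rw [h2] at hab'
      unfold Fn at hab' hFb
      split_ifs at hab' hFb <;> omega
    by_cases hb2 : b.val = 2*m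
    · rcases Nat.lt_or_ge a.val m with ham | ham
      · exact ⟨a.val, ham, exist_inf0 m hm a.val ham a b rfl hb2⟩
      · exact ⟨a.val - m, by omega,
          exist_infm m hm (a.val - m) (by omega) a b (by omega) hb2⟩
    · have hb3 : b.val < 2*m := by omega
      have hne : a.val ≠ b.val := fun h => by rw [h] at hab'; omega
      obtain ⟨t, ht, hsum⟩ : ∃ t, t < m ∧ (a.val + b.val = 2*t ∨ a.val + b.val = 2*m + 2*t ∨
          a.val + b.val = 2*t + 1 ∨ a.val + b.val = 2*m + 2*t + 1) := by
        rcases Nat.lt_or_ge (a.val + b.val) (2*m) with h | h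
        · exact ⟨(a.val + b.val)/2, by omega, by omega⟩
        · exact ⟨(a.val + b.val - 2*m)/2, by omega, by omega⟩
      refine ⟨t, ht, ?_⟩
      rcases hsum with hs | hs | hs | hs
      · -- even sum, no wrap
        by_cases hw : t < b.val ∧ b.val ≤ t + (m-1)
        · exact exist_even m hm (b.val - t) t (by omega) (by omega) ht a b (by omega)
            (by omega) ha3
        · exfalso
          have hw' : t < a.val ∧ a.val ≤ t + (m-1) := by omega
          have h1 := lemC' (m := m) (k := a.val - t) (t := t) hm (by omega) (by omega) ht
          rw [show a.val - t + t = a.val from by omega] at h1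
          rw [show (if 2*m - (a.val - t) + t < 2*m then 2*m - (a.val - t) + t
              else 2*m - (a.val - t) + t - 2*m) = b.val from by split_ifs <;> omega] at h1
          omega
      · by_cases hw : t < b.val ∧ b.val ≤ t + (m-1)
        · exact exist_even m hm (b.val - t) t (by omega) (by omega) ht a b (by omega)
            (by omega) ha3
        · exfalso
          have hw' : t < a.val ∧ a.val ≤ t + (m-1) := by omega
          have h1 := lemC' (m := m) (k := a.val - t) (t := t) hm (by omega) (by omega) ht
          rw [show a.val - t + t = a.val from by omega] at h1
          rw [show (if 2*m - (a.val - t) + t < 2*m then 2*m - (a.val - t) + t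
              else 2*m - (a.val - t) + t - 2*m) = b.val from by split_ifs <;> omega] at h1
          omega
      · -- odd sum
        by_cases hw : t < b.val ∧ b.val ≤ t + m
        · exact exist_odd m hm (b.val - t - 1) t (by omega) ht a b (by omega)
            (by omega) ha3
        · exfalso
          have hw' : t < a.val ∧ a.val ≤ t + m := by omega
          have h1 := lemD' (m := m) (k := a.val - t - 1) (t := t) hm (by omega) ht
          rw [show a.val - t - 1 + 1 + t = a.val from by omega] at h1
          rw [show (if 2*m - (a.val - t - 1) + t < 2*m then 2*m - (a.val - t - 1) + t
              else 2*m - (a.val - t - 1) + t - 2*m) = b.val from by split_ifs <;> omega] at h1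
          omega
      · by_cases hw : t < b.val ∧ b.val ≤ t + m
        · exact exist_odd m hm (b.val - t - 1) t (by omega) ht a b (by omega)
            (by omega) ha3
        · exfalso
          have hw' : t < a.val ∧ a.val ≤ t + m := by omega
          have h1 := lemD' (m := m) (k := a.val - t - 1) (t := t) hm (by omega) ht
          rw [show a.val - t - 1 + 1 + t = a.val from by omega] at h1
          rw [show (if 2*m - (a.val - t - 1) + t < 2*m then 2*m - (a.val - t - 1) + t
              else 2*m - (a.val - t - 1) + t - 2*m) = b.val from by split_ifs <;> omega] at h1
          omega

end Stmt10



/-- For every odd n ≥ 3 the transitive tournament on n vertices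
decomposes into (n-1)/2 isomorphically oriented Hamiltonian cycles. The
transitive tournament is given by an ordering τ of the vertices (arc a → b iff
τ.symm a < τ.symm b), the Hamiltonian cycle C by a cyclic enumeration c of the
vertices together with an orientation ε of its edges, and the cycles
C, π(C), ..., π^{(n-3)/2}(C) partition the arc set. -/
theorem stmt_10 (n : ℕ) (h3 : 3 ≤ n) (hodd : Odd n) :
    ∃ (τ : Equiv.Perm (Fin n)) (c : ZMod n ≃ Fin n) (ε : ZMod n → Bool)
      (π : Equiv.Perm (Fin n)),
      -- the arcs of C all belong to T
      (∀ a b : Fin n,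
        (∃ i : ZMod n, (ε i = true ∧ a = c i ∧ b = c (i + 1)) ∨
                       (ε i = false ∧ a = c (i + 1) ∧ b = c i)) →
        τ.symm a < τ.symm b) ∧
      -- the arcs of each π^t(C), t < (n-1)/2, belong to T
      (∀ t : ℕ, t < (n - 1) / 2 → ∀ a b : Fin n,
        (∃ i : ZMod n, (ε i = true ∧ a = c i ∧ b = c (i + 1)) ∨
                       (ε i = false ∧ a = c (i + 1) ∧ b = c i)) →
        τ.symm ((π ^ t) a) < τ.symm ((π ^ t) b)) ∧
      -- every arc of T lies in exactly one of the cycles π^t(C), t < (n-1)/2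
      (∀ a b : Fin n, τ.symm a < τ.symm b →
        ∃! t : ℕ, t < (n - 1) / 2 ∧
          ∃ i : ZMod n, (ε i = true ∧ (π ^ t) (c i) = a ∧ (π ^ t) (c (i + 1)) = b) ∨
                        (ε i = false ∧ (π ^ t) (c (i + 1)) = a ∧ (π ^ t) (c i) = b)) := by
  obtain ⟨m, rfl⟩ := hodd
  exact Stmt10.main m (by omega)
end

section
/- Let k > 1, let m be a multiple of k (and a multiple of 2k if k is even), and let n be a multiple of m. If a σ_n-k-partition P of K_n is a blow-up of a σ_m-k-partition Q of K_m, and Q admits a transitive σ_m-orientation, then P admits a transitive σ_n-orientation. -/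
namespace Stmt11Aux

variable (N : ℕ) (t : ℕ → ℕ)

/-- Left extent of the `j`-th interval of the chain. -/
def Lf : ℕ → ℕ
  | 0 => 0
  | j + 1 => if t j < t (j + 1) then Lf j + 1 else Lf j

/-- Right extent of the `j`-th interval of the chain. -/
def Rf : ℕ → ℕ
  | 0 => 0
  | j + 1 => if t j < t (j + 1) then Rf j else Rf j + 1

lemma Lf_add_Rf (j : ℕ) : Lf t j + Rf t j = j := by
  induction j with
  | zero => rfl
  | succ i ih =>
    by_cases h : t i < t (i + 1) <;> simp [Lf, Rf, h] <;> omega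

/-- Shift indicator at time `r`. -/
def dlt (j r : ℕ) : ℕ := if t j < r then 1 else 0

/-- Membership of `q` in the `j`-th interval of the chain at time `r`. -/
def Mem (j r q : ℕ) : Prop :=
  q + dlt t j r ≤ Rf t j ∨ N ≤ q + Lf t j + dlt t j r

instance : ∀ j r q, Decidable (Mem N t j r q) := fun j r q => by
  unfold Mem; infer_instance

lemma mem_top {j r q : ℕ} (h : N ≤ j + 1) : Mem N t j r q := by
  have hLR := Lf_add_Rf t j
  unfold Mem
  omega

lemma mem_succ {j r q : ℕ} (h : Mem N t j r q) : Mem N t (j + 1) r q := by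
  have eL : Lf t (j + 1) = if t j < t (j + 1) then Lf t j + 1 else Lf t j := rfl
  have eR : Rf t (j + 1) = if t j < t (j + 1) then Rf t j else Rf t j + 1 := rfl
  unfold Mem dlt at h ⊢
  rw [eL, eR]
  split_ifs at h ⊢ <;> omega

lemma mem_mono {j j' r q : ℕ} (hjj : j ≤ j') (h : Mem N t j r q) : Mem N t j' r q := by
  induction j' with
  | zero =>
    have : j = 0 := by omega
    exact this ▸ h
  | succ i ih =>
    rcases Nat.lt_or_ge j (i+1) with h1 | h1
    · exact mem_succ N t (ih (by omega))
    · have : j = i + 1 := by omega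
      exact this ▸ h

lemma ex_mem (r q : ℕ) : ∃ j, Mem N t j r q := ⟨N, mem_top N t (by omega)⟩

/-- Rank of `q` at time `r`. -/
def rho (r q : ℕ) : ℕ := Nat.find (ex_mem N t r q)

lemma rho_spec (r q : ℕ) : Mem N t (rho N t r q) r q := Nat.find_spec (ex_mem N t r q)

lemma rho_min {j r q : ℕ} (h : j < rho N t r q) : ¬ Mem N t j r q := Nat.find_min (ex_mem N t r q) h

lemma rho_le {j r q : ℕ} (h : Mem N t j r q) : rho N t r q ≤ j := Nat.find_min' (ex_mem N t r q) h

lemma rho_le_pred (hN : 1 ≤ N) (r q : ℕ) : rho N t r q ≤ N - 1 :=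
  rho_le N t (mem_top N t (by omega))

lemma rho_lt_rho {j r x y : ℕ} (h : Mem N t j r x) (h' : ¬ Mem N t j r y) :
    rho N t r x < rho N t r y := by
  have h1 : rho N t r x ≤ j := rho_le N t h
  have h2 : j < rho N t r y := by
    by_contra hc
    exact h' (mem_mono N t (by omega) (rho_spec N t r y))
  omega

lemma lemA {j r x : ℕ} (h1 : Mem N t j r x) (h2 : ¬ Mem N t j (r + 1) x) :
    t j = r ∧ x = Rf t j ∧ j + 2 ≤ N := by
  have hN : j + 2 ≤ N := by
    by_contra h
    exact h2 (mem_top N t (by omega))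
  refine ⟨?_, ?_, hN⟩ <;>
  · unfold Mem dlt at h1 h2
    split_ifs at h1 h2 <;> omega

lemma lemB {j r y : ℕ} (h1 : Mem N t j (r + 1) y) (h2 : ¬ Mem N t j r y) :
    t j = r ∧ y + Lf t j + 1 = N ∧ j + 2 ≤ N := by
  have hN : j + 2 ≤ N := by
    by_contra h
    exact h2 (mem_top N t (by omega))
  refine ⟨?_, ?_, hN⟩ <;>
  · unfold Mem dlt at h1 h2
    split_ifs at h1 h2 <;> omega


/-- The key combinatorial lemma: if the within-block order flips the pair
`{x, y}` between times `r` and `r+1`, then the flip is witnessed by a level `j`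
with `t j = r`, `x` the right endpoint and `y` just left of the left endpoint. -/
lemma flip {r x y : ℕ} (_hxy : x ≠ y)
    (H1 : rho N t r x < rho N t r y)
    (H2 : rho N t (r + 1) y < rho N t (r + 1) x) :
    ∃ j, j + 2 ≤ N ∧ t j = r ∧ x = Rf t j ∧ y + Lf t j + 1 = N := by
  rcases le_or_gt (rho N t (r+1) y) (rho N t r x) with hBA | hAB
  · by_cases hx : Mem N t (rho N t r x) (r + 1) x
    · -- the flip level is `rho N t (r+1) x - 1`
      have hR'A : rho N t (r+1) x ≤ rho N t r x := rho_le N t hx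
      set j := rho N t (r+1) x - 1 with hj
      have hBR' : rho N t (r+1) y < rho N t (r+1) x := H2
      have h1 : Mem N t j (r + 1) y := mem_mono N t (by omega) (rho_spec N t (r+1) y)
      have h2 : ¬ Mem N t j r y := rho_min N t (by omega)
      obtain ⟨htj, hyL, hN2⟩ := lemB N t h1 h2
      refine ⟨j, hN2, htj, ?_, hyL⟩
      have hx1 : Mem N t (j + 1) (r + 1) x := by
        have : j + 1 = rho N t (r+1) x := by omega
        exact this ▸ rho_spec N t (r+1) x
      have hx2 : ¬ Mem N t j (r + 1) x := rho_min N t (by omega)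
      have eL : Lf t (j + 1) = if t j < t (j + 1) then Lf t j + 1 else Lf t j := rfl
      have eR : Rf t (j + 1) = if t j < t (j + 1) then Rf t j else Rf t j + 1 := rfl
      unfold Mem dlt at hx1 hx2
      rw [eL, eR] at hx1
      split_ifs at hx1 hx2 <;> omega
    · -- the flip level is `rho N t r x`
      have h1 : Mem N t (rho N t r x) r x := rho_spec N t r x
      obtain ⟨ht, hxR, hN2⟩ := lemA N t h1 hx
      have h3 : Mem N t (rho N t r x) (r + 1) y :=
        mem_mono N t hBA (rho_spec N t (r+1) y)
      have h4 : ¬ Mem N t (rho N t r x) r y := rho_min N t H1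
      obtain ⟨_, hyL, _⟩ := lemB N t h3 h4
      exact ⟨rho N t r x, hN2, ht, hxR, hyL⟩
  · -- `rho N t r x < rho N t (r+1) y` is impossible
    exfalso
    set B := rho N t (r+1) y with hB
    have hx1 : Mem N t B r x := mem_mono N t (by omega) (rho_spec N t r x)
    have hx2 : ¬ Mem N t B (r + 1) x := rho_min N t H2
    obtain ⟨htB, hxB, _⟩ := lemA N t hx1 hx2
    have hB1 : 1 ≤ B := by omega
    have hx3 : Mem N t (B - 1) r x := mem_mono N t (by omega) (rho_spec N t r x)
    have hx4 : ¬ Mem N t (B - 1) (r + 1) x := rho_min N t (by omega)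
    obtain ⟨htB1, hxB1, _⟩ := lemA N t hx3 hx4
    have hBs : B - 1 + 1 = B := by omega
    have eR : Rf t (B - 1 + 1) =
        if t (B - 1) < t (B - 1 + 1) then Rf t (B - 1) else Rf t (B - 1) + 1 := rfl
    rw [hBs] at eR
    by_cases hw : t (B - 1) < t B
    · omega
    · rw [if_neg hw] at eR
      omega

/-- Wrap-around: the order at time `m` is the shift of the order at time `0`. -/
lemma rho_wrap {mm q : ℕ} (hq : q < N) (hk : ∀ j, j + 2 ≤ N → t j < mm) :
    rho N t mm q = rho N t 0 ((q + 1) % N) := by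
  have hiff : ∀ j, Mem N t j mm q ↔ Mem N t j 0 ((q + 1) % N) := by
    intro j
    by_cases hj : j + 2 ≤ N
    · have h1 : dlt t j mm = 1 := if_pos (hk j hj)
      have h2 : dlt t j 0 = 0 := if_neg (by omega)
      have hLR := Lf_add_Rf t j
      unfold Mem
      rw [h1, h2]
      rcases Nat.lt_or_ge (q + 1) N with h | h
      · rw [Nat.mod_eq_of_lt h]
        constructor <;> intro <;> omega
      · have hqq : q + 1 = N := by omega
        rw [hqq, Nat.mod_self]
        constructor <;> intro <;> omega
    · constructor <;> intro <;> exact mem_top N t (by omega)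
  apply le_antisymm
  · exact rho_le N t ((hiff _).mpr (rho_spec N t 0 ((q + 1) % N)))
  · exact rho_le N t ((hiff _).mp (rho_spec N t mm q))

/-- Ranks are injective on `[0, N)`. -/
lemma rho_inj {r x y : ℕ} (hx : x < N) (hy : y < N)
    (h : rho N t r x = rho N t r y) : x = y := by
  have h1 : Mem N t (rho N t r x) r x := rho_spec N t r x
  have h2 : Mem N t (rho N t r x) r y := h ▸ rho_spec N t r y
  rcases Nat.eq_zero_or_pos (rho N t r x) with h0 | h0
  · rw [h0] at h1 h2
    have eL : Lf t 0 = 0 := rfl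
    have eR : Rf t 0 = 0 := rfl
    unfold Mem dlt at h1 h2
    rw [eL, eR] at h1 h2
    split_ifs at h1 h2 <;> omega
  · set j := rho N t r x - 1 with hj
    have hjs : j + 1 = rho N t r x := by omega
    have h3 : ¬ Mem N t j r x := rho_min N t (by omega)
    have h4 : ¬ Mem N t j r y := by
      have : j < rho N t r y := by omega
      exact rho_min N t this
    rw [← hjs] at h1 h2
    have eL : Lf t (j + 1) = if t j < t (j + 1) then Lf t j + 1 else Lf t j := rfl
    have eR : Rf t (j + 1) = if t j < t (j + 1) then Rf t j else Rf t j + 1 := rfl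
    unfold Mem dlt at h1 h2 h3 h4
    rw [eL, eR] at h1 h2
    split_ifs at h1 h2 h3 h4 <;> omega


lemma lex_eq {Nn p1 s1 p2 s2 : ℕ} (h1 : s1 < Nn) (h2 : s2 < Nn)
    (h : p1 * Nn + s1 = p2 * Nn + s2) : p1 = p2 ∧ s1 = s2 := by
  have hp : p1 = p2 := by
    rcases Nat.lt_trichotomy p1 p2 with hl | he | hl
    · have h3 := Nat.mul_le_mul_right Nn (show p1 + 1 ≤ p2 by omega)
      rw [add_mul, one_mul] at h3; omega
    · exact he
    · have h3 := Nat.mul_le_mul_right Nn (show p2 + 1 ≤ p1 by omega)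
      rw [add_mul, one_mul] at h3; omega
  subst hp
  exact ⟨rfl, by omega⟩

lemma lex_lt {Nn p1 s1 p2 s2 : ℕ} (h1 : s1 < Nn) (h2 : s2 < Nn)
    (h : p1 * Nn + s1 < p2 * Nn + s2) : p1 < p2 ∨ (p1 = p2 ∧ s1 < s2) := by
  rcases Nat.lt_trichotomy p1 p2 with hl | he | hl
  · exact Or.inl hl
  · subst he; exact Or.inr ⟨rfl, by omega⟩
  · exfalso
    have h3 := Nat.mul_le_mul_right Nn (show p2 + 1 ≤ p1 by omega)
    rw [add_mul, one_mul] at h3; omega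

lemma shift_iter {n k : ℕ} (ℓ : ZMod n → ZMod n → ZMod k)
    (hs : ∀ a b : ZMod n, a ≠ b → ℓ (a + 1) (b + 1) = ℓ a b + 1) :
    ∀ (i : ℕ) (x y : ZMod n), x ≠ y → ℓ (x + i) (y + i) = ℓ x y + i := by
  intro i
  induction i with
  | zero => intro x y _; simp
  | succ i ih =>
    intro x y hxy
    have hne : x + (i : ZMod n) ≠ y + (i : ZMod n) := by
      intro hc; exact hxy (by exact add_right_cancel hc)
    have h1 : ℓ (x + i + 1) (y + i + 1) = ℓ (x + i) (y + i) + 1 := hs _ _ hne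
    push_cast
    rw [← add_assoc, ← add_assoc, h1, ih x y hxy]
    push_cast
    ring

lemma decomp {n k : ℕ} [NeZero n] (ℓ : ZMod n → ZMod n → ZMod k)
    (hs : ∀ a b : ZMod n, a ≠ b → ℓ (a + 1) (b + 1) = ℓ a b + 1)
    {a b : ZMod n} (hab : a ≠ b) :
    ℓ a b = ℓ 0 (b - a) + ((a.val : ℕ) : ZMod k) := by
  have h0 : (0 : ZMod n) ≠ b - a := by
    intro hc
    exact hab (sub_eq_zero.mp hc.symm).symm
  have h := shift_iter ℓ hs a.val 0 (b - a) h0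
  have ha : ((a.val : ℕ) : ZMod n) = a := by rw [ZMod.natCast_val, ZMod.cast_id]
  rw [ha, zero_add, sub_add_cancel] at h
  exact h

end Stmt11Aux

/-- If a σ_n-k-partition P is a blow-up of a σ_m-k-partition Q
and Q admits a transitive σ_m-orientation, then P admits a transitive
σ_n-orientation. -/
theorem stmt_11 (k m n : ℕ) (hk : 1 < k) (hn : 0 < n)
    (hkm : k ∣ m) (hkm2 : Even k → 2 * k ∣ m) (hmn : m ∣ n)
    (ℓP : ZMod n → ZMod n → ZMod k) (ℓQ : ZMod m → ZMod m → ZMod k)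
    (hP : IsSigmaPartition n k ℓP) (hQ : IsSigmaPartition m k ℓQ)
    (hblow : ∀ i : ℕ, 1 ≤ i → i ≤ n / 2 → ¬ (m ∣ i) →
      ℓP 0 ((i : ℕ) : ZMod n) = ℓQ 0 ((i % m : ℕ) : ZMod m))
    (hQT : ∃ τ : Fin m ≃ ZMod m, IsTransSigmaOrientation m k ℓQ τ) :
    ∃ τ : Fin n ≃ ZMod n, IsTransSigmaOrientation n k ℓP τ := by
  classical
  obtain ⟨τQ, hτQ⟩ := hQT
  have hm0 : 0 < m := Nat.pos_of_dvd_of_pos hmn hn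
  have hk0 : 0 < k := by omega
  haveI : NeZero n := ⟨hn.ne'⟩
  haveI : NeZero m := ⟨hm0.ne'⟩
  haveI : NeZero k := ⟨hk0.ne'⟩
  have hkm' : k ≤ m := Nat.le_of_dvd hm0 hkm
  have hmn' : m ≤ n := Nat.le_of_dvd hn hmn
  have hn2 : 2 ≤ n := by omega
  haveI : Fact (1 < n) := ⟨by omega⟩
  set N := n / m with hNdef
  have hnmN : n = m * N := (Nat.mul_div_cancel' hmn).symm
  have hN1 : 1 ≤ N := by
    rcases Nat.eq_zero_or_pos N with h | h
    · rw [h, Nat.mul_zero] at hnmN; omega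
    · exact h
  -- cast helpers
  have hkn : k ∣ n := hkm.trans hmn
  have hcast_nm : ((n : ℕ) : ZMod m) = 0 := (ZMod.natCast_eq_zero_iff n m).mpr hmn
  have hcast_mk : ((m : ℕ) : ZMod k) = 0 := (ZMod.natCast_eq_zero_iff m k).mpr hkm
  have hcast_nk : ((n : ℕ) : ZMod k) = 0 := (ZMod.natCast_eq_zero_iff n k).mpr hkn
  have castn_m : ∀ z : ℕ, ((z % n : ℕ) : ZMod m) = (z : ZMod m) := by
    intro z
    conv_rhs => rw [← Nat.mod_add_div z n]
    push_cast
    rw [hcast_nm]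
    ring
  have castm_m : ∀ z : ℕ, ((z % m : ℕ) : ZMod m) = (z : ZMod m) := by
    intro z
    conv_rhs => rw [← Nat.mod_add_div z m]
    push_cast
    rw [ZMod.natCast_self]
    ring
  have castm_k : ∀ z : ℕ, ((z % m : ℕ) : ZMod k) = (z : ZMod k) := by
    intro z
    conv_rhs => rw [← Nat.mod_add_div z m]
    push_cast
    rw [hcast_mk]
    ring
  set π : ZMod n → ZMod m := fun x => ((x.val : ℕ) : ZMod m) with hπdef
  have hπadd : ∀ x y : ZMod n, π (x + y) = π x + π y := by
    intro x y
    show (((x + y).val : ℕ) : ZMod m) = ((x.val : ℕ) : ZMod m) + ((y.val : ℕ) : ZMod m)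
    rw [ZMod.val_add, castn_m]
    push_cast
    rfl
  have hπone : π 1 = 1 := by
    show (((1 : ZMod n).val : ℕ) : ZMod m) = 1
    rw [ZMod.val_one]
    norm_num
  have hπval : ∀ x : ZMod n, (π x).val = x.val % m := by
    intro x
    show (((x.val : ℕ) : ZMod m)).val = x.val % m
    rw [ZMod.val_natCast]
  have hval_n : ∀ x : ZMod n, ((x.val : ℕ) : ZMod n) = x := by
    intro x; rw [ZMod.natCast_val, ZMod.cast_id]
  -- the labelling data
  set c : ℕ → ZMod k := fun i => ℓP 0 ((i * m : ℕ) : ZMod n) with hcdef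
  set t : ℕ → ℕ := fun j => if j + 2 ≤ N then (-1 - c (j + 1)).val else k with htdef
  have ht_lt : ∀ j, j + 2 ≤ N → t j < k := by
    intro j hj
    show (if j + 2 ≤ N then (-1 - c (j + 1)).val else k) < k
    rw [if_pos hj]
    exact ZMod.val_lt _
  -- the key
  set Key : ZMod n → ℕ := fun x =>
    (τQ.symm (π x)).val * N + Stmt11Aux.rho N t (x.val % m) (x.val / m) with hKeydef
  have hrho_lt : ∀ r q, Stmt11Aux.rho N t r q < N := fun r q => by
    have := Stmt11Aux.rho_le_pred N t hN1 r q; omega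
  have hq_lt : ∀ x : ZMod n, x.val / m < N := by
    intro x
    have h1 : x.val < m * N := by rw [← hnmN]; exact ZMod.val_lt x
    exact Nat.div_lt_of_lt_mul h1
  have hKey_lt : ∀ x, Key x < n := by
    intro x
    have h1 : (τQ.symm (π x)).val < m := (τQ.symm (π x)).isLt
    have h2 := hrho_lt (x.val % m) (x.val / m)
    have h3 : ((τQ.symm (π x)).val + 1) * N ≤ m * N := Nat.mul_le_mul_right N h1
    rw [add_mul, one_mul] at h3
    show (τQ.symm (π x)).val * N + Stmt11Aux.rho N t (x.val % m) (x.val / m) < n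
    omega
  have hKey_inj : Function.Injective Key := by
    intro x y hxy
    simp only [hKeydef] at hxy
    obtain ⟨hp, hs⟩ := Stmt11Aux.lex_eq (hrho_lt _ _) (hrho_lt _ _) hxy
    have hπxy : π x = π y := τQ.symm.injective (Fin.val_injective hp)
    have hmod : x.val % m = y.val % m := by
      have := congrArg ZMod.val hπxy
      rwa [hπval, hπval] at this
    rw [← hmod] at hs
    have hdiv : x.val / m = y.val / m :=
      Stmt11Aux.rho_inj N t (hq_lt x) (hq_lt y) hs
    have : x.val = y.val := by
      have h1 := Nat.div_add_mod x.val m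
      have h2 := Nat.div_add_mod y.val m
      rw [← h1, ← h2, hdiv, hmod]
    exact ZMod.val_injective _ this
  have hF : Function.Bijective (fun x : ZMod n => (⟨Key x, hKey_lt x⟩ : Fin n)) := by
    rw [Fintype.bijective_iff_injective_and_card]
    constructor
    · intro x y h
      exact hKey_inj (congrArg Fin.val h)
    · rw [ZMod.card, Fintype.card_fin]
  refine ⟨(Equiv.ofBijective _ hF).symm, ?_⟩
  have hPrec : ∀ x y : ZMod n,
      Precedes (Equiv.ofBijective _ hF).symm x y ↔ Key x < Key y := by
    intro x y
    show (Equiv.ofBijective _ hF).symm.symm x < (Equiv.ofBijective _ hF).symm.symm y ↔ _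
    rw [Equiv.symm_symm]
    exact Iff.rfl
  intro a b hab hrev
  obtain ⟨hab1, hab2⟩ := hrev
  rw [hPrec] at hab1 hab2
  simp only [hKeydef] at hab1 hab2
  by_cases hblock : π a = π b
  · -- same block: use the within-block scheduling analysis
    have hr : a.val % m = b.val % m := by
      have h := congrArg ZMod.val hblock
      rwa [hπval, hπval] at h
    have hπa1 : π (a + 1) = π a + 1 := by rw [hπadd, hπone]
    have hπb1 : π (b + 1) = π b + 1 := by rw [hπadd, hπone]
    have hπab1 : π (a + 1) = π (b + 1) := by rw [hπa1, hπb1, hblock]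
    have hdma := Nat.div_add_mod a.val m
    have hdmb := Nat.div_add_mod b.val m
    have hqa_lt := hq_lt a
    have hqb_lt := hq_lt b
    have hra_lt : a.val % m < m := Nat.mod_lt _ hm0
    have hqab : a.val / m ≠ b.val / m := by
      intro hq
      apply hab
      apply ZMod.val_injective
      rw [← hdma, ← hdmb, hq, hr]
    have h1 : Stmt11Aux.rho N t (a.val % m) (a.val / m)
        < Stmt11Aux.rho N t (b.val % m) (b.val / m) := by
      rcases Stmt11Aux.lex_lt (hrho_lt _ _) (hrho_lt _ _) hab1 with h | ⟨_, h⟩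
      · exfalso; rw [hblock] at h; omega
      · exact h
    rw [← hr] at h1
    have h2 : Stmt11Aux.rho N t ((b + 1).val % m) ((b + 1).val / m)
        < Stmt11Aux.rho N t ((a + 1).val % m) ((a + 1).val / m) := by
      rcases Stmt11Aux.lex_lt (hrho_lt _ _) (hrho_lt _ _) hab2 with h | ⟨_, h⟩
      · exfalso; rw [hπab1] at h; omega
      · exact h
    -- coordinates of x+1
    have hstep1 : ∀ x : ZMod n, x.val % m + 1 < m →
        (x + 1).val % m = x.val % m + 1 ∧ (x + 1).val / m = x.val / m := by
      intro x hx
      have hdmx := Nat.div_add_mod x.val m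
      have hqx_lt := hq_lt x
      have hxd : (x + 1).val = (x.val + 1) % n := by
        rw [ZMod.val_add, ZMod.val_one]
      have hbound : m * (x.val / m) ≤ m * (N - 1) := Nat.mul_le_mul_left m (by omega)
      have hmn1 : m * (N - 1) + m = m * N := by
        have hN' : N - 1 + 1 = N := by omega
        calc m * (N - 1) + m = m * (N - 1 + 1) := by ring
          _ = m * N := by rw [hN']
      have hlt : x.val + 1 < n := by omega
      rw [hxd, Nat.mod_eq_of_lt hlt]
      have hx1 : x.val + 1 = m * (x.val / m) + (x.val % m + 1) := by omega
      constructor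
      · rw [hx1, Nat.mul_add_mod, Nat.mod_eq_of_lt hx]
      · rw [hx1, Nat.mul_add_div hm0, Nat.div_eq_of_lt hx, Nat.add_zero]
    have hstep2 : ∀ x : ZMod n, x.val % m + 1 = m →
        (x + 1).val % m = 0 ∧ (x + 1).val / m = (x.val / m + 1) % N := by
      intro x hx
      have hdmx := Nat.div_add_mod x.val m
      have hqx_lt := hq_lt x
      have hxd : (x + 1).val = (x.val + 1) % n := by
        rw [ZMod.val_add, ZMod.val_one]
      have hexp : m * (x.val / m + 1) = m * (x.val / m) + m := by ring
      have hx1 : x.val + 1 = m * (x.val / m + 1) := by omega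
      rcases Nat.lt_or_ge (x.val / m + 1) N with hq | hq
      · have hlt : x.val + 1 < n := by
          have h5 : m * (x.val / m + 1) < m * N := (Nat.mul_lt_mul_left hm0).mpr hq
          omega
        rw [hxd, Nat.mod_eq_of_lt hlt, hx1]
        refine ⟨Nat.mul_mod_right m _, ?_⟩
        rw [Nat.mul_div_cancel_left _ hm0, Nat.mod_eq_of_lt hq]
      · have hqe : x.val / m + 1 = N := by omega
        have hn' : x.val + 1 = n := by rw [hx1, hqe]; omega
        rw [hxd, hn', Nat.mod_self]
        refine ⟨Nat.zero_mod m, ?_⟩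
        rw [Nat.zero_div, hqe, Nat.mod_self]
    -- the common conclusion
    have hmain : ∀ j, j + 2 ≤ N → t j = a.val % m →
        a.val / m = Stmt11Aux.Rf t j →
        b.val / m + Stmt11Aux.Lf t j + 1 = N → ℓP a b = -1 := by
      intro j hjN htj hxR hyL
      have hLR := Stmt11Aux.Lf_add_Rf t j
      have htval : t j = (-1 - c (j + 1)).val := by
        simp only [htdef]
        rw [if_pos hjN]
      have hrak : ((a.val % m : ℕ) : ZMod k) = -1 - c (j + 1) := by
        rw [← htj, htval, ZMod.natCast_val, ZMod.cast_id]
      have hmj_lt : m * (j + 1) < n := by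
        have h3 : m * (j + 1) ≤ m * (N - 1) := Nat.mul_le_mul_left m (by omega)
        have h4 : m * (N - 1) + m = m * N := by
          have hN' : N - 1 + 1 = N := by omega
          calc m * (N - 1) + m = m * (N - 1 + 1) := by ring
            _ = m * N := by rw [hN']
        omega
      have hmj_pos : 0 < m * (j + 1) := by positivity
      have hw_ne : ((m * (j + 1) : ℕ) : ZMod n) ≠ 0 := by
        intro hz
        have hd := (ZMod.natCast_eq_zero_iff _ n).mp hz
        have := Nat.le_of_dvd hmj_pos hd
        omega
      have hnat : m * (b.val / m) + m * (j + 1) = m * N + m * (a.val / m) := by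
        have he : b.val / m + (j + 1) = N + a.val / m := by omega
        calc m * (b.val / m) + m * (j + 1) = m * (b.val / m + (j + 1)) := by ring
          _ = m * (N + a.val / m) := by rw [he]
          _ = m * N + m * (a.val / m) := by ring
      have hba : b - a = -((m * (j + 1) : ℕ) : ZMod n) := by
        have hav : a = ((m * (a.val / m) + a.val % m : ℕ) : ZMod n) := by
          rw [hdma, hval_n]
        have hbv : b = ((m * (b.val / m) + b.val % m : ℕ) : ZMod n) := by
          rw [hdmb, hval_n]
        rw [hav, hbv, ← hr]
        have hcastnat : ((m * (b.val / m) : ℕ) : ZMod n) + ((m * (j + 1) : ℕ) : ZMod n)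
            = ((m * N : ℕ) : ZMod n) + ((m * (a.val / m) : ℕ) : ZMod n) := by
          rw [← Nat.cast_add, ← Nat.cast_add, hnat]
        have hmN0 : ((m * N : ℕ) : ZMod n) = 0 := by rw [← hnmN, ZMod.natCast_self]
        rw [hmN0, zero_add] at hcastnat
        push_cast at hcastnat ⊢
        linear_combination hcastnat
      have hsf : ℓP 0 (-((m * (j + 1) : ℕ) : ZMod n))
          = ℓP 0 ((m * (j + 1) : ℕ) : ZMod n) - ((m * (j + 1) : ℕ) : ZMod k) := by
        have hdec := Stmt11Aux.decomp ℓP hP.2 hw_ne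
        rw [zero_sub] at hdec
        have hv : ((((m * (j + 1) : ℕ) : ZMod n)).val : ℕ) = m * (j + 1) :=
          ZMod.val_cast_of_lt hmj_lt
        rw [hv] at hdec
        rw [hP.1 _ 0] at hdec
        exact eq_sub_of_add_eq hdec.symm
      have hck : ((m * (j + 1) : ℕ) : ZMod k) = 0 := by
        rw [ZMod.natCast_eq_zero_iff]
        exact Dvd.dvd.mul_right hkm _
      have hcw : ℓP 0 ((m * (j + 1) : ℕ) : ZMod n) = c (j + 1) := by
        simp only [hcdef]
        rw [mul_comm]
      have hdec1 := Stmt11Aux.decomp ℓP hP.2 hab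
      have hak : ((a.val : ℕ) : ZMod k) = ((a.val % m : ℕ) : ZMod k) := (castm_k a.val).symm
      rw [hdec1, hba, hsf, hck, sub_zero, hcw, hak, hrak]
      ring
    rcases Nat.lt_or_ge (a.val % m + 1) m with hcase | hcase
    · -- interior step
      obtain ⟨ea_mod, ea_div⟩ := hstep1 a hcase
      obtain ⟨eb_mod, eb_div⟩ := hstep1 b (by omega)
      rw [ea_mod, ea_div, eb_mod, eb_div, ← hr] at h2
      obtain ⟨j, hjN, htj, hxR, hyL⟩ := Stmt11Aux.flip N t hqab h1 h2
      exact hmain j hjN htj hxR hyL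
    · -- wrap-around step
      have hcase' : a.val % m + 1 = m := by omega
      obtain ⟨ea_mod, ea_div⟩ := hstep2 a hcase'
      obtain ⟨eb_mod, eb_div⟩ := hstep2 b (by omega)
      rw [ea_mod, ea_div, eb_mod, eb_div] at h2
      have hkm'' : ∀ j, j + 2 ≤ N → t j < m := fun j hj => lt_of_lt_of_le (ht_lt j hj) hkm'
      rw [← Stmt11Aux.rho_wrap N t hqb_lt hkm'', ← Stmt11Aux.rho_wrap N t hqa_lt hkm''] at h2
      have h2' : Stmt11Aux.rho N t (a.val % m + 1) (b.val / m)
          < Stmt11Aux.rho N t (a.val % m + 1) (a.val / m) := by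
        rw [hcase']; exact h2
      obtain ⟨j, hjN, htj, hxR, hyL⟩ := Stmt11Aux.flip N t hqab h1 h2'
      exact hmain j hjN htj hxR hyL
  · -- different blocks: reduce to the orientation of Q
    have hπa1 : π (a + 1) = π a + 1 := by rw [hπadd, hπone]
    have hπb1 : π (b + 1) = π b + 1 := by rw [hπadd, hπone]
    have hp1 : τQ.symm (π a) < τQ.symm (π b) := by
      rcases Stmt11Aux.lex_lt (hrho_lt _ _) (hrho_lt _ _) hab1 with h | ⟨he, _⟩
      · exact h
      · exact absurd (τQ.symm.injective (Fin.val_injective he)) hblock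
    have hp2 : τQ.symm (π b + 1) < τQ.symm (π a + 1) := by
      rw [← hπa1, ← hπb1]
      rcases Stmt11Aux.lex_lt (hrho_lt _ _) (hrho_lt _ _) hab2 with h | ⟨he, _⟩
      · exact h
      · exfalso
        apply hblock
        have h2 : π (b + 1) = π (a + 1) := τQ.symm.injective (Fin.val_injective he)
        rw [hπa1, hπb1] at h2
        exact (add_right_cancel h2).symm
    have hrevQ : Reverses τQ (π a) (π b) := ⟨hp1, hp2⟩
    have hQlab : ℓQ (π a) (π b) = -1 := hτQ _ _ hblock hrevQ
    -- the blow-up transport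
    have hT3 : ∀ x : ZMod n, π x ≠ 0 → ℓP 0 x = ℓQ 0 (π x) := by
      intro x hx0
      have hmdvd : ¬ m ∣ x.val := by
        intro hd
        exact hx0 ((ZMod.natCast_eq_zero_iff x.val m).mpr hd)
      have hx1 : 1 ≤ x.val := by
        rcases Nat.eq_zero_or_pos x.val with h | h
        · exact absurd (h ▸ dvd_zero m) hmdvd
        · exact h
      have hπx : π x = ((x.val % m : ℕ) : ZMod m) := (castm_m x.val).symm
      have hxvn : ((x.val : ℕ) : ZMod n) = x := hval_n x
      rcases le_or_gt x.val (n / 2) with hsmall | hbig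
      · have hb := hblow x.val hx1 hsmall hmdvd
        rw [hxvn] at hb
        rw [hb, ← hπx]
      · have hxn : x.val < n := ZMod.val_lt x
        set i' := n - x.val with hi'def
        have h1 : 1 ≤ i' := by omega
        have h2 : i' ≤ n / 2 := by omega
        have h3 : ¬ m ∣ i' := by
          intro hd
          apply hmdvd
          have hxv' : x.val = n - i' := by omega
          rw [hxv']
          exact Nat.dvd_sub hmn hd
        have hb := hblow i' h1 h2 h3
        have hi'n : i' < n := by omega
        have hxi : x = -((i' : ℕ) : ZMod n) := by
          rw [← hxvn]
          have hxv' : (x.val : ℕ) = n - i' := by omega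
          rw [hxv', Nat.cast_sub (by omega : i' ≤ n), ZMod.natCast_self]
          ring
        have hivn : ((i' : ℕ) : ZMod n) ≠ 0 := by
          intro hz
          have hd := (ZMod.natCast_eq_zero_iff i' n).mp hz
          have := Nat.le_of_dvd (by omega) hd
          omega
        have hivm : ((i' : ℕ) : ZMod m) ≠ 0 := by
          intro hz
          exact h3 ((ZMod.natCast_eq_zero_iff i' m).mp hz)
        have hsfP : ℓP 0 (-((i' : ℕ) : ZMod n))
            = ℓP 0 ((i' : ℕ) : ZMod n) - ((i' : ℕ) : ZMod k) := by
          have hdec := Stmt11Aux.decomp ℓP hP.2 hivn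
          rw [zero_sub] at hdec
          have hv : ((((i' : ℕ) : ZMod n)).val : ℕ) = i' := ZMod.val_cast_of_lt hi'n
          rw [hv] at hdec
          rw [hP.1 _ 0] at hdec
          exact eq_sub_of_add_eq hdec.symm
        have hsfQ : ℓQ 0 (-((i' : ℕ) : ZMod m))
            = ℓQ 0 ((i' : ℕ) : ZMod m) - ((i' : ℕ) : ZMod k) := by
          have hdec := Stmt11Aux.decomp ℓQ hQ.2 hivm
          rw [zero_sub] at hdec
          have hv : ((((i' : ℕ) : ZMod m)).val : ℕ) = i' % m := ZMod.val_natCast m i'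
          rw [hv, castm_k] at hdec
          rw [hQ.1 _ 0] at hdec
          exact eq_sub_of_add_eq hdec.symm
        have hπxi : π x = -((i' : ℕ) : ZMod m) := by
          show ((x.val : ℕ) : ZMod m) = _
          have hxv' : (x.val : ℕ) = n - i' := by omega
          rw [hxv', Nat.cast_sub (by omega : i' ≤ n), hcast_nm]
          ring
        rw [hπxi, hxi, hsfP, hsfQ, hb]
        have : ((i' % m : ℕ) : ZMod m) = ((i' : ℕ) : ZMod m) := castm_m i'
        rw [this]
    have hπsub : π (b - a) = π b - π a := by
      have h := hπadd (b - a) a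
      rw [sub_add_cancel] at h
      exact eq_sub_of_add_eq h.symm
    have hπba : π (b - a) ≠ 0 := by
      rw [hπsub]
      exact sub_ne_zero.mpr (Ne.symm hblock)
    have hd1 : ℓP a b = ℓP 0 (b - a) + ((a.val : ℕ) : ZMod k) :=
      Stmt11Aux.decomp ℓP hP.2 hab
    have hd2 : ℓQ (π a) (π b) = ℓQ 0 (π b - π a) + (((π a).val : ℕ) : ZMod k) :=
      Stmt11Aux.decomp ℓQ hQ.2 hblock
    have hvk : (((π a).val : ℕ) : ZMod k) = ((a.val : ℕ) : ZMod k) := by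
      rw [hπval, castm_k]
    have h5 : ℓQ 0 (π b - π a) = -1 - (((π a).val : ℕ) : ZMod k) := by
      rw [← hQlab, hd2]; ring
    rw [hd1, hT3 _ hπba, hπsub, h5, hvk]
    ring
end

section
/- Let k > 1 and let P be a σ_n-k-partition of K_n with defining sequence a_1, …, a_{⌊n/2⌋} such that a_1 = 0. Let i be an index with 1 ≤ i < ⌊n/2⌋ such that a_j ≠ k−1 for all 1 ≤ j ≤ i. If P admits a transitive σ_n-orientation, then a_{i+1} ≤ a_i + 1 (as integers in {0,…,k−1}). -/
section Aux

variable {n k : ℕ} {ℓ : ZMod n → ZMod n → ZMod k} {τ : Fin n ≃ ZMod n}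

lemma aux_shift (hP : IsSigmaPartition n k ℓ) (t : ℕ) :
    ∀ x y : ZMod n, x ≠ y → ℓ (x + t) (y + t) = ℓ x y + t := by
  induction t with
  | zero => intro x y _; simp
  | succ t ih =>
      intro x y hxy
      have h1 : ((t + 1 : ℕ) : ZMod n) = (t : ZMod n) + 1 := by push_cast; ring
      have h2 : ((t + 1 : ℕ) : ZMod k) = (t : ZMod k) + 1 := by push_cast; ring
      have hxt : x + t ≠ y + t := fun h => hxy (by
        have := add_right_cancel h; exact this)
      rw [h1, h2, ← add_assoc, ← add_assoc, hP.2 _ _ hxt, ih x y hxy]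
      ring

lemma aux_tot (x y : ZMod n) (hxy : x ≠ y) (h : ¬ Precedes τ x y) : Precedes τ y x := by
  have hne : τ.symm x ≠ τ.symm y := fun h' => hxy (τ.symm.injective h')
  unfold Precedes at *
  omega

end Aux

/-- Let P be a σ_n-k-partition with defining sequence starting
with a_1 = 0 and let i be an index such that a_j ≠ k-1 for all j ≤ i. If P
admits a transitive σ_n-orientation, then a_{i+1} ≤ a_i + 1 (as integers). -/
theorem stmt_12 (n k : ℕ) (hk : 1 < k)
    (ℓ : ZMod n → ZMod n → ZMod k) (hP : IsSigmaPartition n k ℓ)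
    (ha1 : ℓ 0 1 = 0)
    (i : ℕ) (hi1 : 1 ≤ i) (hi2 : i < n / 2)
    (hne : ∀ j : ℕ, 1 ≤ j → j ≤ i → (ℓ 0 ((j : ℕ) : ZMod n)).val ≠ k - 1)
    (hT : ∃ τ : Fin n ≃ ZMod n, IsTransSigmaOrientation n k ℓ τ) :
    (ℓ 0 ((i + 1 : ℕ) : ZMod n)).val ≤ (ℓ 0 ((i : ℕ) : ZMod n)).val + 1 := by
  classical
  obtain ⟨τ, hτ⟩ := hT
  have hn4 : 4 ≤ n := by omega
  haveI : NeZero n := ⟨by omega⟩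
  haveI : NeZero k := ⟨by omega⟩
  haveI : Fact (1 < n) := ⟨by omega⟩
  have hone : (1 : ZMod n) ≠ 0 := by
    intro h
    have := congrArg ZMod.val h
    rw [ZMod.val_one, ZMod.val_zero] at this
    omega
  -- nonzero casts
  have hcast0 : ∀ m : ℕ, 0 < m → m < n → ((m : ℕ) : ZMod n) ≠ 0 := by
    intro m h1 h2 h
    rw [ZMod.natCast_eq_zero_iff] at h
    exact absurd (Nat.le_of_dvd h1 h) (by omega)
  -- k ∣ n
  have hdvd : k ∣ n := by
    have h := aux_shift hP n 0 1 (Ne.symm hone)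
    rw [ZMod.natCast_self, add_zero, add_zero] at h
    have h2 : ((n : ℕ) : ZMod k) = 0 := add_eq_left.mp h.symm
    rwa [ZMod.natCast_eq_zero_iff] at h2
  set φ : ZMod n →+* ZMod k := ZMod.castHom hdvd (ZMod k) with hφdef
  have hφval : ∀ x : ZMod n, φ x = ((x.val : ℕ) : ZMod k) := by
    intro x
    rw [hφdef, ZMod.castHom_apply, ← ZMod.natCast_val]
  -- label formula
  have labf : ∀ x y : ZMod n, x ≠ y → ℓ x y = ℓ 0 (y - x) + φ x := by
    intro x y hxy
    have h0 : (0 : ZMod n) ≠ y - x := by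
      intro h
      exact hxy (sub_eq_zero.mp h.symm).symm
    have h := aux_shift hP x.val 0 (y - x) h0
    have hx : ((x.val : ℕ) : ZMod n) = x := ZMod.natCast_rightInverse x
    rw [zero_add, hx, sub_add_cancel] at h
    rw [h, hφval]
  -- the minimum vertex
  set e : ZMod n := τ ⟨0, by omega⟩ with he
  have hmin : ∀ y : ZMod n, y ≠ e → Precedes τ e y := by
    intro y hy
    have h1 : τ.symm e = ⟨0, by omega⟩ := by rw [he, Equiv.symm_apply_apply]
    have h3 : (τ.symm y).val ≠ 0 := by
      intro hv
      apply hy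
      have h4 : τ.symm y = ⟨0, by omega⟩ := Fin.ext (by simpa using hv)
      have h5 := congrArg τ h4
      rw [Equiv.apply_symm_apply] at h5
      rw [h5, he]
    unfold Precedes
    rw [h1, Fin.lt_def]
    simpa using Nat.pos_of_ne_zero h3
  -- reversal rules
  have RR : ∀ a b : ZMod n, a ≠ b → Precedes τ a b → Precedes τ (b + 1) (a + 1) →
      ℓ a b = -1 := fun a b hab h1 h2 => hτ a b hab ⟨h1, h2⟩
  -- distinctness helper
  have hNe : ∀ (x : ZMod n) (m : ℕ), 0 < m → m < n → x ≠ x + (m : ℕ) := by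
    intro x m h1 h2 h
    have : ((m : ℕ) : ZMod n) = 0 := by linear_combination -h
    exact hcast0 m h1 h2 this
  -- φ e = 0
  have hφe : φ e = 0 := by
    have hd1 : e - 1 ≠ e := by
      intro h
      have : (1 : ZMod n) = 0 := by linear_combination -h
      exact hone this
    have h1 : Precedes τ e (e - 1) := hmin _ hd1
    have h2 : Precedes τ (e - 1 + 1) (e + 1) := by
      rw [sub_add_cancel]
      exact hmin _ (by
        intro h
        have : (1 : ZMod n) = 0 := by linear_combination h
        exact hone this)
    have h3 : ℓ e (e - 1) = -1 := RR e (e - 1) (Ne.symm hd1) h1 h2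
    have h4 : ℓ (e - 1) e = ℓ 0 1 + φ (e - 1) := by
      have := labf (e - 1) e (by
        intro h
        have : (1 : ZMod n) = 0 := by linear_combination -h
        exact hone this)
      rw [this]
      congr 1
      congr 1
      ring
    rw [hP.1] at h3
    rw [h4, ha1, zero_add, map_sub, map_one] at h3
    linear_combination h3
  -- left descending chain
  have LC : ∀ c : ℕ, c + 1 ≤ k → Precedes τ (e - (c : ℕ)) (e - ((c + 1 : ℕ) : ZMod n)) := by
    intro c
    induction c with
    | zero =>
        intro _
        have h0' : e - ((0 : ℕ) : ZMod n) = e := by push_cast; ring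
        rw [h0']
        refine hmin _ ?_
        intro h
        exact hcast0 (0 + 1) (by omega) (by omega) (sub_eq_self.mp h)
    | succ c ih =>
        intro hck
        have prev := ih (by omega)
        set a : ZMod n := e - ((c + 2 : ℕ) : ZMod n) with ha
        set b : ZMod n := e - ((c + 1 : ℕ) : ZMod n) with hb
        have hab : a ≠ b := by
          intro h
          have : ((1 : ℕ) : ZMod n) = 0 := by
            rw [ha, hb] at h
            push_cast at h ⊢
            linear_combination -h
          exact hcast0 1 (by omega) (by omega) this
        by_contra hno
        have hpab : Precedes τ a b := aux_tot b a (Ne.symm hab) hno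
        have hb1 : b + 1 = e - ((c : ℕ) : ZMod n) := by rw [hb]; push_cast; ring
        have ha1' : a + 1 = e - ((c + 1 : ℕ) : ZMod n) := by rw [ha]; push_cast; ring
        have hrev : ℓ a b = -1 := by
          refine RR a b hab hpab ?_
          rw [hb1, ha1']
          exact prev
        have hlab : ℓ a b = ℓ 0 1 + (φ e - ((c + 2 : ℕ) : ZMod k)) := by
          rw [labf a b hab]
          congr 1
          · congr 1
            rw [ha, hb]; push_cast; ring
          · rw [ha, map_sub, map_natCast]
        rw [hlab, ha1, hφe, zero_add, zero_sub] at hrev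
        have : ((c + 1 : ℕ) : ZMod k) = 0 := by push_cast at hrev ⊢; linear_combination -hrev
        rw [ZMod.natCast_eq_zero_iff] at this
        have := Nat.le_of_dvd (by omega) this
        omega
  -- abbreviation
  set A : ℕ → ZMod k := fun m => ℓ 0 ((m : ℕ) : ZMod n) with hA
  -- key step lemma
  have key : ∀ d : ℕ, 1 ≤ d → d ≤ i → (A d).val + 1 ≤ d →
      Precedes τ (e + ((d - 1 - (A d).val : ℕ) : ZMod n)) (e - ((1 + (A d).val : ℕ) : ZMod n)) →
      (A (d + 1)).val ≤ (A d).val + 1 ∧ (A (d + 1)).val + 1 ≤ d + 1 ∧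
      Precedes τ (e + ((d + 1 - 1 - (A (d + 1)).val : ℕ) : ZMod n))
        (e - ((1 + (A (d + 1)).val : ℕ) : ZMod n)) := by
    intro d hd1 hdi hcb hPd
    set c : ℕ := (A d).val with hc
    have hck : c + 1 ≤ k - 1 := by
      have h1 : c ≠ k - 1 := hne d hd1 hdi
      have h2 : c < k := ZMod.val_lt _
      omega
    have hdn : d + 1 < n := by omega
    have h2 : Precedes τ (e - ((1 + c : ℕ) : ZMod n)) (e - ((1 + c + 1 : ℕ) : ZMod n)) :=
      LC (1 + c) (by omega)
    have h3 : Precedes τ (e + ((d - (1 + c) : ℕ) : ZMod n))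
        (e - ((1 + (1 + c) : ℕ) : ZMod n)) := by
      have harg1 : (d - (1 + c) : ℕ) = (d - 1 - c : ℕ) := by omega
      have harg2 : (1 + (1 + c) : ℕ) = (1 + c + 1 : ℕ) := by omega
      rw [harg1, harg2]
      exact lt_trans hPd h2
    have hex : ∃ m : ℕ, Precedes τ (e + ((d - m : ℕ) : ZMod n))
        (e - ((1 + m : ℕ) : ZMod n)) := ⟨1 + c, h3⟩
    set c' : ℕ := Nat.find hex with hc'
    have hQc' : Precedes τ (e + ((d - c' : ℕ) : ZMod n)) (e - ((1 + c' : ℕ) : ZMod n)) :=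
      Nat.find_spec hex
    have hc'le : c' ≤ 1 + c := Nat.find_min' hex h3
    have hc'd : c' ≤ d := by omega
    -- the other side: e - c' ≺ e + (d+1-c')
    have hTc' : Precedes τ (e - ((c' : ℕ) : ZMod n)) (e + ((d + 1 - c' : ℕ) : ZMod n)) := by
      have hdist : e - ((c' : ℕ) : ZMod n) ≠ e + ((d + 1 - c' : ℕ) : ZMod n) := by
        intro h
        have h' : ((d + 1 - c' + c' : ℕ) : ZMod n) = 0 := by
          push_cast at h ⊢
          linear_combination -h
        rw [Nat.sub_add_cancel (by omega)] at h'
        exact hcast0 (d + 1) (by omega) hdn h'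
      rcases Nat.eq_zero_or_pos c' with h0 | hpos
      · rw [h0]
        have h1 : e - ((0 : ℕ) : ZMod n) = e := by push_cast; ring
        rw [h1]
        refine hmin _ ?_
        rw [h0] at hdist
        rw [h1] at hdist
        exact fun h => hdist h.symm
      · have hmin' := Nat.find_min hex (m := c' - 1) (by omega)
        have harg1 : (d - (c' - 1) : ℕ) = (d + 1 - c' : ℕ) := by omega
        have harg2 : (1 + (c' - 1) : ℕ) = c' := by omega
        rw [harg1, harg2] at hmin'
        exact aux_tot _ _ (fun h => hdist h.symm) hmin'
    -- reversal of edge {e-(1+c'), e+(d-c')}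
    set x : ZMod n := e - ((1 + c' : ℕ) : ZMod n) with hx
    have hxa : x + ((d + 1 : ℕ) : ZMod n) = e + ((d - c' : ℕ) : ZMod n) := by
      rw [hx]
      have : ((d - c' : ℕ) : ZMod n) = ((d : ℕ) : ZMod n) - ((c' : ℕ) : ZMod n) := by
        rw [← Nat.cast_sub hc'd]
      rw [this]; push_cast; ring
    have hx1 : x + 1 = e - ((c' : ℕ) : ZMod n) := by rw [hx]; push_cast; ring
    have hxa1 : x + ((d + 1 : ℕ) : ZMod n) + 1 = e + ((d + 1 - c' : ℕ) : ZMod n) := by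
      rw [hx]
      have : ((d + 1 - c' : ℕ) : ZMod n) = ((d + 1 : ℕ) : ZMod n) - ((c' : ℕ) : ZMod n) := by
        rw [← Nat.cast_sub (by omega)]
      rw [this]; push_cast; ring
    have hxdist : x ≠ x + ((d + 1 : ℕ) : ZMod n) := hNe x (d + 1) (by omega) hdn
    have hrev : ℓ (x + ((d + 1 : ℕ) : ZMod n)) x = -1 := by
      refine RR _ _ (Ne.symm hxdist) ?_ ?_
      · rw [hxa]; exact hQc'
      · rw [hx1, hxa1]; exact hTc'
    have hlab : ℓ x (x + ((d + 1 : ℕ) : ZMod n)) = A (d + 1) + (φ e - ((1 + c' : ℕ) : ZMod k)) := by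
      rw [labf x _ hxdist]
      congr 1
      · rw [hA]
        congr 2
        ring
      · rw [hx, map_sub, map_natCast]
    rw [hP.1] at hrev
    rw [hlab, hφe, zero_sub] at hrev
    have hAd1 : A (d + 1) = ((c' : ℕ) : ZMod k) := by
      push_cast at hrev ⊢
      linear_combination hrev
    have hval : (A (d + 1)).val = c' := by
      rw [hAd1, ZMod.val_cast_of_lt (by omega)]
    refine ⟨by omega, by omega, ?_⟩
    rw [hval]
    have harg : (d + 1 - 1 - c' : ℕ) = (d - c' : ℕ) := by omega
    rw [harg]
    exact hQc'
  -- main induction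
  have main : ∀ d : ℕ, 1 ≤ d → d ≤ i → (A d).val + 1 ≤ d ∧
      Precedes τ (e + ((d - 1 - (A d).val : ℕ) : ZMod n)) (e - ((1 + (A d).val : ℕ) : ZMod n)) := by
    intro d
    induction d with
    | zero => omega
    | succ m ih =>
        intro _ hmi
        rcases Nat.eq_zero_or_pos m with h0 | hpos
        · subst h0
          have hA1 : A (0 + 1) = 0 := by
            show ℓ 0 ((0 + 1 : ℕ) : ZMod n) = 0
            norm_num
            exact ha1
          have hv : (A (0 + 1)).val = 0 := by rw [hA1, ZMod.val_zero]
          constructor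
          · omega
          · rw [hv]
            have h1 : e + ((0 + 1 - 1 - 0 : ℕ) : ZMod n) = e := by norm_num
            have h2 : e - ((1 + 0 : ℕ) : ZMod n) = e - 1 := by norm_num
            rw [h1, h2]
            refine hmin _ ?_
            intro h
            exact hone (sub_eq_self.mp h)
        · obtain ⟨hcb, hPd⟩ := ih hpos (by omega)
          obtain ⟨_, h2, h3⟩ := key m hpos (by omega) hcb hPd
          exact ⟨h2, h3⟩
  obtain ⟨hcb, hPd⟩ := main i hi1 le_rfl
  exact (key i hi1 le_rfl hcb hPd).1
end

section
/- Let k > 1. If a σ_n-k-partition of K_n admits a transitive σ_n-orientation, then its defining sequence does not jump at any index i with 1 ≤ i ≤ k. -/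
private lemma zmod_natCast_ne {k a b : ℕ} (hlt : a < b) (hk : b - a < k) :
    ((a : ℕ) : ZMod k) ≠ ((b : ℕ) : ZMod k) := by
  intro h
  have h2 : ((b - a : ℕ) : ZMod k) = 0 := by
    rw [Nat.cast_sub hlt.le, ← h, sub_self]
  rw [ZMod.natCast_eq_zero_iff] at h2
  have := Nat.le_of_dvd (by omega) h2
  omega

private lemma zmod_natCast_ne' {k a b : ℕ} (h1 : a ≠ b) (h2 : a < b → b - a < k)
    (h3 : b < a → a - b < k) : ((a : ℕ) : ZMod k) ≠ ((b : ℕ) : ZMod k) := by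
  rcases Nat.lt_or_ge a b with h | h
  · exact zmod_natCast_ne h (h2 h)
  · have hba : b < a := by omega
    exact (zmod_natCast_ne hba (h3 hba)).symm

/-- If a σ_n-k-partition admits a transitive σ_n-orientation,
then its defining sequence does not jump at any index i with 1 ≤ i ≤ k. -/
theorem stmt_15 (n k : ℕ) (hk : 1 < k)
    (ℓ : ZMod n → ZMod n → ZMod k) (hP : IsSigmaPartition n k ℓ)
    (hT : ∃ τ : Fin n ≃ ZMod n, IsTransSigmaOrientation n k ℓ τ) :
    ∀ i : ℕ, 1 ≤ i → i ≤ k → i < n / 2 → ¬ Jumps n k ℓ i := by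
  obtain ⟨hsym, hshift⟩ := hP
  obtain ⟨τ, hτ⟩ := hT
  intro i hi1 hik hin hJ
  obtain ⟨hH, hS⟩ := hJ
  simp only [Halts] at hH
  simp only [Steps] at hS
  have hn : 2 * i + 2 ≤ n := by omega
  haveI : NeZero n := ⟨by omega⟩
  have hdn : ∀ d : ℕ, 0 < d → d < n → ((d : ℕ) : ZMod n) ≠ 0 := by
    intro d h1 h2 h
    rw [ZMod.natCast_eq_zero_iff] at h
    exact absurd (Nat.le_of_dvd h1 h) (by omega)
  have h1n : ((1 : ℕ) : ZMod n) ≠ 0 := hdn 1 (by omega) (by omega)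
  have hinn : ((i : ℕ) : ZMod n) ≠ 0 := hdn i (by omega) (by omega)
  have hi1n : ((i + 1 : ℕ) : ZMod n) ≠ 0 := hdn (i + 1) (by omega) (by omega)
  -- shift lemma
  have Sh : ∀ (t : ZMod n) (d : ℕ), ((d : ℕ) : ZMod n) ≠ 0 →
      ∀ c : ℕ, ℓ (t + (c : ℕ)) (t + (c : ℕ) + (d : ℕ)) =
        ℓ t (t + (d : ℕ)) + ((c : ℕ) : ZMod k) := by
    intro t d hd c
    induction c with
    | zero => simp
    | succ c ih =>
      have hne : t + (c : ℕ) ≠ t + (c : ℕ) + (d : ℕ) :=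
        fun h => hd (left_eq_add.mp h)
      have key := hshift (t + (c : ℕ)) (t + (c : ℕ) + (d : ℕ)) hne
      have e1 : t + ((c + 1 : ℕ) : ZMod n) = (t + (c : ℕ)) + 1 := by push_cast; ring
      have e2 : t + (c : ℕ) + 1 + ((d : ℕ) : ZMod n) = (t + (c : ℕ) + (d : ℕ)) + 1 := by
        ring
      rw [e1, e2, key, ih]
      push_cast
      ring
  -- minimum vertex
  obtain ⟨m, hmin⟩ : ∃ m : ZMod n, ∀ v : ZMod n, v ≠ m → τ.symm m < τ.symm v := by
    refine ⟨τ ⟨0, by omega⟩, fun v hv => ?_⟩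
    rw [Equiv.symm_apply_apply]
    have h0 : (τ.symm v).val ≠ 0 := fun h => hv (by
      have h2 : τ.symm v = ⟨0, by omega⟩ := Fin.ext h
      rw [← τ.apply_symm_apply v, h2])
    exact Fin.lt_def.mpr (Nat.pos_of_ne_zero h0)
  have keyfalse : ∀ v : ZMod n, v ≠ m → ¬ τ.symm v < τ.symm m :=
    fun v hv => not_lt.mpr (hmin v hv).le
  set u : ZMod n := m - ((i + 1 : ℕ) : ZMod n) with hu
  -- flip lemma
  have flip : ∀ (d : ℕ), ((d : ℕ) : ZMod n) ≠ 0 → ∀ t : ZMod n,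
      ℓ t (t + (d : ℕ)) ≠ -1 →
      (τ.symm t < τ.symm (t + (d : ℕ)) ↔
        τ.symm (t + 1) < τ.symm (t + (d : ℕ) + 1)) := by
    intro d hd t hl
    have hne : t ≠ t + (d : ℕ) := fun h => hd (left_eq_add.mp h)
    have hne1 : t + 1 ≠ t + (d : ℕ) + 1 := fun h => hne (add_right_cancel h)
    by_contra hiff
    apply hl
    rcases lt_trichotomy (τ.symm t) (τ.symm (t + (d : ℕ))) with h | h | h
    · have h2 : ¬ τ.symm (t + 1) < τ.symm (t + (d : ℕ) + 1) :=
        fun hg => hiff ⟨fun _ => hg, fun _ => h⟩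
      have h3 : τ.symm (t + (d : ℕ) + 1) < τ.symm (t + 1) :=
        lt_of_le_of_ne (not_lt.mp h2) (fun he => hne1 ((τ.symm.injective he).symm))
      exact hτ t (t + (d : ℕ)) hne ⟨h, h3⟩
    · exact absurd (τ.symm.injective h) hne
    · have h2 : τ.symm (t + 1) < τ.symm (t + (d : ℕ) + 1) := by
        by_contra hb
        exact hiff ⟨fun a => absurd a (asymm h), fun b => absurd b hb⟩
      rw [hsym]
      exact hτ (t + (d : ℕ)) t (Ne.symm hne) ⟨h, h2⟩
  -- chain lemma
  have chain : ∀ (d : ℕ), ((d : ℕ) : ZMod n) ≠ 0 → ∀ (c₁ c₂ : ℕ), c₁ ≤ c₂ →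
      (∀ c : ℕ, c₁ ≤ c → c < c₂ → ℓ u (u + (d : ℕ)) + ((c : ℕ) : ZMod k) ≠ -1) →
      (τ.symm (u + (c₁ : ℕ)) < τ.symm (u + (c₁ : ℕ) + (d : ℕ)) ↔
       τ.symm (u + (c₂ : ℕ)) < τ.symm (u + (c₂ : ℕ) + (d : ℕ))) := by
    intro d hd c₁ c₂ hle hall
    induction c₂, hle using Nat.le_induction with
    | base => exact Iff.rfl
    | succ c₂ hc ih =>
      have ih' := ih (fun c hA hB => hall c hA (by omega))
      have hlab : ℓ (u + (c₂ : ℕ)) (u + (c₂ : ℕ) + (d : ℕ)) ≠ -1 := by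
        rw [Sh u d hd c₂]
        exact hall c₂ hc (by omega)
      have hstep := flip d hd (u + (c₂ : ℕ)) hlab
      have e1 : u + ((c₂ + 1 : ℕ) : ZMod n) = (u + (c₂ : ℕ)) + 1 := by push_cast; ring
      rw [e1]
      have e2 : u + (c₂ : ℕ) + 1 + ((d : ℕ) : ZMod n) = u + (c₂ : ℕ) + (d : ℕ) + 1 := by
        ring
      rw [e2]
      exact ih'.trans hstep
  -- endpoint facts
  have hum : u + ((i + 1 : ℕ) : ZMod n) = m := by rw [hu]; ring
  have hne_um : ∀ c : ℕ, c < i + 1 → u + (c : ℕ) ≠ m := by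
    intro c hc h
    apply hdn (i + 1 - c) (by omega) (by omega)
    rw [hu] at h
    have hcast : ((i + 1 - c : ℕ) : ZMod n) = ((i + 1 : ℕ) : ZMod n) - ((c : ℕ) : ZMod n) := by
      push_cast [Nat.cast_sub (by omega : c ≤ i + 1)]
      ring
    rw [hcast]
    linear_combination -h
  have hne_m : ∀ x : ℕ, 0 < x → x < n → m + (x : ℕ) ≠ m := by
    intro x h1 h2 h
    exact hdn x h1 h2 (add_eq_left.mp h)
  have F1 : ¬ τ.symm (u + ((1 : ℕ) : ZMod n)) <
      τ.symm (u + ((1 : ℕ) : ZMod n) + ((i : ℕ) : ZMod n)) := by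
    have e : u + ((1 : ℕ) : ZMod n) + ((i : ℕ) : ZMod n) = m := by
      rw [hu]; push_cast; ring
    rw [e]
    exact keyfalse _ (hne_um 1 (by omega))
  have F2 : τ.symm (u + ((i + 1 : ℕ) : ZMod n)) <
      τ.symm (u + ((i + 1 : ℕ) : ZMod n) + ((i : ℕ) : ZMod n)) := by
    rw [hum]
    exact hmin _ (hne_m i (by omega) (by omega))
  have e0 : u + ((0 : ℕ) : ZMod n) = u := by push_cast; ring
  have F3 : ¬ τ.symm (u + ((0 : ℕ) : ZMod n)) <
      τ.symm (u + ((0 : ℕ) : ZMod n) + ((i + 1 : ℕ) : ZMod n)) := by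
    rw [e0, hum]
    have hu0 : u ≠ m := by
      have := hne_um 0 (by omega)
      rwa [e0] at this
    exact keyfalse _ hu0
  have F4 : τ.symm (u + ((i + 1 : ℕ) : ZMod n)) <
      τ.symm (u + ((i + 1 : ℕ) : ZMod n) + ((i + 1 : ℕ) : ZMod n)) := by
    rw [hum]
    exact hmin _ (hne_m (i + 1) (by omega) (by omega))
  have F5 : ¬ τ.symm (u + ((i : ℕ) : ZMod n)) <
      τ.symm (u + ((i : ℕ) : ZMod n) + ((1 : ℕ) : ZMod n)) := by
    have e : u + ((i : ℕ) : ZMod n) + ((1 : ℕ) : ZMod n) = m := by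
      rw [hu]; push_cast; ring
    rw [e]
    exact keyfalse _ (hne_um i (by omega))
  have F6 : τ.symm (u + ((i + 1 : ℕ) : ZMod n)) <
      τ.symm (u + ((i + 1 : ℕ) : ZMod n) + ((1 : ℕ) : ZMod n)) := by
    rw [hum]
    exact hmin _ (hne_m 1 (by omega) (by omega))
  -- base labels
  obtain ⟨cu, hcu⟩ := ZMod.natCast_zmod_surjective (n := n) u
  have hlink : ∀ d : ℕ, ((d : ℕ) : ZMod n) ≠ 0 →
      ℓ u (u + (d : ℕ)) = ℓ 0 ((d : ℕ) : ZMod n) + ((cu : ℕ) : ZMod k) := by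
    intro d hd
    have h := Sh 0 d hd cu
    simp only [zero_add] at h
    rw [hcu] at h
    exact h
  have hL1 : ℓ u (u + ((1 : ℕ) : ZMod n)) + ((i : ℕ) : ZMod k) = -1 := by
    by_contra hc
    have hch := chain 1 h1n i (i + 1) (by omega) (fun c hA hB => by
      have hc' : c = i := by omega
      rw [hc']
      exact hc)
    exact F5 (hch.mpr F6)
  have hex : ∃ c : ℕ, 1 ≤ c ∧ c ≤ i ∧
      ℓ u (u + ((i : ℕ) : ZMod n)) + ((c : ℕ) : ZMod k) = -1 := by
    by_contra hno
    push_neg at hno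
    have hch := chain i hinn 1 (i + 1) (by omega) (fun c hA hB => hno c hA (by omega))
    exact F1 (hch.mpr F2)
  obtain ⟨c₀, hcA, hcB, hc₀⟩ := hex
  obtain ⟨c₁, rfl⟩ : ∃ c₁, c₀ = c₁ + 1 := ⟨c₀ - 1, by omega⟩
  -- step conditions
  have condI : ∀ c : ℕ, 1 ≤ c → c ≤ k → c ≠ c₁ + 1 →
      ℓ u (u + ((i : ℕ) : ZMod n)) + ((c : ℕ) : ZMod k) ≠ -1 := by
    intro c h1 h2 h3 h
    have heq : ((c : ℕ) : ZMod k) = ((c₁ + 1 : ℕ) : ZMod k) := by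
      linear_combination h - hc₀
    exact zmod_natCast_ne' h3 (fun hlt => by omega) (fun hlt => by omega) heq
  have cond1 : ∀ c : ℕ, c ≠ i → (c < i → i - c < k) → (i < c → c - i < k) →
      ℓ u (u + ((1 : ℕ) : ZMod n)) + ((c : ℕ) : ZMod k) ≠ -1 := by
    intro c h1 h2 h3 h
    have heq : ((c : ℕ) : ZMod k) = ((i : ℕ) : ZMod k) := by
      linear_combination h - hL1
    exact zmod_natCast_ne' h1 h2 h3 heq
  have condJ : ∀ c : ℕ, c₁ ≤ c → c < c₁ + 2 →
      ℓ u (u + ((i + 1 : ℕ) : ZMod n)) + ((c : ℕ) : ZMod k) ≠ -1 := by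
    intro c hA hB h
    have hli := hlink i hinn
    have hlj := hlink (i + 1) hi1n
    rcases (by omega : c = c₁ ∨ c = c₁ + 1) with rfl | rfl
    · apply hS
      push_cast at h hc₀ hli hlj ⊢
      linear_combination -hlj + hli + h - hc₀
    · apply hH
      push_cast at h hc₀ hli hlj ⊢
      linear_combination -hlj + hli + h - hc₀
  -- Part 1
  have P1 : τ.symm (u + ((c₁ + 2 : ℕ) : ZMod n)) <
      τ.symm (u + ((c₁ + 2 : ℕ) : ZMod n) + ((i + 1 : ℕ) : ZMod n)) := by
    rcases Nat.lt_or_ge (c₁ + 1) i with hlt | hge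
    · have hGi : τ.symm (u + ((c₁ + 2 : ℕ) : ZMod n)) <
          τ.symm (u + ((c₁ + 2 : ℕ) : ZMod n) + ((i : ℕ) : ZMod n)) := by
        have hch := chain i hinn (c₁ + 2) (i + 1) (by omega)
          (fun c hA hB => condI c (by omega) (by omega) (by omega))
        exact hch.mpr F2
      have hG1 : τ.symm (u + ((c₁ + 2 + i : ℕ) : ZMod n)) <
          τ.symm (u + ((c₁ + 2 + i : ℕ) : ZMod n) + ((1 : ℕ) : ZMod n)) := by
        have hch := chain 1 h1n (i + 1) (c₁ + 2 + i) (by omega)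
          (fun c hA hB => cond1 c (by omega) (by omega) (by omega))
        exact hch.mp F6
      have e1 : u + ((c₁ + 2 : ℕ) : ZMod n) + ((i : ℕ) : ZMod n) =
          u + ((c₁ + 2 + i : ℕ) : ZMod n) := by push_cast; ring
      have e2 : u + ((c₁ + 2 + i : ℕ) : ZMod n) + ((1 : ℕ) : ZMod n) =
          u + ((c₁ + 2 : ℕ) : ZMod n) + ((i + 1 : ℕ) : ZMod n) := by push_cast; ring
      rw [e1] at hGi
      rw [e2] at hG1
      exact hGi.trans hG1
    · have he : c₁ + 2 = i + 1 := by omega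
      rw [he]
      exact F4
  -- Part 2
  have P2 : ¬ τ.symm (u + ((c₁ : ℕ) : ZMod n)) <
      τ.symm (u + ((c₁ : ℕ) : ZMod n) + ((i + 1 : ℕ) : ZMod n)) := by
    rcases Nat.eq_zero_or_pos c₁ with rfl | hpos
    · exact F3
    · have hGi : ¬ τ.symm (u + ((c₁ + 1 : ℕ) : ZMod n)) <
          τ.symm (u + ((c₁ + 1 : ℕ) : ZMod n) + ((i : ℕ) : ZMod n)) := by
        have hch := chain i hinn 1 (c₁ + 1) (by omega)
          (fun c hA hB => condI c (by omega) (by omega) (by omega))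
        intro hcon
        exact F1 (hch.mpr hcon)
      have hG1 : ¬ τ.symm (u + ((c₁ : ℕ) : ZMod n)) <
          τ.symm (u + ((c₁ : ℕ) : ZMod n) + ((1 : ℕ) : ZMod n)) := by
        have hch := chain 1 h1n c₁ i (by omega)
          (fun c hA hB => cond1 c (by omega) (by omega) (by omega))
        intro hcon
        exact F5 (hch.mp hcon)
      intro hcon
      have h1 : τ.symm (u + ((c₁ + 1 : ℕ) : ZMod n)) ≤ τ.symm (u + ((c₁ : ℕ) : ZMod n)) := by
        have hle := not_lt.mp hG1
        have e : u + ((c₁ : ℕ) : ZMod n) + ((1 : ℕ) : ZMod n) =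
            u + ((c₁ + 1 : ℕ) : ZMod n) := by push_cast; ring
        rwa [e] at hle
      have h2 : τ.symm (u + ((c₁ + 1 : ℕ) : ZMod n) + ((i : ℕ) : ZMod n)) ≤
          τ.symm (u + ((c₁ + 1 : ℕ) : ZMod n)) := not_lt.mp hGi
      have e2 : u + ((c₁ : ℕ) : ZMod n) + ((i + 1 : ℕ) : ZMod n) =
          u + ((c₁ + 1 : ℕ) : ZMod n) + ((i : ℕ) : ZMod n) := by push_cast; ring
      rw [e2] at hcon
      exact absurd hcon (not_lt.mpr (h2.trans h1))
  -- bridge and contradiction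
  have hbr := chain (i + 1) hi1n c₁ (c₁ + 2) (by omega) condJ
  exact P2 (hbr.mpr P1)
end

section
/- Let G be a finite simple graph on a vertex set V that is isomorphic to its complement, and let f : V → V be a fixed isomorphism from G to its complement. Then there exists a strict linear order < on V such that for all vertices a, b adjacent in G: a < b if and only if f(a) < f(b). (Equivalently, orienting every edge of K_V toward its larger endpoint under < yields a transitive tournament in which f is an isomorphism from the induced orientation of G to the induced orientation of the complement of G.) -/
namespace Stmt16
set_option linter.unusedSectionVars false
set_option maxHeartbeats 1000000

/-! ### Integer mod helpers -/

lemma emod_bounds {n : ℤ} (hn : 0 < n) (y : ℤ) : 0 ≤ y % n ∧ y % n < n :=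
  ⟨Int.emod_nonneg y (by omega), Int.emod_lt_of_pos y hn⟩

lemma emod_eq_of_modEq {n a v : ℤ} (h : a ≡ v [ZMOD n]) (h0 : 0 ≤ v) (h1 : v < n) :
    a % n = v := by
  have : v % n = v := Int.emod_eq_of_lt h0 h1
  unfold Int.ModEq at h; omega

lemma self_modEq_emod {n a : ℤ} : a ≡ a % n [ZMOD n] := by
  unfold Int.ModEq
  exact (Int.emod_emod_of_dvd a dvd_rfl).symm

/-! ### The tournament layer -/

/-- `Wd n h X i d` means: position `i` is "below" position `i+d` (gap `d ∈ [1,h]`). -/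
def Wd (n h : ℤ) (X : ℤ → ℤ) (i d : ℤ) : Prop := (i - X d - 1) % n < h

/-- The tournament/strict order on residues mod `n`. -/
def Td (n h : ℤ) (X : ℤ → ℤ) (i j : ℤ) : Prop :=
  (j - i) % n ≠ 0 ∧ ((j - i) % n ≤ h → Wd n h X i ((j - i) % n)) ∧
    (h < (j - i) % n → ¬ Wd n h X j (n - (j - i) % n))

section Tournament
variable {n h : ℤ} {X : ℤ → ℤ}
variable (hh : 1 ≤ h) (hn : n = 2 * h)
variable (hX : ∀ d : ℤ, 1 ≤ d → X (d + 1) = X d ∨ X (d + 1) = X d - 1)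

include hX in
lemma Xmono_nat {d : ℤ} (h1 : 1 ≤ d) : ∀ k : ℕ, X (d + k) ≤ X d ∧ X d ≤ X (d + k) + k := by
  intro k
  induction k with
  | zero => simp
  | succ m ih =>
    have hstep := hX (d + m) (by push_cast; omega)
    have hcast : (d + ((m : ℕ) + 1 : ℕ) : ℤ) = (d + (m : ℕ)) + 1 := by push_cast; ring
    rw [hcast]
    rcases hstep with hc | hc <;> push_cast at * <;> omega

include hX in
lemma Xmono {d d' : ℤ} (h1 : 1 ≤ d) (hdd : d ≤ d') :
    X d' ≤ X d ∧ X d ≤ X d' + (d' - d) := by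
  obtain ⟨k, hk⟩ : ∃ k : ℕ, d' = d + k := ⟨(d' - d).toNat, by omega⟩
  subst hk
  have := Xmono_nat hX h1 k
  push_cast at *
  omega

include hh hn in
lemma Wcongr {i i' : ℤ} (d : ℤ) (hmod : i ≡ i' [ZMOD n]) :
    Wd n h X i d ↔ Wd n h X i' d := by
  unfold Wd
  have : (i - X d - 1) % n = (i' - X d - 1) % n := hmod.sub_right _ |>.sub_right _
  rw [this]

include hh hn in
/-- Flipping across half: `W i d ↔ ¬ W (i+h) d`. -/
lemma Wd_half (i d : ℤ) : Wd n h X i d ↔ ¬ Wd n h X (i + h) d := by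
  have hn0 : 0 < n := by omega
  unfold Wd
  set y := i - X d - 1 with hy
  have h2 : i + h - X d - 1 = y + h := by omega
  rw [h2]
  obtain ⟨hA0, hA1⟩ := emod_bounds hn0 y
  set A := y % n with hA
  by_cases hc : A < h
  · have : (y + h) % n = A + h := by
      refine emod_eq_of_modEq ?_ (by omega) (by omega)
      exact (self_modEq_emod (n := n) (a := y)).add_right _
    omega
  · have : (y + h) % n = A - h := by
      refine emod_eq_of_modEq ?_ (by omega) (by omega)
      refine ((self_modEq_emod (n := n) (a := y)).add_right _).trans ?_
      exact Int.modEq_iff_dvd.mpr ⟨-1, by omega⟩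
    omega

include hh hn hX in
/-- Positive transitivity (L2). -/
lemma Wd_trans {i d1 d2 : ℤ} (hd1 : 1 ≤ d1) (hd2 : 1 ≤ d2) (hsum : d1 + d2 ≤ h)
    (w1 : Wd n h X i d1) (w2 : Wd n h X (i + d1) d2) : Wd n h X i (d1 + d2) := by
  have hn0 : 0 < n := by omega
  unfold Wd at *
  obtain ⟨hA0, hA1⟩ := emod_bounds hn0 (i - X d1 - 1)
  set A1 := (i - X d1 - 1) % n with hA1def
  obtain ⟨hB0, hB1⟩ := emod_bounds hn0 (i + d1 - X d2 - 1)
  set A2 := (i + d1 - X d2 - 1) % n with hA2def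
  have m1 := Xmono hX hd1 (show d1 ≤ d1 + d2 by omega)
  have m2 := Xmono hX hd2 (show d2 ≤ d1 + d2 by omega)
  have m12 : X d1 - X d2 ≤ max d1 d2 - d1 ∧ d2 - max d1 d2 ≤ X d1 - X d2 := by
    rcases le_total d1 d2 with hc | hc
    · have := Xmono hX hd1 hc; simp [max_eq_right hc]; omega
    · have := Xmono hX hd2 hc; simp [max_eq_left hc]; omega
  by_cases hcase : A1 + (X d1 - X (d1 + d2)) < h
  · -- no wrap: target value is A1 + δ1
    have : (i - X (d1 + d2) - 1) % n = A1 + (X d1 - X (d1 + d2)) := by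
      refine emod_eq_of_modEq ?_ (by omega) (by omega)
      calc i - X (d1 + d2) - 1 = (i - X d1 - 1) + (X d1 - X (d1 + d2)) := by ring
        _ ≡ A1 + (X d1 - X (d1 + d2)) [ZMOD n] :=
          (self_modEq_emod (n := n)).add_right _
    omega
  · -- contradiction with w2
    exfalso
    have hmax : max d1 d2 ≤ d1 + d2 - 1 := by
      rcases le_total d1 d2 with hc | hc <;> simp [max_eq_right, max_eq_left, hc] <;> omega
    have : A2 = A1 + (d1 + X d1 - X d2) := by
      refine emod_eq_of_modEq ?_ (by omega) (by omega)
      calc i + d1 - X d2 - 1 = (i - X d1 - 1) + (d1 + X d1 - X d2) := by ring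
        _ ≡ A1 + (d1 + X d1 - X d2) [ZMOD n] := (self_modEq_emod (n := n)).add_right _
    omega

include hh hn hX in
/-- No all-forward 3-cycle (L1). -/
lemma Wd_no3 {i d1 d2 d3 : ℤ} (hd1 : 1 ≤ d1) (hd2 : 1 ≤ d2) (hd3 : 1 ≤ d3)
    (h1 : d1 ≤ h) (h2 : d2 ≤ h) (h3 : d3 ≤ h) (hsum : d1 + d2 + d3 = n)
    (w1 : Wd n h X i d1) (w2 : Wd n h X (i + d1) d2) (w3 : Wd n h X (i + d1 + d2) d3) :
    False := by
  have hn0 : 0 < n := by omega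
  unfold Wd at *
  obtain ⟨hA0, hA1⟩ := emod_bounds hn0 (i - X d1 - 1)
  set A1 := (i - X d1 - 1) % n with hA1def
  obtain ⟨hB0, hB1⟩ := emod_bounds hn0 (i + d1 - X d2 - 1)
  set A2 := (i + d1 - X d2 - 1) % n with hA2def
  obtain ⟨hC0, hC1⟩ := emod_bounds hn0 (i + d1 + d2 - X d3 - 1)
  set A3 := (i + d1 + d2 - X d3 - 1) % n with hA3def
  have t12 : d2 - max d1 d2 ≤ X d1 - X d2 ∧ X d1 - X d2 ≤ max d1 d2 - d1 := by
    rcases le_total d1 d2 with hc | hc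
    · have := Xmono hX hd1 hc; simp [max_eq_right hc]; omega
    · have := Xmono hX hd2 hc; simp [max_eq_left hc]; omega
  have t23 : d3 - max d2 d3 ≤ X d2 - X d3 ∧ X d2 - X d3 ≤ max d2 d3 - d2 := by
    rcases le_total d2 d3 with hc | hc
    · have := Xmono hX hd2 hc; simp [max_eq_right hc]; omega
    · have := Xmono hX hd3 hc; simp [max_eq_left hc]; omega
  have t31 : d1 - max d3 d1 ≤ X d3 - X d1 ∧ X d3 - X d1 ≤ max d3 d1 - d3 := by
    rcases le_total d3 d1 with hc | hc
    · have := Xmono hX hd3 hc; simp [max_eq_right hc]; omega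
    · have := Xmono hX hd1 hc; simp [max_eq_left hc]; omega
  have hmax12 : max d1 d2 ≤ h := max_le h1 h2
  have hmax23 : max d2 d3 ≤ h := max_le h2 h3
  have hmax31 : max d3 d1 ≤ h := max_le h3 h1
  have e2 : A2 = A1 + (d1 + X d1 - X d2) := by
    refine emod_eq_of_modEq ?_ (by omega) (by omega)
    calc i + d1 - X d2 - 1 = (i - X d1 - 1) + (d1 + X d1 - X d2) := by ring
      _ ≡ A1 + (d1 + X d1 - X d2) [ZMOD n] := (self_modEq_emod (n := n)).add_right _
  have e3 : A3 = A2 + (d2 + X d2 - X d3) := by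
    refine emod_eq_of_modEq ?_ (by omega) (by omega)
    calc i + d1 + d2 - X d3 - 1 = (i + d1 - X d2 - 1) + (d2 + X d2 - X d3) := by ring
      _ ≡ A2 + (d2 + X d2 - X d3) [ZMOD n] := (self_modEq_emod (n := n)).add_right _
  have e1 : A1 = A3 + (d3 + X d3 - X d1) := by
    refine emod_eq_of_modEq ?_ (by omega) (by omega)
    calc i - X d1 - 1 = (i + d1 + d2 - X d3 - 1) + (d3 + X d3 - X d1) - n := by omega
      _ ≡ (i + d1 + d2 - X d3 - 1) + (d3 + X d3 - X d1) [ZMOD n] :=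
        Int.modEq_iff_dvd.mpr ⟨1, by omega⟩
      _ ≡ A3 + (d3 + X d3 - X d1) [ZMOD n] := (self_modEq_emod (n := n)).add_right _
  omega

include hh hn in
lemma gap_compl {i j : ℤ} (hne : (j - i) % n ≠ 0) : (i - j) % n = n - (j - i) % n := by
  have hn0 : 0 < n := by omega
  obtain ⟨h0, h1⟩ := emod_bounds hn0 (j - i)
  refine emod_eq_of_modEq ?_ (by omega) (by omega)
  have h2 : (j - i) ≡ (j - i) % n [ZMOD n] := self_modEq_emod
  have h3 : (i - j) ≡ -((j - i) % n) [ZMOD n] := by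
    have h4 := h2.neg
    simpa using h4
  exact h3.trans (Int.modEq_iff_dvd.mpr ⟨1, by ring⟩)

include hh hn in
lemma modEq_of_gap {i j : ℤ} : j ≡ i + (j - i) % n [ZMOD n] := by
  have h2 : (j - i) ≡ (j - i) % n [ZMOD n] := self_modEq_emod
  have := h2.add_right i
  simpa [add_comm, sub_add_cancel] using this

include hh hn in
lemma Td_antisymm {i j : ℤ} (hne : (j - i) % n ≠ 0) :
    ¬ (Td n h X i j ∧ Td n h X j i) := by
  have hn0 : 0 < n := by omega
  obtain ⟨h0, h1⟩ := emod_bounds hn0 (j - i)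
  have hcompl := gap_compl hh hn hne
  rintro ⟨⟨-, hij1, hij2⟩, ⟨-, hji1, hji2⟩⟩
  rw [hcompl] at hji1 hji2
  rcases lt_trichotomy ((j - i) % n) h with hc | hc | hc
  · have := hji2 (by omega)
    rw [show n - (n - (j - i) % n) = (j - i) % n from by ring] at this
    exact this (hij1 (by omega))
  · have hw1 := hij1 (by omega)
    have hw2 := hji1 (by omega)
    rw [hc] at hw1
    rw [show n - (j - i) % n = h from by omega] at hw2
    have hcong : Wd n h X j h ↔ Wd n h X (i + h) h := by
      refine Wcongr hh hn _ ?_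
      have h3 := modEq_of_gap hh hn (i := i) (j := j)
      rwa [hc] at h3
    exact (Wd_half hh hn i h).mp hw1 (hcong.mp hw2)
  · exact (hij2 hc) (hji1 (by omega))

include hh hn in
lemma Td_total {i j : ℤ} (hne : (j - i) % n ≠ 0) :
    Td n h X i j ∨ Td n h X j i := by
  have hn0 : 0 < n := by omega
  obtain ⟨h0, h1⟩ := emod_bounds hn0 (j - i)
  have hcompl := gap_compl hh hn hne
  have hne' : (i - j) % n ≠ 0 := by omega
  rcases lt_trichotomy ((j - i) % n) h with hc | hc | hc
  · by_cases hw : Wd n h X i ((j - i) % n)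
    · exact Or.inl ⟨hne, fun _ => hw, fun hlt => absurd hlt (by omega)⟩
    · refine Or.inr ⟨hne', fun hle => absurd hle (by omega), fun _ => ?_⟩
      rw [hcompl, show n - (n - (j - i) % n) = (j - i) % n from by ring]
      exact hw
  · have hcong : Wd n h X j h ↔ Wd n h X (i + h) h := by
      refine Wcongr hh hn _ ?_
      have h3 := modEq_of_gap hh hn (i := i) (j := j)
      rwa [hc] at h3
    by_cases hw : Wd n h X i ((j - i) % n)
    · exact Or.inl ⟨hne, fun _ => hw, fun hlt => absurd hlt (by omega)⟩
    · refine Or.inr ⟨hne', fun _ => ?_, fun hlt => absurd hlt (by omega)⟩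
      rw [hcompl, show n - (j - i) % n = h from by omega]
      rw [hc] at hw
      have hhalf := Wd_half hh hn (X := X) i h
      exact hcong.mpr (by tauto)
  · by_cases hw : Wd n h X j (n - (j - i) % n)
    · refine Or.inr ⟨hne', fun _ => ?_, fun hlt => absurd hlt (by omega)⟩
      rw [hcompl]; exact hw
    · exact Or.inl ⟨hne, fun hle => absurd hle (by omega), fun _ => hw⟩

include hh hn in
lemma Wd_noflip (hh2 : h % 2 = 0) {i d : ℤ} (hpar : (i - X d) % 2 = 1) :
    Wd n h X i d ↔ Wd n h X (i + 1) d := by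
  have hn0 : 0 < n := by omega
  unfold Wd
  obtain ⟨hA0, hA1⟩ := emod_bounds hn0 (i - X d - 1)
  set A := (i - X d - 1) % n with hAdef
  have hdvd : (n : ℤ) ∣ (A - (i - X d - 1)) :=
    Int.modEq_iff_dvd.mp (self_modEq_emod (n := n) (a := i - X d - 1))
  obtain ⟨k, hk⟩ := hdvd
  have hk2 : A - (i - X d - 1) = 2 * (h * k) := by rw [hk, hn]; ring
  have hApar : A % 2 = 0 := by omega
  have hA' : (i + 1 - X d - 1) % n = A + 1 := by
    refine emod_eq_of_modEq ?_ (by omega) (by omega)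
    calc i + 1 - X d - 1 = (i - X d - 1) + 1 := by ring
      _ ≡ A + 1 [ZMOD n] := (self_modEq_emod (n := n)).add_right _
  rw [hA']
  omega

include hh hn in
lemma Td_step (hh2 : h % 2 = 0) {i j : ℤ}
    (hpar1 : (j - i) % n ≤ h → (i - X ((j - i) % n)) % 2 = 1)
    (hpar2 : h < (j - i) % n → (j - X (n - (j - i) % n)) % 2 = 1) :
    Td n h X i j ↔ Td n h X (i + 1) (j + 1) := by
  have hgap : j + 1 - (i + 1) = j - i := by ring
  unfold Td
  rw [hgap]
  by_cases hc : (j - i) % n ≤ h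
  · have hflip := Wd_noflip hh hn hh2 (hpar1 hc) (d := (j - i) % n)
    constructor
    · rintro ⟨h1, h2, h3⟩
      exact ⟨h1, fun _ => hflip.mp (h2 hc), fun hlt => absurd hc (by omega)⟩
    · rintro ⟨h1, h2, h3⟩
      exact ⟨h1, fun _ => hflip.mpr (h2 hc), fun hlt => absurd hc (by omega)⟩
  · have hflip := Wd_noflip hh hn hh2 (hpar2 (by omega)) (d := n - (j - i) % n)
    constructor
    · rintro ⟨h1, h2, h3⟩
      exact ⟨h1, fun hle => absurd hle hc, fun _ hw => (h3 (by omega)) (hflip.mpr hw)⟩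
    · rintro ⟨h1, h2, h3⟩
      exact ⟨h1, fun hle => absurd hle hc, fun _ hw => (h3 (by omega)) (hflip.mp hw)⟩

include hh hn in
lemma Td_notW {j : ℤ} {e : ℤ} (hw : ¬ Wd n h X j e) : Wd n h X (j + h) e := by
  have := (Wd_half hh hn (X := X) j e)
  tauto

/-- helper: extract the two possible sums of the three gaps of a triangle -/
lemma sum3_eq {n d1 d2 d3 : ℤ} (hn0 : 0 < n) (hdvd : n ∣ (d1 + d2 + d3))
    (b1 : 1 ≤ d1) (b1' : d1 < n) (b2 : 1 ≤ d2) (b2' : d2 < n) (b3 : 1 ≤ d3) (b3' : d3 < n) :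
    d1 + d2 + d3 = n ∨ d1 + d2 + d3 = 2 * n := by
  obtain ⟨m, hm⟩ := hdvd
  have hm1 : 1 ≤ m := by
    by_contra hcon
    have : n * m ≤ n * 0 := mul_le_mul_of_nonneg_left (by omega) (by omega)
    omega
  have hm2 : m ≤ 2 := by
    by_contra hcon
    have : n * 3 ≤ n * m := mul_le_mul_of_nonneg_left (by omega) (by omega)
    omega
  interval_cases m <;> omega

include hh hn in
lemma Td_congr {i i' j j' : ℤ} (hi : i ≡ i' [ZMOD n]) (hj : j ≡ j' [ZMOD n]) :
    Td n h X i j ↔ Td n h X i' j' := by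
  have hgap : (j - i) % n = (j' - i') % n := hj.sub hi
  unfold Td
  rw [hgap, Wcongr hh hn (X := X) ((j' - i') % n) hi,
    Wcongr hh hn (X := X) (n - (j' - i') % n) hj]

include hh hn in
lemma tri_dvd (p q r : ℤ) : n ∣ ((q - p) % n + (r - q) % n + (p - r) % n) := by
  have e1 : q - p ≡ (q - p) % n [ZMOD n] := self_modEq_emod
  have e2 : r - q ≡ (r - q) % n [ZMOD n] := self_modEq_emod
  have e3 : p - r ≡ (p - r) % n [ZMOD n] := self_modEq_emod
  have := ((e1.add e2).add e3).symm
  rw [show q - p + (r - q) + (p - r) = 0 from by ring] at this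
  exact (Int.modEq_zero_iff_dvd).mp this

include hh hn hX in
lemma cycA0 {p q r : ℤ} (t1 : Td n h X p q) (t2 : Td n h X q r) (t3 : Td n h X r p)
    (c1 : (q - p) % n ≤ h) (c2 : (r - q) % n ≤ h) (c3 : (p - r) % n ≤ h) : False := by
  have hn0 : 0 < n := by omega
  obtain ⟨b1, b1'⟩ := emod_bounds hn0 (q - p)
  obtain ⟨b2, b2'⟩ := emod_bounds hn0 (r - q)
  obtain ⟨b3, b3'⟩ := emod_bounds hn0 (p - r)
  obtain ⟨hne1, w1, -⟩ := t1
  obtain ⟨hne2, w2, -⟩ := t2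
  obtain ⟨hne3, w3, -⟩ := t3
  have hsum := sum3_eq hn0 (tri_dvd hh hn p q r) (by omega) (by omega) (by omega)
    (by omega) (by omega) (by omega)
  have hsum' : (q - p) % n + (r - q) % n + (p - r) % n = n := by omega
  have hq : q ≡ p + (q - p) % n [ZMOD n] := modEq_of_gap hh hn
  have hdvd3 : (n : ℤ) ∣ (p - r - (p - r) % n) :=
    Int.modEq_iff_dvd.mp (self_modEq_emod (n := n) (a := p - r)).symm
  have hr : r ≡ p + (q - p) % n + (r - q) % n [ZMOD n] := by
    refine Int.modEq_iff_dvd.mpr ?_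
    have heq : (p + (q - p) % n + (r - q) % n) - r
        = (p - r - (p - r) % n) + ((q - p) % n + (r - q) % n + (p - r) % n) := by ring
    rw [heq, hsum']
    exact dvd_add hdvd3 dvd_rfl
  refine Wd_no3 hh hn hX (i := p) (d1 := (q - p) % n) (d2 := (r - q) % n)
    (d3 := (p - r) % n) (by omega) (by omega) (by omega) c1 c2 c3 hsum'
    (w1 c1) ?_ ?_
  · exact (Wcongr hh hn _ hq.symm).mpr (w2 c2)
  · exact (Wcongr hh hn _ hr.symm).mpr (w3 c3)

include hh hn hX in
lemma cycA {p q r : ℤ} (t1 : Td n h X p q) (t2 : Td n h X q r) (t3 : Td n h X r p)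
    (c1 : (q - p) % n ≤ h) (c2 : (r - q) % n ≤ h) (c3 : h < (p - r) % n) : False := by
  have hn0 : 0 < n := by omega
  obtain ⟨b1, b1'⟩ := emod_bounds hn0 (q - p)
  obtain ⟨b2, b2'⟩ := emod_bounds hn0 (r - q)
  obtain ⟨b3, b3'⟩ := emod_bounds hn0 (p - r)
  obtain ⟨hne1, w1, -⟩ := t1
  obtain ⟨hne2, w2, -⟩ := t2
  obtain ⟨hne3, -, w3⟩ := t3
  have hsum := sum3_eq hn0 (tri_dvd hh hn p q r) (by omega) (by omega) (by omega)
    (by omega) (by omega) (by omega)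
  have hsum' : (q - p) % n + (r - q) % n = n - (p - r) % n := by omega
  have hq : q ≡ p + (q - p) % n [ZMOD n] := modEq_of_gap hh hn
  have hL2 := Wd_trans hh hn hX (i := p) (d1 := (q - p) % n) (d2 := (r - q) % n)
    (by omega) (by omega) (by omega) (w1 c1) ((Wcongr hh hn _ hq.symm).mpr (w2 c2))
  rw [hsum'] at hL2
  exact (w3 c3) hL2

include hh hn hX in
lemma cycB {p q r : ℤ} (t1 : Td n h X p q) (t2 : Td n h X q r) (t3 : Td n h X r p)
    (c1 : (q - p) % n ≤ h) (c2 : h < (r - q) % n) (c3 : h < (p - r) % n) : False := by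
  have hn0 : 0 < n := by omega
  obtain ⟨b1, b1'⟩ := emod_bounds hn0 (q - p)
  obtain ⟨b2, b2'⟩ := emod_bounds hn0 (r - q)
  obtain ⟨b3, b3'⟩ := emod_bounds hn0 (p - r)
  obtain ⟨hne1, w1, -⟩ := t1
  obtain ⟨hne2, -, w2⟩ := t2
  obtain ⟨hne3, -, w3⟩ := t3
  have hsum := sum3_eq hn0 (tri_dvd hh hn p q r) (by omega) (by omega) (by omega)
    (by omega) (by omega) (by omega)
  -- sum must be 2n
  have hsum' : (q - p) % n = (n - (r - q) % n) + (n - (p - r) % n) := by omega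
  have hW2 : Wd n h X (r + h) (n - (r - q) % n) := Td_notW hh hn (w2 c2)
  have hW3 : Wd n h X (p + h) (n - (p - r) % n) := Td_notW hh hn (w3 c3)
  -- r + h ≡ (p + h) + (n - (p-r)%n)
  have hdvd1 : (n : ℤ) ∣ (p - r - (p - r) % n) :=
    Int.modEq_iff_dvd.mp (self_modEq_emod (n := n) (a := p - r)).symm
  have hcong : (r + h) ≡ (p + h) + (n - (p - r) % n) [ZMOD n] := by
    refine Int.modEq_iff_dvd.mpr ?_
    have heq : (p + h + (n - (p - r) % n)) - (r + h) = (p - r - (p - r) % n) + n := by ring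
    rw [heq]; exact dvd_add hdvd1 dvd_rfl
  have hL2 := Wd_trans hh hn hX (i := p + h) (d1 := n - (p - r) % n) (d2 := n - (r - q) % n)
    (by omega) (by omega) (by omega) hW3 ((Wcongr hh hn _ hcong.symm).mpr hW2)
  rw [show (n - (p - r) % n) + (n - (r - q) % n) = (q - p) % n from by omega] at hL2
  exact (Wd_half hh hn p ((q - p) % n)).mp (w1 c1) hL2

include hh hn hX in
lemma cycC {p q r : ℤ} (t1 : Td n h X p q) (t2 : Td n h X q r) (t3 : Td n h X r p)
    (c1 : h < (q - p) % n) (c2 : h < (r - q) % n) (c3 : h < (p - r) % n) : False := by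
  have hn0 : 0 < n := by omega
  obtain ⟨b1, b1'⟩ := emod_bounds hn0 (q - p)
  obtain ⟨b2, b2'⟩ := emod_bounds hn0 (r - q)
  obtain ⟨b3, b3'⟩ := emod_bounds hn0 (p - r)
  obtain ⟨hne1, -, w1⟩ := t1
  obtain ⟨hne2, -, w2⟩ := t2
  obtain ⟨hne3, -, w3⟩ := t3
  have hsum := sum3_eq hn0 (tri_dvd hh hn p q r) (by omega) (by omega) (by omega)
    (by omega) (by omega) (by omega)
  have hsum' : (n - (r - q) % n) + (n - (q - p) % n) + (n - (p - r) % n) = n := by omega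
  have hW1 : Wd n h X (q + h) (n - (q - p) % n) := Td_notW hh hn (w1 c1)
  have hW2 : Wd n h X (r + h) (n - (r - q) % n) := Td_notW hh hn (w2 c2)
  have hW3 : Wd n h X (p + h) (n - (p - r) % n) := Td_notW hh hn (w3 c3)
  have hdvd2 : (n : ℤ) ∣ (r - q - (r - q) % n) :=
    Int.modEq_iff_dvd.mp (self_modEq_emod (n := n) (a := r - q)).symm
  have hdvd1 : (n : ℤ) ∣ (q - p - (q - p) % n) :=
    Int.modEq_iff_dvd.mp (self_modEq_emod (n := n) (a := q - p)).symm
  have hcong1 : (q + h) ≡ (r + h) + (n - (r - q) % n) [ZMOD n] := by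
    refine (Int.modEq_iff_dvd.mpr ?_)
    have : (r + h + (n - (r - q) % n)) - (q + h) = (r - q - (r - q) % n) + n := by ring
    rw [this]; exact dvd_add hdvd2 dvd_rfl
  have hcong2 : (p + h) ≡ (r + h) + (n - (r - q) % n) + (n - (q - p) % n) [ZMOD n] := by
    refine (Int.modEq_iff_dvd.mpr ?_)
    have : (r + h + (n - (r - q) % n) + (n - (q - p) % n)) - (p + h)
        = (r - q - (r - q) % n) + (q - p - (q - p) % n) + (n + n) := by ring
    rw [this]
    exact dvd_add (dvd_add hdvd2 hdvd1) (dvd_add dvd_rfl dvd_rfl)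
  exact Wd_no3 hh hn hX (i := r + h) (d1 := n - (r - q) % n) (d2 := n - (q - p) % n)
    (d3 := n - (p - r) % n) (by omega) (by omega) (by omega) (by omega)
    (by omega) (by omega) hsum' hW2 ((Wcongr hh hn _ hcong1.symm).mpr hW1)
    ((Wcongr hh hn _ hcong2.symm).mpr hW3)

include hh hn hX in
lemma Td_cycle_false {p q r : ℤ} (t1 : Td n h X p q) (t2 : Td n h X q r)
    (t3 : Td n h X r p) : False := by
  by_cases c1 : (q - p) % n ≤ h <;> by_cases c2 : (r - q) % n ≤ h <;>
    by_cases c3 : (p - r) % n ≤ h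
  · exact cycA0 hh hn hX t1 t2 t3 c1 c2 c3
  · exact cycA hh hn hX t1 t2 t3 c1 c2 (by omega)
  · exact cycA hh hn hX t3 t1 t2 c3 c1 (by omega)
  · exact cycB hh hn hX t1 t2 t3 c1 (by omega) (by omega)
  · exact cycA hh hn hX t2 t3 t1 c2 c3 (by omega)
  · exact cycB hh hn hX t2 t3 t1 c2 (by omega) (by omega)
  · exact cycB hh hn hX t3 t1 t2 c3 (by omega) (by omega)
  · exact cycC hh hn hX t1 t2 t3 (by omega) (by omega) (by omega)


end Tournament

/-! ### Dynamics of the permutation -/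

section Dynamics
open Function
variable {V : Type} [Fintype V] [DecidableEq V] (σ : Equiv.Perm V)

lemma sigma_periodic (v : V) : v ∈ periodicPts ⇑σ := by
  refine ⟨orderOf σ, orderOf_pos σ, ?_⟩
  show (⇑σ)^[orderOf σ] v = v
  rw [← Equiv.Perm.coe_pow, pow_orderOf_eq_one]
  rfl

/-- the cycle length through `v` -/
noncomputable abbrev per (v : V) : ℕ := Function.minimalPeriod ⇑σ v

lemma per_pos (v : V) : 0 < per σ v :=
  minimalPeriod_pos_of_mem_periodicPts (sigma_periodic σ v)

lemma iterate_per (v : V) : (⇑σ)^[per σ v] v = v := iterate_minimalPeriod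

lemma iter_eq_iff {w : V} {s t : ℕ} :
    (⇑σ)^[s] w = (⇑σ)^[t] w ↔ s % per σ w = t % per σ w := by
  constructor
  · intro hst
    rcases le_total s t with hle | hle
    · have h1 : (⇑σ)^[s] ((⇑σ)^[t - s] w) = (⇑σ)^[s] w := by
        rw [← iterate_add_apply, show s + (t - s) = t from by omega]
        exact hst.symm
      have h2 : (⇑σ)^[t - s] w = w := (σ.injective.iterate s) h1
      have hdvd : per σ w ∣ (t - s) := IsPeriodicPt.minimalPeriod_dvd h2
      exact (Nat.modEq_iff_dvd' hle).mpr hdvd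
    · have h1 : (⇑σ)^[t] ((⇑σ)^[s - t] w) = (⇑σ)^[t] w := by
        rw [← iterate_add_apply, show t + (s - t) = s from by omega]
        exact hst
      have h2 : (⇑σ)^[s - t] w = w := (σ.injective.iterate t) h1
      have hdvd : per σ w ∣ (s - t) := IsPeriodicPt.minimalPeriod_dvd h2
      exact ((Nat.modEq_iff_dvd' hle).mpr hdvd).symm
  · intro hst
    rw [← iterate_mod_minimalPeriod_eq (n := s), ← iterate_mod_minimalPeriod_eq (n := t)]
    show (⇑σ)^[s % per σ w] w = (⇑σ)^[t % per σ w] w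
    rw [hst]

/-- same orbit relation -/
def sameOrb (a b : V) : Prop := ∃ k : ℕ, (⇑σ)^[k] a = b

lemma sameOrb_refl (a : V) : sameOrb σ a a := ⟨0, rfl⟩

lemma sameOrb_trans {a b c : V} (h1 : sameOrb σ a b) (h2 : sameOrb σ b c) :
    sameOrb σ a c := by
  obtain ⟨k, hk⟩ := h1; obtain ⟨l, hl⟩ := h2
  exact ⟨l + k, by rw [iterate_add_apply, hk, hl]⟩

lemma sameOrb_symm {a b : V} (h1 : sameOrb σ a b) : sameOrb σ b a := by
  obtain ⟨k, hk⟩ := h1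
  have hM : 0 < orderOf σ := orderOf_pos σ
  refine ⟨orderOf σ * k - k, ?_⟩
  rw [← hk, ← iterate_add_apply]
  have hle : k ≤ orderOf σ * k := Nat.le_mul_of_pos_left k hM
  rw [show orderOf σ * k - k + k = orderOf σ * k from by omega]
  rw [← Equiv.Perm.coe_pow, pow_mul, pow_orderOf_eq_one, one_pow]
  rfl

open scoped Classical in
noncomputable def rep (v : V) : V :=
  (Fintype.equivFin V).symm ((((Finset.univ : Finset V).filter
      (fun u => sameOrb σ u v)).image (Fintype.equivFin V)).min'
    (by
      apply Finset.Nonempty.image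
      exact ⟨v, Finset.mem_filter.mpr ⟨Finset.mem_univ _, sameOrb_refl σ v⟩⟩))

open scoped Classical in
lemma rep_sameOrb (v : V) : sameOrb σ (rep σ v) v := by
  have hmem := Finset.min'_mem (((Finset.univ : Finset V).filter
      (fun u => sameOrb σ u v)).image (Fintype.equivFin V)) (by
      apply Finset.Nonempty.image
      exact ⟨v, Finset.mem_filter.mpr ⟨Finset.mem_univ _, sameOrb_refl σ v⟩⟩)
  rw [Finset.mem_image] at hmem
  obtain ⟨u, hu, hue⟩ := hmem
  have : rep σ v = u := by
    unfold rep
    rw [← hue]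
    exact (Fintype.equivFin V).symm_apply_apply u
  rw [this]
  exact (Finset.mem_filter.mp hu).2

open scoped Classical in
lemma rep_congr {a b : V} (hab : sameOrb σ a b) : rep σ a = rep σ b := by
  have hset : ((Finset.univ : Finset V).filter (fun u => sameOrb σ u a))
      = ((Finset.univ : Finset V).filter (fun u => sameOrb σ u b)) := by
    ext u
    simp only [Finset.mem_filter, Finset.mem_univ, true_and]
    exact ⟨fun h => sameOrb_trans σ h hab, fun h => sameOrb_trans σ h (sameOrb_symm σ hab)⟩
  unfold rep
  simp only [hset]

lemma rep_apply (a : V) : rep σ (σ a) = rep σ a :=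
  rep_congr σ (sameOrb_symm σ ⟨1, rfl⟩)

open scoped Classical in
noncomputable def pos (v : V) : ℕ := Nat.find (rep_sameOrb σ v)

open scoped Classical in
lemma pos_spec (v : V) : (⇑σ)^[pos σ v] (rep σ v) = v := Nat.find_spec (rep_sameOrb σ v)

open scoped Classical in
lemma pos_lt (v : V) : pos σ v < per σ (rep σ v) := by
  by_contra hcon
  push_neg at hcon
  have hper := per_pos σ (rep σ v)
  have heq : (⇑σ)^[pos σ v % per σ (rep σ v)] (rep σ v) = v := by
    rw [iterate_mod_minimalPeriod_eq]
    exact pos_spec σ v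
  have := Nat.find_min (rep_sameOrb σ v)
    (show pos σ v % per σ (rep σ v) < pos σ v from by
      have := Nat.mod_lt (pos σ v) hper
      omega) heq
  exact this

lemma pos_inj {a b : V} (hr : rep σ a = rep σ b) (hp : pos σ a = pos σ b) : a = b := by
  rw [← pos_spec σ a, ← pos_spec σ b, hr, hp]

lemma pos_apply_mod (a : V) :
    pos σ (σ a) % per σ (rep σ a) = (pos σ a + 1) % per σ (rep σ a) := by
  have h1 : (⇑σ)^[pos σ (σ a)] (rep σ a) = σ a := by
    have := pos_spec σ (σ a)
    rwa [rep_apply σ a] at this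
  have h2 : (⇑σ)^[pos σ a + 1] (rep σ a) = σ a := by
    rw [Function.iterate_succ_apply', pos_spec σ a]
  exact (iter_eq_iff σ).mp (h1.trans h2.symm)

end Dynamics

/-! ### Graph layer -/

section GraphLayer
open Function
variable {V : Type} [Fintype V] [DecidableEq V] (G : SimpleGraph V) (σ : Equiv.Perm V)
variable (hkey : ∀ a b : V, a ≠ b → (G.Adj a b ↔ ¬ G.Adj (σ a) (σ b)))

include hkey in
lemma adj_flip {a b : V} (hab : a ≠ b) : G.Adj (σ a) (σ b) ↔ ¬ G.Adj a b := by
  have := hkey a b hab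
  tauto

include hkey in
lemma alt_lemma (w : V) (d : ℕ) (hd : (⇑σ)^[d] w ≠ w) (i : ℕ) :
    G.Adj ((⇑σ)^[i] w) ((⇑σ)^[i + d] w) ↔ (G.Adj w ((⇑σ)^[d] w) ↔ i % 2 = 0) := by
  induction i with
  | zero => simp
  | succ m ih =>
    have hne : (⇑σ)^[m] w ≠ (⇑σ)^[m + d] w := by
      intro hcon
      rw [iterate_add_apply] at hcon
      exact hd ((σ.injective.iterate m) hcon).symm
    have hstep : (⇑σ)^[m + 1] w = σ ((⇑σ)^[m] w) := iterate_succ_apply' _ _ _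
    have hstep2 : (⇑σ)^[m + 1 + d] w = σ ((⇑σ)^[m + d] w) := by
      rw [show m + 1 + d = (m + d) + 1 from by omega]
      exact iterate_succ_apply' _ _ _
    have hflip : (m + 1) % 2 = 0 ↔ ¬ (m % 2 = 0) := by omega
    rw [hstep, hstep2, adj_flip G σ hkey hne, ih, hflip]
    tauto

include hkey in
lemma per_structure (w : V) (h2 : 2 ≤ per σ w) :
    ∃ hw : ℕ, per σ w = 2 * hw ∧ hw % 2 = 0 ∧ 1 ≤ hw := by
  have hne1 : (⇑σ)^[1] w ≠ w := by
    intro hcon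
    have : per σ w ≤ 1 := Function.IsPeriodicPt.minimalPeriod_le (by omega) hcon
    omega
  have hNeven : per σ w % 2 = 0 := by
    have halt := alt_lemma G σ hkey w 1 hne1 (per σ w)
    rw [show per σ w + 1 = 1 + per σ w from by omega, iterate_add_apply,
      iterate_per σ w] at halt
    tauto
  set hw := per σ w / 2 with hhw
  have hN : per σ w = 2 * hw := by omega
  have hneh : (⇑σ)^[hw] w ≠ w := by
    intro hcon
    have : per σ w ≤ hw := Function.IsPeriodicPt.minimalPeriod_le (by omega) hcon
    omega
  have hheven : hw % 2 = 0 := by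
    have halt := alt_lemma G σ hkey w hw hneh hw
    rw [show hw + hw = per σ w from by omega, iterate_per σ w] at halt
    rw [G.adj_comm] at halt
    tauto
  exact ⟨hw, hN, hheven, by omega⟩

/-- adjacency of `w` to its `d`-th iterate -/
def epsB (w : V) (d : ℕ) : Prop := G.Adj w ((⇑σ)^[d] w)

open scoped Classical in
noncomputable def DD (w : V) : ℕ → ℕ
  | 0 => 0
  | 1 => 0
  | (d + 2) => DD w (d + 1) + (if epsB G σ w (d + 2) ↔ epsB G σ w (d + 1) then 0 else 1)

open scoped Classical in
noncomputable def XX (w : V) : ℤ → ℤ :=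
  fun z => (if epsB G σ w 1 then 1 else 0) - DD G σ w z.toNat

open scoped Classical in
lemma XX_step (w : V) : ∀ d : ℤ, 1 ≤ d →
    XX G σ w (d + 1) = XX G σ w d ∨ XX G σ w (d + 1) = XX G σ w d - 1 := by
  intro d hd
  obtain ⟨k, hk⟩ : ∃ k : ℕ, d.toNat = k + 1 := ⟨d.toNat - 1, by omega⟩
  have h1 : (d + 1).toNat = k + 2 := by omega
  unfold XX
  rw [h1, hk]
  show _ ∨ _
  simp only [DD]
  by_cases hc : epsB G σ w (k + 2) ↔ epsB G σ w (k + 1) <;> simp [hc] <;> omega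

open scoped Classical in
lemma XX_parity (w : V) : ∀ d : ℕ, 1 ≤ d →
    XX G σ w (d : ℤ) % 2 = (if epsB G σ w d then 1 else 0) := by
  intro d
  induction d with
  | zero => omega
  | succ m ih =>
    intro _
    by_cases hm : m = 0
    · subst hm
      unfold XX
      norm_num [DD]
      by_cases h1 : epsB G σ w 1 <;> simp [h1]
    · have ihm := ih (by omega)
      obtain ⟨k, hk⟩ : ∃ k : ℕ, m = k + 1 := ⟨m - 1, by omega⟩
      unfold XX at ihm ⊢
      have ht1 : ((m : ℤ)).toNat = m := by omega
      have ht2 : (((m : ℕ) + 1 : ℕ) : ℤ).toNat = m + 1 := by omega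
      rw [ht2, hk]
      rw [ht1, hk] at ihm
      simp only [DD]
      by_cases hc : epsB G σ w (k + 1 + 1) ↔ epsB G σ w (k + 1)
      · have : epsB G σ w (k + 2) ↔ epsB G σ w (k + 1) := by
          rwa [show k + 1 + 1 = k + 2 from rfl] at hc
        by_cases h1 : epsB G σ w (k + 1) <;>
          simp only [this, h1, iff_true, iff_false, if_pos, if_neg, not_true, not_false_iff] <;>
          simp [hc, h1] at ihm ⊢ <;> omega
      · by_cases h1 : epsB G σ w (k + 1) <;>
          [skip; skip] <;>
          simp [hc, h1] at ihm ⊢ <;>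
          by_cases h2 : epsB G σ w (k + 2) <;> simp [h2] at hc ⊢ <;> omega

end GraphLayer

/-! ### Assembly -/

section Assembly
open Function
variable {V : Type} [Fintype V] [DecidableEq V] (G : SimpleGraph V) (σ : Equiv.Perm V)
variable (hkey : ∀ a b : V, a ≠ b → (G.Adj a b ↔ ¬ G.Adj (σ a) (σ b)))

lemma intmod_of_natmod {p x y : ℕ} (h : x % p = y % p) :
    (x : ℤ) % (p : ℤ) = (y : ℤ) % (p : ℤ) := by
  have h2 := congrArg (fun t : ℕ => (t : ℤ)) h
  push_cast at h2
  exact h2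

lemma natmod_of_intmod {p x y : ℕ} (h : (x : ℤ) % (p : ℤ) = (y : ℤ) % (p : ℤ)) :
    x % p = y % p := by
  have h2 : ((x % p : ℕ) : ℤ) = ((y % p : ℕ) : ℤ) := by push_cast; exact h
  exact_mod_cast h2

lemma gapne {n x y : ℤ} (hn0 : 0 < n) (hx : 0 ≤ x) (hx2 : x < n) (hy : 0 ≤ y)
    (hy2 : y < n) (hne : x ≠ y) : (y - x) % n ≠ 0 := by
  intro hcon
  rcases le_or_gt x y with hc | hc
  · rw [Int.emod_eq_of_lt (by omega) (by omega)] at hcon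
    omega
  · have heq : (y - x) % n = y - x + n := by
      refine emod_eq_of_modEq ?_ (by omega) (by omega)
      exact Int.modEq_iff_dvd.mpr ⟨1, by ring⟩
    omega

/-- The final strict order. -/
def ordR : V → V → Prop := fun a b =>
  (Fintype.equivFin V (rep σ a) < Fintype.equivFin V (rep σ b)) ∨
  (rep σ a = rep σ b ∧
    Td (per σ (rep σ a) : ℤ) ((per σ (rep σ a) : ℤ) / 2) (XX G σ (rep σ a))
      (pos σ a) (pos σ b))

include hkey in
lemma same_rep_setup {a b : V} (hab : a ≠ b) (hrep : rep σ a = rep σ b) :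
    ∃ hw : ℕ, per σ (rep σ a) = 2 * hw ∧ hw % 2 = 0 ∧ 1 ≤ hw ∧
      pos σ a ≠ pos σ b ∧ pos σ a < per σ (rep σ a) ∧ pos σ b < per σ (rep σ a) := by
  have hpa := pos_lt σ a
  have hpb := pos_lt σ b
  rw [← hrep] at hpb
  have hpne : pos σ a ≠ pos σ b := fun hc => hab (pos_inj σ hrep hc)
  have h2 : 2 ≤ per σ (rep σ a) := by omega
  obtain ⟨hw, h1, h2', h3⟩ := per_structure G σ hkey (rep σ a) h2
  exact ⟨hw, h1, h2', h3, hpne, hpa, hpb⟩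

lemma ordR_irrefl (a : V) : ¬ ordR G σ a a := by
  rintro (h | ⟨-, h⟩)
  · exact lt_irrefl _ h
  · exact h.1 (by simp)

include hkey in
lemma ordR_tricho {a b : V} (hab : a ≠ b) : ordR G σ a b ∨ ordR G σ b a := by
  by_cases hrep : rep σ a = rep σ b
  · obtain ⟨hw, hN, hwe, hw1, hpne, hpa, hpb⟩ := same_rep_setup G σ hkey hab hrep
    have hH : (per σ (rep σ a) : ℤ) / 2 = (hw : ℤ) := by
      rw [hN]; push_cast; omega
    have hh : (1 : ℤ) ≤ (per σ (rep σ a) : ℤ) / 2 := by omega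
    have hn : (per σ (rep σ a) : ℤ) = 2 * ((per σ (rep σ a) : ℤ) / 2) := by
      rw [hH, hN]; push_cast; ring
    have hne : ((pos σ b : ℤ) - (pos σ a : ℤ)) % (per σ (rep σ a) : ℤ) ≠ 0 :=
      gapne (by exact_mod_cast per_pos σ (rep σ a)) (by positivity)
        (by exact_mod_cast hpa) (by positivity) (by exact_mod_cast hpb)
        (by exact_mod_cast hpne)
    rcases Td_total hh hn (X := XX G σ (rep σ a)) hne with ht | ht
    · exact Or.inl (Or.inr ⟨hrep, ht⟩)
    · refine Or.inr (Or.inr ⟨hrep.symm, ?_⟩)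
      rw [← hrep]
      exact ht
  · have hefne : Fintype.equivFin V (rep σ a) ≠ Fintype.equivFin V (rep σ b) :=
      fun hc => hrep ((Fintype.equivFin V).injective hc)
    rcases lt_or_gt_of_ne hefne with hc | hc
    · exact Or.inl (Or.inl hc)
    · exact Or.inr (Or.inl hc)

include hkey in
lemma ordR_trans {a b c : V} (h1 : ordR G σ a b) (h2 : ordR G σ b c) : ordR G σ a c := by
  rcases h1 with h1 | ⟨e1, t1⟩
  · rcases h2 with h2 | ⟨e2, t2⟩
    · exact Or.inl (lt_trans h1 h2)
    · exact Or.inl (by rw [← e2]; exact h1)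
  · rcases h2 with h2 | ⟨e2, t2⟩
    · exact Or.inl (by rw [e1]; exact h2)
    · -- both in the same cycle
      have e13 : rep σ a = rep σ c := e1.trans e2
      rw [← e1] at t2
      have hab : a ≠ b := by
        intro hc; subst hc
        exact t1.1 (by simp)
      obtain ⟨hw, hN, hwe, hw1, hpne, hpa, hpb⟩ := same_rep_setup G σ hkey hab e1
      have hpc := pos_lt σ c
      rw [← e13] at hpc
      have hH : (per σ (rep σ a) : ℤ) / 2 = (hw : ℤ) := by
        rw [hN]; push_cast; omega
      have hh : (1 : ℤ) ≤ (per σ (rep σ a) : ℤ) / 2 := by omega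
      have hn : (per σ (rep σ a) : ℤ) = 2 * ((per σ (rep σ a) : ℤ) / 2) := by
        rw [hH, hN]; push_cast; ring
      have hX := XX_step G σ (rep σ a)
      by_cases hac : a = c
      · subst hac
        exact absurd ⟨t1, t2⟩ (Td_antisymm hh hn t1.1)
      · have hpac : pos σ a ≠ pos σ c := fun hcp => hac (pos_inj σ e13 hcp)
        have hne : ((pos σ c : ℤ) - (pos σ a : ℤ)) % (per σ (rep σ a) : ℤ) ≠ 0 :=
          gapne (by exact_mod_cast per_pos σ (rep σ a)) (by positivity)
            (by exact_mod_cast hpa) (by positivity) (by exact_mod_cast hpc)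
            (by exact_mod_cast hpac)
        rcases Td_total hh hn (X := XX G σ (rep σ a)) hne with ht | ht
        · exact Or.inr ⟨e13, ht⟩
        · exact absurd (Td_cycle_false hh hn hX t1 t2 ht) (fun x => x)

include hkey in
lemma ordR_edge {a b : V} (hadj : G.Adj a b) : ordR G σ a b ↔ ordR G σ (σ a) (σ b) := by
  have hra := rep_apply σ a
  have hrb := rep_apply σ b
  by_cases hrep : rep σ a = rep σ b
  · have hab : a ≠ b := hadj.ne
    obtain ⟨hw, hN, hwe, hw1, hpne, hpa, hpb⟩ := same_rep_setup G σ hkey hab hrep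
    have hH : (per σ (rep σ a) : ℤ) / 2 = (hw : ℤ) := by
      rw [hN]; push_cast; omega
    have hh : (1 : ℤ) ≤ (per σ (rep σ a) : ℤ) / 2 := by omega
    have hn : (per σ (rep σ a) : ℤ) = 2 * ((per σ (rep σ a) : ℤ) / 2) := by
      rw [hH, hN]; push_cast; ring
    have hh2 : ((per σ (rep σ a) : ℤ) / 2) % 2 = 0 := by omega
    have hn0 : (0 : ℤ) < (per σ (rep σ a) : ℤ) := by omega
    have hma : ((pos σ (σ a) : ℤ)) ≡ ((pos σ a : ℤ) + 1) [ZMOD (per σ (rep σ a) : ℤ)] := by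
      have h0 := pos_apply_mod σ a
      have h1 := intmod_of_natmod (p := per σ (rep σ a)) h0
      push_cast at h1
      exact h1
    have hmb : ((pos σ (σ b) : ℤ)) ≡ ((pos σ b : ℤ) + 1) [ZMOD (per σ (rep σ a) : ℤ)] := by
      have h0 := pos_apply_mod σ b
      rw [← hrep] at h0
      have h1 := intmod_of_natmod (p := per σ (rep σ a)) h0
      push_cast at h1
      exact h1
    have hiff1 : ordR G σ a b ↔ Td (per σ (rep σ a) : ℤ) ((per σ (rep σ a) : ℤ) / 2)
        (XX G σ (rep σ a)) (pos σ a) (pos σ b) := by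
      unfold ordR
      constructor
      · rintro (hc | ⟨-, ht⟩)
        · rw [hrep] at hc; exact absurd hc (lt_irrefl _)
        · exact ht
      · intro ht; exact Or.inr ⟨hrep, ht⟩
    have hiff2 : ordR G σ (σ a) (σ b) ↔ Td (per σ (rep σ a) : ℤ) ((per σ (rep σ a) : ℤ) / 2)
        (XX G σ (rep σ a)) (pos σ (σ a)) (pos σ (σ b)) := by
      unfold ordR
      rw [hra, hrb]
      constructor
      · rintro (hc | ⟨-, ht⟩)
        · rw [hrep] at hc; exact absurd hc (lt_irrefl _)
        · exact ht
      · intro ht; exact Or.inr ⟨hrep, ht⟩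
    rw [hiff1, hiff2, Td_congr hh hn hma hmb]
    refine Td_step hh hn hh2 ?_ ?_
    · -- parity for the small-gap branch
      intro hdle
      obtain ⟨hd0, hd1⟩ := emod_bounds hn0 ((pos σ b : ℤ) - (pos σ a : ℤ))
      have hdne : ((pos σ b : ℤ) - (pos σ a : ℤ)) % (per σ (rep σ a) : ℤ) ≠ 0 :=
        gapne hn0 (by positivity) (by exact_mod_cast hpa) (by positivity)
          (by exact_mod_cast hpb) (by exact_mod_cast hpne)
      set d : ℤ := ((pos σ b : ℤ) - (pos σ a : ℤ)) % (per σ (rep σ a) : ℤ) with hddef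
      set dn : ℕ := d.toNat with hdndef
      have hdn1 : 1 ≤ dn := by omega
      have hdn2 : dn < per σ (rep σ a) := by omega
      have hbad : (⇑σ)^[dn] (rep σ a) ≠ rep σ a := by
        intro hcon
        have hle := Function.IsPeriodicPt.minimalPeriod_le (show 0 < dn by omega) hcon
        have : per σ (rep σ a) ≤ dn := hle
        omega
      have hib : (⇑σ)^[pos σ a + dn] (rep σ a) = b := by
        have hmod : (pos σ a + dn) % per σ (rep σ a) = pos σ b % per σ (rep σ a) := by
          apply natmod_of_intmod
          push_cast
          have hdcast : (dn : ℤ) = d := by omega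
          rw [hdcast]
          have h1 : (pos σ a : ℤ) + d ≡ (pos σ b : ℤ) [ZMOD (per σ (rep σ a) : ℤ)] := by
            have h2 : ((pos σ b : ℤ) - (pos σ a : ℤ)) ≡ d [ZMOD (per σ (rep σ a) : ℤ)] :=
              self_modEq_emod
            have h3 := h2.add_left ((pos σ a : ℤ))
            rw [show (pos σ a : ℤ) + ((pos σ b : ℤ) - (pos σ a : ℤ)) = (pos σ b : ℤ)
              from by ring] at h3
            exact h3.symm
          exact h1
        have h4 := (iter_eq_iff σ (w := rep σ a)).mpr hmod
        rw [h4]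
        have h5 := pos_spec σ b
        rw [← hrep] at h5
        exact h5
      have halt := alt_lemma G σ hkey (rep σ a) dn hbad (pos σ a)
      rw [pos_spec σ a, hib] at halt
      have heps : epsB G σ (rep σ a) dn ↔ pos σ a % 2 = 0 := halt.mp hadj
      have hparX := XX_parity G σ (rep σ a) dn (by omega)
      have hXeq : XX G σ (rep σ a) d = XX G σ (rep σ a) ((dn : ℕ) : ℤ) := by
        have htn : ((dn : ℕ) : ℤ).toNat = d.toNat := by omega
        unfold XX
        rw [htn]
      rw [hXeq]
      by_cases he : epsB G σ (rep σ a) dn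
      · rw [if_pos he] at hparX
        have hpa2 : pos σ a % 2 = 0 := heps.mp he
        omega
      · rw [if_neg he] at hparX
        have hpa2 : pos σ a % 2 ≠ 0 := fun hc => he (heps.mpr hc)
        omega
    · -- parity for the big-gap branch
      intro hdgt
      obtain ⟨hd0, hd1⟩ := emod_bounds hn0 ((pos σ b : ℤ) - (pos σ a : ℤ))
      set d : ℤ := ((pos σ b : ℤ) - (pos σ a : ℤ)) % (per σ (rep σ a) : ℤ) with hddef
      set en : ℕ := ((per σ (rep σ a) : ℤ) - d).toNat with hendef
      have hen1 : 1 ≤ en := by omega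
      have hen2 : en < per σ (rep σ a) := by omega
      have hbad : (⇑σ)^[en] (rep σ a) ≠ rep σ a := by
        intro hcon
        have hle := Function.IsPeriodicPt.minimalPeriod_le (show 0 < en by omega) hcon
        have : per σ (rep σ a) ≤ en := hle
        omega
      have hia : (⇑σ)^[pos σ b + en] (rep σ a) = a := by
        have hmod : (pos σ b + en) % per σ (rep σ a) = pos σ a % per σ (rep σ a) := by
          apply natmod_of_intmod
          push_cast
          have hecast : (en : ℤ) = (per σ (rep σ a) : ℤ) - d := by omega
          rw [hecast]
          have h2 : ((pos σ b : ℤ) - (pos σ a : ℤ)) ≡ d [ZMOD (per σ (rep σ a) : ℤ)] :=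
            self_modEq_emod
          have h3 : ((pos σ b : ℤ) + ((per σ (rep σ a) : ℤ) - d))
              ≡ ((pos σ b : ℤ) + ((per σ (rep σ a) : ℤ)
                - ((pos σ b : ℤ) - (pos σ a : ℤ)))) [ZMOD (per σ (rep σ a) : ℤ)] :=
            (h2.symm.sub_left _).add_left _
          refine h3.trans ?_
          refine Int.modEq_iff_dvd.mpr ⟨-1, by ring⟩
        have h4 := (iter_eq_iff σ (w := rep σ a)).mpr hmod
        rw [h4]
        exact pos_spec σ a
      have h5 := pos_spec σ b
      rw [← hrep] at h5
      have halt := alt_lemma G σ hkey (rep σ a) en hbad (pos σ b)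
      rw [h5, hia] at halt
      have heps : epsB G σ (rep σ a) en ↔ pos σ b % 2 = 0 := halt.mp hadj.symm
      have hparX := XX_parity G σ (rep σ a) en (by omega)
      have hXeq : XX G σ (rep σ a) ((per σ (rep σ a) : ℤ) - d)
          = XX G σ (rep σ a) ((en : ℕ) : ℤ) := by
        have htn : ((en : ℕ) : ℤ).toNat = ((per σ (rep σ a) : ℤ) - d).toNat := by omega
        unfold XX
        rw [htn]
      rw [hXeq]
      by_cases he : epsB G σ (rep σ a) en
      · rw [if_pos he] at hparX
        have hpb2 : pos σ b % 2 = 0 := heps.mp he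
        omega
      · rw [if_neg he] at hparX
        have hpb2 : pos σ b % 2 ≠ 0 := fun hc => he (heps.mpr hc)
        omega
  · -- different cycles
    have hrep2 : rep σ (σ a) ≠ rep σ (σ b) := by rw [hra, hrb]; exact hrep
    unfold ordR
    rw [hra, hrb]
    constructor
    · rintro (hc | ⟨he, -⟩)
      · exact Or.inl hc
      · exact absurd he hrep
    · rintro (hc | ⟨he, -⟩)
      · exact Or.inl hc
      · exact absurd he hrep

end Assembly

end Stmt16


/-- If G is a finite self-complementary graph and f is a fixed
isomorphism from G to its complement, then there is a strict linear order on
the vertices such that for all adjacent a, b: a < b iff f(a) < f(b). -/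
theorem stmt_16 {V : Type} [Fintype V] [DecidableEq V]
    (G : SimpleGraph V) (f : G ≃g Gᶜ) :
    ∃ r : V → V → Prop, IsStrictTotalOrder V r ∧
      ∀ a b : V, G.Adj a b → (r a b ↔ r (f a) (f b)) := by
  classical
  set σ : Equiv.Perm V := f.toEquiv with hσ
  have hco : ∀ x : V, σ x = f x := fun x => rfl
  have hkey : ∀ a b : V, a ≠ b → (G.Adj a b ↔ ¬ G.Adj (σ a) (σ b)) := by
    intro a b hab
    constructor
    · intro h hc
      have h2 : Gᶜ.Adj (f a) (f b) := f.map_adj_iff.mpr h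
      rw [SimpleGraph.compl_adj] at h2
      refine h2.2 ?_
      rw [hco a, hco b] at hc
      exact hc
    · intro hnadj
      have hfne : f a ≠ f b := fun hc2 => hab (f.injective hc2)
      refine f.map_adj_iff.mp ((SimpleGraph.compl_adj G _ _).mpr ⟨hfne, ?_⟩)
      rw [hco a, hco b] at hnadj
      exact hnadj
  refine ⟨Stmt16.ordR G σ, ?_, ?_⟩
  · haveI h1 : IsIrrefl V (Stmt16.ordR G σ) := ⟨Stmt16.ordR_irrefl G σ⟩
    haveI h2 : IsTrans V (Stmt16.ordR G σ) :=
      ⟨fun _ _ _ hab hbc => Stmt16.ordR_trans G σ hkey hab hbc⟩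
    haveI h4 : IsStrictOrder V (Stmt16.ordR G σ) := ⟨⟩
    haveI h3 : IsTrichotomous V (Stmt16.ordR G σ) := ⟨fun a b => by
      by_cases hab : a = b
      · exact fun _ _ => hab
      · rcases Stmt16.ordR_tricho G σ hkey hab with h | h
        · exact fun h' _ => absurd h h'
        · exact fun _ h' => absurd h h'⟩
    exact ⟨⟩
  · intro a b hadj
    have hiff := Stmt16.ordR_edge G σ hkey hadj
    rw [hco a, hco b] at hiff
    exact hiff
end

section
/- Let V be a finite set, σ a permutation of V, and ℓ a labeling of the edges of the complete graph on V with labels in {0,1,2} satisfying ℓ({σ(a),σ(b)}) ≡ ℓ({a,b}) + 1 (mod 3) for every edge {a,b} (a σ-partition). Then there exists a strict linear order < on V such that every edge {a,b} with ℓ({a,b}) ≠ 2 satisfies a < b ⟺ σ(a) < σ(b) (a transitive σ-orientation) if and only if for every orbit O of σ on V there exists a strict linear order <_O on O such that every edge {a,b} with a, b ∈ O and ℓ({a,b}) ≠ 2 satisfies a <_O b ⟺ σ(a) <_O σ(b). -/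
/-- A σ-partition (for an arbitrary permutation σ of a finite set
V) admits a transitive σ-orientation iff, for each orbit of σ, the restricted
σ-partition admits a transitive σ-orientation of that orbit. -/
theorem stmt_17 {V : Type} [Fintype V] [DecidableEq V]
    (σ : Equiv.Perm V) (ℓ : V → V → ZMod 3)
    (hsymm : ∀ a b : V, ℓ a b = ℓ b a)
    (hshift : ∀ a b : V, a ≠ b → ℓ (σ a) (σ b) = ℓ a b + 1) :
    (∃ r : V → V → Prop, IsStrictTotalOrder V r ∧
        ∀ a b : V, a ≠ b → ℓ a b ≠ 2 → (r a b ↔ r (σ a) (σ b))) ↔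
    (∀ v : V, ∃ r : V → V → Prop,
        IsStrictTotalOrder {u : V // σ.SameCycle v u}
          (fun a b => r a.1 b.1) ∧
        ∀ a b : V, σ.SameCycle v a → σ.SameCycle v b → a ≠ b → ℓ a b ≠ 2 →
          (r a b ↔ r (σ a) (σ b))) := by
  classical
  letI : LinearOrder V := LinearOrder.lift' (Fintype.equivFin V) (Equiv.injective _)
  constructor
  · rintro ⟨r, hr, hcond⟩ v
    refine ⟨r, ?_, fun a b _ _ hab hl => hcond a b hab hl⟩
    haveI : IsTrichotomous {u : V // σ.SameCycle v u} (fun a b => r a.1 b.1) := by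
      refine Std.trichotomous_of_rel_or_eq_or_rel_swap fun {a b} => ?_
      rcases Std.Trichotomous.rel_or_eq_or_rel_swap (i := hr.toTrichotomous) (a := a.1) (b := b.1) with h | h | h
      · exact Or.inl h
      · exact Or.inr (Or.inl (Subtype.ext h))
      · exact Or.inr (Or.inr h)
    haveI : IsIrrefl {u : V // σ.SameCycle v u} (fun a b => r a.1 b.1) :=
      ⟨fun a => hr.irrefl a.1⟩
    haveI : IsTrans {u : V // σ.SameCycle v u} (fun a b => r a.1 b.1) :=
      ⟨fun a b c hab hbc => hr.trans a.1 b.1 c.1 hab hbc⟩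
    haveI : IsStrictOrder {u : V // σ.SameCycle v u} (fun a b => r a.1 b.1) := ⟨⟩
    exact ⟨⟩
  · intro h
    choose R hR1 hR2 using h
    set orb : V → Finset V := fun a => Finset.univ.filter (σ.SameCycle a) with horb
    have hmem : ∀ a, a ∈ orb a := fun a => by
      simp [horb, Equiv.Perm.SameCycle.refl]
    have hne : ∀ a, (orb a).Nonempty := fun a => ⟨a, hmem a⟩
    set rep : V → V := fun a => (orb a).min' (hne a) with hrep
    have hcyc : ∀ a, σ.SameCycle a (rep a) := fun a => by
      have := Finset.min'_mem (orb a) (hne a)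
      simpa [horb] using this
    have horbeq : ∀ {a b : V}, σ.SameCycle a b → orb a = orb b := by
      intro a b hab
      ext x
      simp only [horb, Finset.mem_filter, Finset.mem_univ, true_and]
      exact ⟨fun h' => hab.symm.trans h', fun h' => hab.trans h'⟩
    have hrepeq : ∀ {a b : V}, σ.SameCycle a b → rep a = rep b := by
      intro a b hab
      simp only [hrep]
      congr 1
      exact horbeq hab
    have hrepcyc : ∀ a, σ.SameCycle (rep a) a := fun a => (hcyc a).symm
    have hrepσ : ∀ a, rep (σ a) = rep a :=
      fun a => (hrepeq ⟨1, by simp⟩).symm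
    refine ⟨fun a b => rep a < rep b ∨ (rep a = rep b ∧ R (rep a) a b), ?_, ?_⟩
    · haveI i1 : IsTrichotomous V (fun a b => rep a < rep b ∨ (rep a = rep b ∧ R (rep a) a b)) := by
        refine Std.trichotomous_of_rel_or_eq_or_rel_swap fun {a b} => ?_
        rcases lt_trichotomy (rep a) (rep b) with h | h | h
        · exact Or.inl (Or.inl h)
        · have hb : σ.SameCycle (rep a) b := h ▸ hrepcyc b
          rcases Std.Trichotomous.rel_or_eq_or_rel_swap (i := (hR1 (rep a)).toTrichotomous) (a := ⟨a, hrepcyc a⟩) (b := ⟨b, hb⟩) with h' | h' | h'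
          · exact Or.inl (Or.inr ⟨h, h'⟩)
          · exact Or.inr (Or.inl (congrArg Subtype.val h'))
          · refine Or.inr (Or.inr (Or.inr ⟨h.symm, ?_⟩))
            rw [← h]; exact h'
        · exact Or.inr (Or.inr (Or.inl h))
      haveI i2 : IsIrrefl V (fun a b => rep a < rep b ∨ (rep a = rep b ∧ R (rep a) a b)) := by
        refine ⟨fun a ha => ?_⟩
        rcases ha with h | ⟨_, h⟩
        · exact lt_irrefl _ h
        · exact (hR1 (rep a)).irrefl ⟨a, hrepcyc a⟩ h
      haveI i3 : IsTrans V (fun a b => rep a < rep b ∨ (rep a = rep b ∧ R (rep a) a b)) := by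
        refine ⟨fun a b c hab hbc => ?_⟩
        rcases hab with h1 | ⟨e1, h1⟩ <;> rcases hbc with h2 | ⟨e2, h2⟩
        · exact Or.inl (h1.trans h2)
        · exact Or.inl (e2 ▸ h1)
        · exact Or.inl (e1 ▸ h2)
        · refine Or.inr ⟨e1.trans e2, ?_⟩
          have hb : σ.SameCycle (rep a) b := e1 ▸ hrepcyc b
          have hc : σ.SameCycle (rep a) c := (e1.trans e2) ▸ hrepcyc c
          have h2' : R (rep a) b c := by rw [e1]; exact h2
          exact (hR1 (rep a)).trans ⟨a, hrepcyc a⟩ ⟨b, hb⟩ ⟨c, hc⟩ h1 h2'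
      haveI : IsStrictOrder V (fun a b => rep a < rep b ∨ (rep a = rep b ∧ R (rep a) a b)) := ⟨⟩
      exact ⟨⟩
    · intro a b hab hl
      dsimp only
      rw [hrepσ a, hrepσ b]
      rcases eq_or_ne (rep a) (rep b) with h | h
      · have hb : σ.SameCycle (rep a) b := h ▸ hrepcyc b
        have := hR2 (rep a) a b (hrepcyc a) hb hab hl
        constructor
        · rintro (h' | ⟨e, h'⟩)
          · exact Or.inl h'
          · exact Or.inr ⟨e, this.mp h'⟩
        · rintro (h' | ⟨e, h'⟩)
          · exact Or.inl h'
          · exact Or.inr ⟨e, this.mpr h'⟩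
      · constructor
        · rintro (h' | ⟨e, _⟩)
          · exact Or.inl h'
          · exact absurd e h
        · rintro (h' | ⟨e, _⟩)
          · exact Or.inl h'
          · exact absurd e h
end
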